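/- arXiv:2204.05195 — 9 statements merged into one kernel-verified Lean document; each statement's English description precedes it below -/
import Mathlib

section
/- Let X be a normed space and T ∈ (0,∞) a constant such that for every n ≥ 1 and every non-constant f : {-1,1}^n → X one has E_{ε,ε'} ‖f(ε) - f(ε')‖² ≤ T² / log( e / max_{k : D_k f ≠ 0} ( E‖f(ε) - f(ε^{⊕k})‖ / (E‖f(ε) - f(ε^{⊕k})‖²)^{1/2} ) ) · ∑_{j=1}^n E ‖f(ε) - f(ε^{⊕j})‖². Then X has Rademacher type 2 with constant 2T, i.e., for all n ≥ 1 and x_1,…,x_n ∈ X, E ‖∑_{j=1}^n ε_j x_j‖² ≤ 4T² ∑_{j=1}^n ‖x_j‖². (This is the lower bound T₂(X)/2 ≤ T_KKL(X) of Theorem 1.) -/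
open Finset MeasureTheory

noncomputable section

/-- A point of the discrete hypercube `{-1,1}^n`, encoded by booleans. -/
abbrev Cube (n : ℕ) := Fin n → Bool

/-- The sign `±1` associated to a boolean coordinate. -/
def sgn (b : Bool) : ℝ := if b then 1 else -1

/-- `ε^{⊕j}`: the point `ε` with the `j`-th coordinate negated. -/
def flipCoord {n : ℕ} (ε : Cube n) (j : Fin n) : Cube n := Function.update ε j (!(ε j))

/-- Expectation (uniform average) of a real function on the hypercube. -/
def cubeAvg {n : ℕ} (F : Cube n → ℝ) : ℝ := (∑ ε : Cube n, F ε) / 2 ^ n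

/-- Expectation (uniform average) of a vector-valued function on the hypercube. -/
def cubeMean {n : ℕ} {X : Type*} [NormedAddCommGroup X] [NormedSpace ℝ X]
    (f : Cube n → X) : X := ((2 : ℝ) ^ n)⁻¹ • ∑ ε : Cube n, f ε

/-- The `j`-th discrete derivative `D_j f (ε) = (f(ε) - f(ε^{⊕j}))/2`. -/
def discDeriv {n : ℕ} {X : Type*} [NormedAddCommGroup X] [NormedSpace ℝ X]
    (f : Cube n → X) (j : Fin n) : Cube n → X :=
  fun ε => (2 : ℝ)⁻¹ • (f ε - f (flipCoord ε j))

/-- `‖f‖_p = (E ‖f(ε)‖^p)^{1/p}` on the hypercube. -/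
def lpNorm {n : ℕ} {X : Type*} [NormedAddCommGroup X] (p : ℝ) (f : Cube n → X) : ℝ :=
  (cubeAvg fun ε => ‖f ε‖ ^ p) ^ (1 / p)

/-- `X` has Rademacher type 2 with constant `T`. -/
def HasRadType2 (X : Type*) [NormedAddCommGroup X] [NormedSpace ℝ X] (T : ℝ) : Prop :=
  ∀ (m : ℕ) (x : Fin m → X),
    cubeAvg (fun ε : Cube m => ‖∑ j, sgn (ε j) • x j‖ ^ 2) ≤ T ^ 2 * ∑ j, ‖x j‖ ^ 2

open scoped Classical in
/-- The lower bound `T₂(X)/2 ≤ T_KKL(X)` of Theorem 1. -/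
theorem type2_lower_bound_from_kkl {X : Type*} [NormedAddCommGroup X] [NormedSpace ℝ X]
    {T : ℝ} (hT : 0 < T)
    (hkkl : ∀ (n : ℕ), 1 ≤ n → ∀ f : Cube n → X, ∀ hne : ∃ k, discDeriv f k ≠ 0,
      (∑ ε : Cube n, ∑ ε' : Cube n, ‖f ε - f ε'‖ ^ 2) / ((2 : ℝ) ^ n * 2 ^ n)
        ≤ T ^ 2 /
            Real.log (Real.exp 1 /
              ((Finset.univ.filter fun k => discDeriv f k ≠ 0).sup'
                  (hne.imp fun k hk => Finset.mem_filter.mpr ⟨Finset.mem_univ k, hk⟩)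
                  fun k => (cubeAvg fun ε => ‖f ε - f (flipCoord ε k)‖) /
                    Real.sqrt (cubeAvg fun ε => ‖f ε - f (flipCoord ε k)‖ ^ 2))) *
          ∑ j : Fin n, cubeAvg fun ε => ‖f ε - f (flipCoord ε j)‖ ^ 2) :
    ∀ (m : ℕ), 1 ≤ m → ∀ x : Fin m → X,
      cubeAvg (fun ε : Cube m => ‖∑ j, sgn (ε j) • x j‖ ^ 2) ≤ 4 * T ^ 2 * ∑ j, ‖x j‖ ^ 2 := by
  intro m hm x
  -- basic facts about sgn
  have hsgn_abs : ∀ b, |sgn b| = 1 := by intro b; cases b <;> simp [sgn]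
  have hsgn_not : ∀ b, sgn (!b) = - sgn b := by intro b; cases b <;> simp [sgn]
  by_cases hx : ∃ k, x k ≠ 0
  swap
  · push_neg at hx
    have h0 : ∀ ε : Cube m, (∑ j, sgn (ε j) • x j) = 0 := by intro ε; simp [hx]
    simp only [h0]
    simp [cubeAvg, hx]
  obtain ⟨k0, hk0⟩ := hx
  set f : Cube m → X := fun ε => ∑ j, sgn (ε j) • x j with hf
  have hcard : (Fintype.card (Cube m) : ℝ) = 2 ^ m := by
    simp [Fintype.card_fun]
  have havg_const : ∀ c : ℝ, cubeAvg (fun _ : Cube m => c) = c := by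
    intro c
    rw [cubeAvg, Finset.sum_const, Finset.card_univ, nsmul_eq_mul, hcard]
    field_simp
  have hflip : ∀ (k : Fin m) (ε : Cube m),
      f ε - f (flipCoord ε k) = (2 * sgn (ε k)) • x k := by
    intro k ε
    rw [hf]
    simp only [← Finset.sum_sub_distrib]
    rw [Finset.sum_eq_single k]
    · rw [show flipCoord ε k k = !(ε k) from Function.update_self _ _ _, hsgn_not,
        ← sub_smul, sub_neg_eq_add, ← two_mul]
    · intro j _ hjk
      rw [show flipCoord ε k j = ε j from Function.update_of_ne hjk _ _, sub_self]
    · intro h; exact absurd (Finset.mem_univ k) h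
  have hnorm : ∀ (k : Fin m) (ε : Cube m),
      ‖f ε - f (flipCoord ε k)‖ = 2 * ‖x k‖ := by
    intro k ε
    rw [hflip, norm_smul, Real.norm_eq_abs, abs_mul, hsgn_abs]
    norm_num
  have hdd_eq : ∀ (k : Fin m) (ε : Cube m), discDeriv f k ε = sgn (ε k) • x k := by
    intro k ε
    rw [discDeriv, hflip, smul_smul]
    norm_num
    congr 1
    ring
  have hdd : ∀ k, discDeriv f k ≠ 0 ↔ x k ≠ 0 := by
    intro k
    constructor
    · intro h hxk
      exact h (funext fun ε => by rw [hdd_eq, hxk, smul_zero]; rfl)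
    · intro hxk h
      have h2 := congrFun h (fun _ => true)
      rw [hdd_eq] at h2
      simp [sgn] at h2
      exact hxk h2
  have hne : ∃ k, discDeriv f k ≠ 0 := ⟨k0, (hdd k0).mpr hk0⟩
  have hratio : ∀ k ∈ Finset.univ.filter (fun k => discDeriv f k ≠ 0),
      (cubeAvg fun ε => ‖f ε - f (flipCoord ε k)‖) /
        Real.sqrt (cubeAvg fun ε => ‖f ε - f (flipCoord ε k)‖ ^ 2) = 1 := by
    intro k hk
    have hxk : x k ≠ 0 := (hdd k).1 (Finset.mem_filter.mp hk).2
    have h1 : (cubeAvg fun ε : Cube m => ‖f ε - f (flipCoord ε k)‖) = 2 * ‖x k‖ := by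
      simp only [hnorm]; exact havg_const _
    have h2 : (cubeAvg fun ε : Cube m => ‖f ε - f (flipCoord ε k)‖ ^ 2) = (2 * ‖x k‖) ^ 2 := by
      simp only [hnorm]; exact havg_const _
    have hxk' : (0:ℝ) < ‖x k‖ := norm_pos_iff.mpr hxk
    rw [h1, h2, Real.sqrt_sq (by positivity)]
    field_simp
  have hsup : ∀ H, ((Finset.univ.filter fun k => discDeriv f k ≠ 0).sup' H
      fun k => (cubeAvg fun ε => ‖f ε - f (flipCoord ε k)‖) /
        Real.sqrt (cubeAvg fun ε => ‖f ε - f (flipCoord ε k)‖ ^ 2)) = 1 := by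
    intro H
    apply le_antisymm
    · exact Finset.sup'_le _ _ fun k hk => le_of_eq (hratio k hk)
    · obtain ⟨k, hk⟩ := H
      exact (hratio k hk) ▸ Finset.le_sup' (f := fun k => (cubeAvg fun ε => ‖f ε - f (flipCoord ε k)‖) /
        Real.sqrt (cubeAvg fun ε => ‖f ε - f (flipCoord ε k)‖ ^ 2)) hk
  have hk : (∑ ε : Cube m, ∑ ε' : Cube m, ‖f ε - f ε'‖ ^ 2) / ((2 : ℝ) ^ m * 2 ^ m)
      ≤ T ^ 2 * ∑ j : Fin m, cubeAvg fun ε => ‖f ε - f (flipCoord ε j)‖ ^ 2 := by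
    have hk' := hkkl m hm f hne
    convert hk' using 3
    have key : ∀ s : ℝ, s = 1 → T ^ 2 = T ^ 2 / Real.log (Real.exp 1 / s) := by
      rintro s rfl; rw [div_one, Real.log_exp, div_one]
    exact key _ (hsup _)
  have hRHS : ∑ j : Fin m, (cubeAvg fun ε => ‖f ε - f (flipCoord ε j)‖ ^ 2)
      = 4 * ∑ j, ‖x j‖ ^ 2 := by
    rw [Finset.mul_sum]
    apply Finset.sum_congr rfl
    intro j _
    simp only [hnorm]
    rw [havg_const]
    ring
  rw [hRHS] at hk
  -- sum of f over the cube is zero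
  have hsum0 : ∑ ε : Cube m, f ε = 0 := by
    have hinv : Function.Involutive (fun ε : Cube m => fun j => !(ε j)) := by
      intro ε; funext j; simp
    have h1 : ∑ ε : Cube m, f (fun j => !(ε j)) = ∑ ε : Cube m, f ε :=
      Fintype.sum_bijective _ hinv.bijective _ _ (fun ε => rfl)
    have h2 : ∀ ε : Cube m, f (fun j => !(ε j)) = - f ε := by
      intro ε
      simp only [hf, hsgn_not, neg_smul, ← Finset.sum_neg_distrib]
    rw [Finset.sum_congr rfl (fun ε _ => h2 ε)] at h1
    rw [Finset.sum_neg_distrib] at h1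
    have h3 : (2:ℝ) • (∑ ε : Cube m, f ε) = 0 := by
      rw [two_smul]
      nth_rewrite 1 [← h1]
      exact neg_add_cancel _
    have := smul_eq_zero.mp h3
    simpa using this
  have hN : (0:ℝ) < 2 ^ m := by positivity
  have key : ∀ ε : Cube m, (2:ℝ)^m * ‖f ε‖^2 ≤ ∑ ε' : Cube m, ‖f ε - f ε'‖^2 := by
    intro ε
    have h1 : ∑ ε' : Cube m, (f ε - f ε') = ((2:ℝ)^m) • f ε := by
      rw [Finset.sum_sub_distrib, hsum0, sub_zero, Finset.sum_const, Finset.card_univ]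
      rw [← Nat.cast_smul_eq_nsmul ℝ, hcard]
    have hnorm1 : (2:ℝ)^m * ‖f ε‖ = ‖∑ ε' : Cube m, (f ε - f ε')‖ := by
      rw [h1, norm_smul, Real.norm_eq_abs, abs_of_pos hN]
    have htri : ‖∑ ε' : Cube m, (f ε - f ε')‖ ≤ ∑ ε' : Cube m, ‖f ε - f ε'‖ :=
      norm_sum_le _ _
    have hcs : (∑ ε' : Cube m, ‖f ε - f ε'‖)^2
        ≤ ((Finset.univ : Finset (Cube m)).card : ℝ) * ∑ ε' : Cube m, ‖f ε - f ε'‖^2 := by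
      exact_mod_cast sq_sum_le_card_mul_sum_sq (s := (Finset.univ : Finset (Cube m))) (f := fun ε' => ‖f ε - f ε'‖)
    rw [Finset.card_univ, hcard] at hcs
    have h4 : ((2:ℝ)^m * ‖f ε‖)^2 ≤ (2:ℝ)^m * ∑ ε' : Cube m, ‖f ε - f ε'‖^2 := by
      refine le_trans ?_ hcs
      apply pow_le_pow_left₀ (by positivity)
      rw [hnorm1]; exact htri
    nlinarith [norm_nonneg (f ε), Finset.sum_nonneg (fun ε' (_ : ε' ∈ (Finset.univ : Finset (Cube m))) => sq_nonneg ‖f ε - f ε'‖)]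
  have hLHS : cubeAvg (fun ε : Cube m => ‖f ε‖ ^ 2)
      ≤ (∑ ε : Cube m, ∑ ε' : Cube m, ‖f ε - f ε'‖ ^ 2) / ((2:ℝ)^m * 2^m) := by
    rw [cubeAvg, div_le_div_iff₀ hN (by positivity)]
    have hsum : ∑ ε : Cube m, (2:ℝ)^m * ‖f ε‖^2
        ≤ ∑ ε : Cube m, ∑ ε' : Cube m, ‖f ε - f ε'‖^2 :=
      Finset.sum_le_sum fun ε _ => key ε
    rw [← Finset.mul_sum] at hsum
    nlinarith [hsum]
  calc cubeAvg (fun ε : Cube m => ‖∑ j, sgn (ε j) • x j‖ ^ 2)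
      ≤ (∑ ε : Cube m, ∑ ε' : Cube m, ‖f ε - f ε'‖ ^ 2) / ((2:ℝ)^m * 2^m) := hLHS
    _ ≤ T ^ 2 * (4 * ∑ j, ‖x j‖ ^ 2) := hk
    _ = 4 * T ^ 2 * ∑ j, ‖x j‖ ^ 2 := by ring
end
end

section
/- Let X be a normed space, let h : [0,∞) → [0,∞) be nondecreasing with h(0) > 0, and let C ∈ (0,∞) satisfy: for every n ≥ 1 and every f : {-1,1}^n → X, ‖f - E f‖₂ ≤ C · ( ∑_{j : D_j f ≠ 0} ‖D_j f‖₂² / h( log( ‖D_j f‖₂ / ‖D_j f‖₁ ) ) )^{1/2}. Then X has Rademacher type 2 with constant C/√(h(0)), i.e., for all n ≥ 1 and x_1,…,x_n ∈ X, E ‖∑_{j=1}^n ε_j x_j‖² ≤ (C²/h(0)) ∑_{j=1}^n ‖x_j‖². -/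
open Finset MeasureTheory

noncomputable section

lemma cubeAvg_const {n : ℕ} (c : ℝ) : cubeAvg (fun _ : Cube n => c) = c := by
  have hcard : (Fintype.card (Cube n) : ℝ) = 2 ^ n := by simp [Cube]
  simp only [cubeAvg, Finset.sum_const, Finset.card_univ, nsmul_eq_mul, hcard]
  field_simp

lemma flip_invol {n : ℕ} (j : Fin n) :
    Function.Involutive (fun ε : Cube n => flipCoord ε j) := by
  intro ε
  funext i
  by_cases hij : i = j
  · subst hij; simp [flipCoord]
  · simp [flipCoord, Function.update_of_ne hij]

lemma sum_sgn {n : ℕ} (j : Fin n) : ∑ ε : Cube n, sgn (ε j) = 0 := by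
  have hb := (flip_invol j).bijective
  have h1 : ∑ ε : Cube n, sgn (flipCoord ε j j) = ∑ ε : Cube n, sgn (ε j) :=
    Fintype.sum_bijective _ hb _ _ (fun _ => rfl)
  have h2 : ∀ ε : Cube n, sgn (flipCoord ε j j) = - sgn (ε j) := by
    intro ε
    simp only [flipCoord, Function.update_self]
    cases ε j <;> simp [sgn]
  simp only [h2, Finset.sum_neg_distrib] at h1
  linarith

open scoped Classical in
/-- If `X` satisfies the generalized Talagrand inequality for some `h`, then `X` has
Rademacher type 2 with constant `C/√(h(0))`. -/
theorem type2_from_generalized_talagrand {X : Type*} [NormedAddCommGroup X] [NormedSpace ℝ X]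
    (h : ℝ → ℝ) (hmono : MonotoneOn h (Set.Ici 0)) (h0 : 0 < h 0)
    {C : ℝ} (hC : 0 < C)
    (htal : ∀ (n : ℕ), 1 ≤ n → ∀ f : Cube n → X,
      lpNorm 2 (fun ε => f ε - cubeMean f)
        ≤ C * (∑ j ∈ Finset.univ.filter fun j => discDeriv f j ≠ 0,
            lpNorm 2 (discDeriv f j) ^ 2 /
              h (Real.log (lpNorm 2 (discDeriv f j) / lpNorm 1 (discDeriv f j)))) ^
            ((1 : ℝ) / 2)) :
    ∀ (m : ℕ), 1 ≤ m → ∀ x : Fin m → X,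
      cubeAvg (fun ε : Cube m => ‖∑ j, sgn (ε j) • x j‖ ^ 2)
        ≤ C ^ 2 / h 0 * ∑ j, ‖x j‖ ^ 2 := by
  classical
  intro m hm x
  set f : Cube m → X := fun ε => ∑ j, sgn (ε j) • x j with hf
  have hD : ∀ (j : Fin m) (ε : Cube m), discDeriv f j ε = sgn (ε j) • x j := by
    intro j ε
    have hflipval : ∀ i, sgn (flipCoord ε j i) = if i = j then - sgn (ε i) else sgn (ε i) := by
      intro i
      by_cases hij : i = j
      · subst hij
        simp only [flipCoord, Function.update_self, if_pos rfl]
        cases ε i <;> simp [sgn]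
      · simp [flipCoord, Function.update_of_ne hij, hij]
    have key : f ε - f (flipCoord ε j) = (2 * sgn (ε j)) • x j := by
      simp only [hf]
      rw [← Finset.sum_sub_distrib, Finset.sum_eq_single j]
      · rw [← sub_smul, hflipval, if_pos rfl]
        congr 1
        ring
      · intro i _ hij
        rw [← sub_smul, hflipval, if_neg hij, sub_self, zero_smul]
      · intro hj; exact absurd (Finset.mem_univ j) hj
    rw [discDeriv, key, smul_smul, show (2:ℝ)⁻¹ * (2 * sgn (ε j)) = sgn (ε j) by ring]
  have hnormD : ∀ (j : Fin m) (ε : Cube m), ‖discDeriv f j ε‖ = ‖x j‖ := by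
    intro j ε
    rw [hD, norm_smul]
    cases ε j <;> simp [sgn]
  have hlp : ∀ (p : ℝ), p ≠ 0 → ∀ j, lpNorm p (discDeriv f j) = ‖x j‖ := by
    intro p hp j
    unfold _root_.lpNorm
    have : (fun ε : Cube m => ‖discDeriv f j ε‖ ^ p) = fun _ : Cube m => ‖x j‖ ^ p := by
      funext ε; rw [hnormD]
    rw [this, cubeAvg_const, one_div, Real.rpow_rpow_inv (norm_nonneg _) hp]
  have hmean : cubeMean f = 0 := by
    unfold cubeMean
    have : ∑ ε : Cube m, f ε = 0 := by
      simp only [hf]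
      rw [Finset.sum_comm]
      refine Finset.sum_eq_zero fun j _ => ?_
      rw [← Finset.sum_smul, sum_sgn, zero_smul]
    rw [this, smul_zero]
  have hfe : (fun ε => f ε - cubeMean f) = f := by
    funext ε; rw [hmean, sub_zero]
  set A : ℝ := cubeAvg (fun ε : Cube m => ‖f ε‖ ^ (2:ℝ)) with hAdef
  have hA0 : 0 ≤ A := by
    rw [hAdef]
    unfold cubeAvg
    apply div_nonneg _ (by positivity)
    exact Finset.sum_nonneg fun ε _ => Real.rpow_nonneg (norm_nonneg _) _
  have hG : cubeAvg (fun ε : Cube m => ‖∑ j, sgn (ε j) • x j‖ ^ 2) = A := by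
    rw [hAdef]
    unfold cubeAvg
    congr 1
    refine Finset.sum_congr rfl fun ε _ => ?_
    show ‖f ε‖ ^ (2:ℕ) = ‖f ε‖ ^ (2:ℝ)
    rw [← Real.rpow_natCast ‖f ε‖ 2]
    norm_num
  set S : ℝ := ∑ j ∈ Finset.univ.filter fun j => discDeriv f j ≠ 0,
      lpNorm 2 (discDeriv f j) ^ 2 /
        h (Real.log (lpNorm 2 (discDeriv f j) / lpNorm 1 (discDeriv f j))) with hSdef
  have hSeq : S = ∑ j ∈ Finset.univ.filter fun j => discDeriv f j ≠ 0, ‖x j‖ ^ 2 / h 0 := by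
    rw [hSdef]
    refine Finset.sum_congr rfl fun j hj => ?_
    have hxj : x j ≠ 0 := by
      intro hx
      have : discDeriv f j = 0 := by
        funext ε; rw [hD, hx, smul_zero]; rfl
      exact (Finset.mem_filter.mp hj).2 this
    rw [hlp 2 two_ne_zero, hlp 1 one_ne_zero, div_self (norm_ne_zero_iff.mpr hxj),
      Real.log_one]
  have hS0 : 0 ≤ S := by
    rw [hSeq]
    exact Finset.sum_nonneg fun j _ => div_nonneg (by positivity) h0.le
  have hSle : S ≤ (∑ j, ‖x j‖ ^ 2) / h 0 := by
    rw [hSeq, ← Finset.sum_div]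
    refine (div_le_div_iff_of_pos_right h0).mpr ?_
    exact Finset.sum_le_sum_of_subset_of_nonneg (Finset.filter_subset _ _)
      (fun j _ _ => by positivity)
  have key : A ^ ((1:ℝ)/2) ≤ C * S ^ ((1:ℝ)/2) := by
    have := htal m hm f
    rw [hfe] at this
    exact this
  calc cubeAvg (fun ε : Cube m => ‖∑ j, sgn (ε j) • x j‖ ^ 2) = A := hG
    _ = (A ^ ((1:ℝ)/2)) ^ 2 := by
        rw [← Real.rpow_natCast (A ^ ((1:ℝ)/2)) 2, ← Real.rpow_mul hA0]
        norm_num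
    _ ≤ (C * S ^ ((1:ℝ)/2)) ^ 2 := by
        exact pow_le_pow_left₀ (Real.rpow_nonneg hA0 _) key 2
    _ = C ^ 2 * S := by
        rw [mul_pow, ← Real.rpow_natCast (S ^ ((1:ℝ)/2)) 2, ← Real.rpow_mul hS0]
        norm_num
    _ ≤ C ^ 2 * ((∑ j, ‖x j‖ ^ 2) / h 0) := by
        exact mul_le_mul_of_nonneg_left hSle (by positivity)
    _ = C ^ 2 / h 0 * ∑ j, ‖x j‖ ^ 2 := by ring
end
end

section
/- Let g : [0,∞) → [0,∞) be nondecreasing with ∫_1^∞ g(t)/t³ dt < ∞. Then for every random variable X with 0 ≤ X ≤ 1 almost surely, ∫_0^1 ( E[ X^{s²} · g( √(log(1/X)) ) ] )^{1/2} ds ≤ (√2 + 8√π) · ( ∫_1^∞ g(s)/s³ ds )^{1/2}, where the integrand inside the expectation is interpreted as 0 on the event {X = 0}. (Lemma 5.1.) -/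
open MeasureTheory
open scoped ENNReal

set_option maxHeartbeats 1000000

noncomputable section

lemma aux_half_half (x : ℝ≥0∞) : x ^ ((1:ℝ)/2) * x ^ ((1:ℝ)/2) = x := by
  rw [← ENNReal.rpow_add_of_nonneg _ _ (by norm_num) (by norm_num)]
  norm_num

lemma aux_tsum_rpow_half_le (f : ℕ → ℝ≥0∞) :
    (∑' j, f j) ^ ((1:ℝ)/2) ≤ ∑' j, (f j) ^ ((1:ℝ)/2) := by
  set S := ∑' j, (f j) ^ ((1:ℝ)/2) with hS
  have key : (∑' j, f j) ≤ S * S := by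
    calc ∑' j, f j = ∑' j, (f j) ^ ((1:ℝ)/2) * (f j) ^ ((1:ℝ)/2) := by
          simp_rw [aux_half_half]
      _ ≤ ∑' j, (f j) ^ ((1:ℝ)/2) * S :=
          ENNReal.tsum_le_tsum fun j => mul_le_mul_right (ENNReal.le_tsum j) _
      _ = S * S := by rw [ENNReal.tsum_mul_right]
  calc (∑' j, f j) ^ ((1:ℝ)/2) ≤ (S * S) ^ ((1:ℝ)/2) :=
        ENNReal.rpow_le_rpow key (by norm_num)
    _ = S := by
        have h1 : S * S = S ^ (2:ℝ) := by
          rw [show (2:ℝ) = ((2:ℕ):ℝ) by norm_num, ENNReal.rpow_natCast, sq]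
        rw [h1, ← ENNReal.rpow_mul]
        norm_num

lemma aux_tsum_cs (f g : ℕ → ℝ≥0∞) :
    ∑' j, (f j) ^ ((1:ℝ)/2) * (g j) ^ ((1:ℝ)/2)
      ≤ (∑' j, f j) ^ ((1:ℝ)/2) * (∑' j, g j) ^ ((1:ℝ)/2) := by
  have hpq : Real.HolderConjugate 2 2 := Real.HolderConjugate.two_two
  have H := ENNReal.lintegral_mul_le_Lp_mul_Lq (Measure.count : Measure ℕ) hpq
      (f := fun j => (f j) ^ ((1:ℝ)/2)) (g := fun j => (g j) ^ ((1:ℝ)/2))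
      (measurable_of_countable _).aemeasurable (measurable_of_countable _).aemeasurable
  simp only [lintegral_count] at H
  have h2 : ∀ x : ℝ≥0∞, (x ^ ((1:ℝ)/2)) ^ (2:ℝ) = x := by
    intro x
    rw [← ENNReal.rpow_mul]
    norm_num
  simp_rw [h2] at H
  convert H using 3 <;> norm_num

/-- Lemma 5.1: for nondecreasing `g ≥ 0` on `[0,∞)` with `∫_1^∞ g(t)/t³ dt < ∞` and any
random variable `0 ≤ X ≤ 1`,
`∫_0^1 (E[X^{s²} g(√(log(1/X)))])^{1/2} ds ≤ (√2 + 8√π) (∫_1^∞ g(s)/s³ ds)^{1/2}`,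
where the integrand inside the expectation is interpreted as `0` on `{X = 0}`. -/
theorem lemma_texnika {Ω : Type*} [MeasurableSpace Ω] (μ : Measure Ω) [IsProbabilityMeasure μ]
    (g : ℝ → ℝ) (hmono : MonotoneOn g (Set.Ici 0)) (hnn : ∀ t, 0 ≤ t → 0 ≤ g t)
    (hint : IntegrableOn (fun t => g t / t ^ 3) (Set.Ioi 1))
    (X : Ω → ℝ) (hmeas : Measurable X) (hX : ∀ᵐ ω ∂μ, X ω ∈ Set.Icc (0 : ℝ) 1) :
    (∫ s in (0 : ℝ)..1,
        (∫ ω, (if X ω = 0 then 0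
               else X ω ^ (s ^ 2) * g (Real.sqrt (Real.log (1 / X ω)))) ∂μ) ^ ((1 : ℝ) / 2))
      ≤ (Real.sqrt 2 + 8 * Real.sqrt Real.pi) *
          (∫ s in Set.Ioi (1 : ℝ), g s / s ^ 3) ^ ((1 : ℝ) / 2) := by
  -- abbreviations
  set I : ℝ := ∫ s in Set.Ioi (1:ℝ), g s / s ^ 3 with hIdef
  obtain ⟨Y, hYdef⟩ : ∃ Y : Ω → ℝ, ∀ ω, Y ω = Real.sqrt (Real.log (1 / X ω)) :=
    ⟨_, fun _ => rfl⟩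
  obtain ⟨h, hhdef⟩ : ∃ h : ℝ → Ω → ℝ, ∀ s ω,
      h s ω = if X ω = 0 then 0 else X ω ^ (s ^ 2) * g (Real.sqrt (Real.log (1 / X ω))) :=
    ⟨_, fun _ _ => rfl⟩
  obtain ⟨φ, hφdef⟩ : ∃ φ : ℝ → ℝ, ∀ s, φ s = (∫ ω, h s ω ∂μ) ^ ((1:ℝ)/2) :=
    ⟨_, fun _ => rfl⟩
  have hgoal : (∫ s in (0 : ℝ)..1,
        (∫ ω, (if X ω = 0 then 0
               else X ω ^ (s ^ 2) * g (Real.sqrt (Real.log (1 / X ω)))) ∂μ) ^ ((1 : ℝ) / 2))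
      = ∫ s in (0:ℝ)..1, φ s := by
    simp_rw [hφdef, hhdef]
  rw [hgoal]
  -- nonnegativity facts
  have hInn : ∀ᵐ t ∂(volume.restrict (Set.Ioi (1:ℝ))), 0 ≤ g t / t ^ 3 := by
    refine ae_restrict_of_forall_mem measurableSet_Ioi ?_
    intro t ht
    have h0 : (0:ℝ) < t := lt_trans one_pos ht
    exact div_nonneg (hnn t h0.le) (by positivity)
  have hI0 : 0 ≤ I := by
    refine setIntegral_nonneg measurableSet_Ioi ?_
    intro t ht
    have h0 : (0:ℝ) < t := lt_trans one_pos ht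
    exact div_nonneg (hnn t h0.le) (by positivity)
  have hRHS0 : 0 ≤ (Real.sqrt 2 + 8 * Real.sqrt Real.pi) * I ^ ((1:ℝ)/2) := by
    have := Real.sqrt_nonneg (2:ℝ)
    have := Real.sqrt_nonneg Real.pi
    have := Real.rpow_nonneg hI0 ((1:ℝ)/2)
    nlinarith

  -- Y basics
  have hY0 : ∀ ω, 0 ≤ Y ω := fun ω => by rw [hYdef]; exact Real.sqrt_nonneg _
  have hYmeas : Measurable Y := by
    have hfe : Y = fun ω => Real.sqrt (Real.log (1 / X ω)) := funext hYdef
    rw [hfe]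
    exact Real.continuous_sqrt.measurable.comp
      (Real.measurable_log.comp (measurable_const.div hmeas))
  have hgY0 : ∀ ω, 0 ≤ g (Y ω) := fun ω => hnn _ (hY0 ω)
  -- h nonneg
  have hh0 : ∀ s, ∀ ω, X ω ∈ Set.Icc (0:ℝ) 1 → 0 ≤ h s ω := by
    intro s ω hω
    rw [hhdef]
    by_cases hx : X ω = 0
    · simp [hx]
    · simp only [hx, if_false]
      exact mul_nonneg (Real.rpow_nonneg hω.1 _) (hnn _ (Real.sqrt_nonneg _))
  have hint_nonneg : ∀ s, 0 ≤ ∫ ω, h s ω ∂μ := fun s =>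
    integral_nonneg_of_ae (hX.mono fun ω hω => hh0 s ω hω)
  have hφ0 : ∀ s, 0 ≤ φ s := fun s => by
    rw [hφdef]; exact Real.rpow_nonneg (hint_nonneg s) _
  -- blocks in Ω
  obtain ⟨B, hBdef⟩ : ∃ B : ℕ → Set Ω,
      ∀ j, B j = Y ⁻¹' (Set.Ico ((2:ℝ)^j) ((2:ℝ)^(j+1))) := ⟨_, fun _ => rfl⟩
  have hBmeas : ∀ j, MeasurableSet (B j) := fun j => by
    rw [hBdef]; exact hYmeas measurableSet_Ico
  have hBdisj : Pairwise (Function.onFun Disjoint B) := by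
    have key : ∀ j k : ℕ, j < k → Disjoint (B j) (B k) := by
      intro j k hlt
      rw [hBdef, hBdef]
      refine Disjoint.preimage _ ?_
      rw [Set.Ico_disjoint_Ico]
      refine le_trans (min_le_left _ _) (le_trans ?_ (le_max_right _ _))
      exact pow_le_pow_right₀ one_le_two hlt
    intro j k hjk
    rcases lt_or_gt_of_ne hjk with hc | hc
    · exact key _ _ hc
    · exact (key _ _ hc).symm
  have hμB : ∑' j, μ (B j) ≤ 1 := by
    rw [← measure_iUnion hBdisj hBmeas]
    exact prob_le_one
  -- blocks in ℝ and the constants c j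
  obtain ⟨c, hcdef⟩ : ∃ c : ℕ → ℝ,
      ∀ j, c j = ∫ t in Set.Ioc ((2:ℝ)^(j+1)) ((2:ℝ)^(j+2)), g t / t^3 := ⟨_, fun _ => rfl⟩
  have hblocksub : ∀ j : ℕ, Set.Ioc ((2:ℝ)^(j+1)) ((2:ℝ)^(j+2)) ⊆ Set.Ioi 1 := by
    intro j t ht
    have h1 : (1:ℝ) < 2^(j+1) := one_lt_pow₀ one_lt_two (by omega)
    exact lt_trans h1 ht.1
  have hintblock : ∀ j : ℕ,
      IntegrableOn (fun t => g t / t^3) (Set.Ioc ((2:ℝ)^(j+1)) ((2:ℝ)^(j+2))) :=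
    fun j => hint.mono_set (hblocksub j)
  have hblocknn : ∀ j : ℕ, ∀ t ∈ Set.Ioc ((2:ℝ)^(j+1)) ((2:ℝ)^(j+2)), 0 ≤ g t / t^3 := by
    intro j t ht
    have h1 : (0:ℝ) < t := lt_trans (by positivity) ht.1
    exact div_nonneg (hnn t h1.le) (by positivity)
  have hc0 : ∀ j, 0 ≤ c j := by
    intro j; rw [hcdef]
    exact setIntegral_nonneg measurableSet_Ioc (hblocknn j)
  have hcI : ∑' j, ENNReal.ofReal (c j) ≤ ENNReal.ofReal I := by
    have heq : ∀ j : ℕ, ENNReal.ofReal (c j)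
        = ∫⁻ t in Set.Ioc ((2:ℝ)^(j+1)) ((2:ℝ)^(j+2)), ENNReal.ofReal (g t / t^3) := by
      intro j
      rw [hcdef]
      exact ofReal_integral_eq_lintegral_ofReal (hintblock j)
        (ae_restrict_of_forall_mem measurableSet_Ioc (hblocknn j))
    have hdisj : Pairwise (Function.onFun Disjoint
        (fun j : ℕ => Set.Ioc ((2:ℝ)^(j+1)) ((2:ℝ)^(j+2)))) := by
      have key : ∀ j k : ℕ, j < k →
          Disjoint (Set.Ioc ((2:ℝ)^(j+1)) ((2:ℝ)^(j+2))) (Set.Ioc ((2:ℝ)^(k+1)) ((2:ℝ)^(k+2))) := by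
        intro j k hlt
        rw [Set.Ioc_disjoint_Ioc]
        refine le_trans (min_le_left _ _) (le_trans ?_ (le_max_right _ _))
        exact pow_le_pow_right₀ one_le_two (by omega)
      intro j k hjk
      rcases lt_or_gt_of_ne hjk with hc | hc
      · exact key _ _ hc
      · exact (key _ _ hc).symm
    simp_rw [heq]
    rw [← lintegral_iUnion (fun j => measurableSet_Ioc) hdisj]
    calc ∫⁻ t in ⋃ j : ℕ, Set.Ioc ((2:ℝ)^(j+1)) ((2:ℝ)^(j+2)), ENNReal.ofReal (g t / t^3)
        ≤ ∫⁻ t in Set.Ioi 1, ENNReal.ofReal (g t / t^3) :=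
          lintegral_mono_set (Set.iUnion_subset hblocksub)
      _ = ENNReal.ofReal I := (ofReal_integral_eq_lintegral_ofReal hint hInn).symm
  -- pointwise bound for g on blocks
  have hgblock : ∀ (j:ℕ) (y:ℝ), (2:ℝ)^j ≤ y → y < 2^(j+1) → g y ≤ 8 * 4^(j+1) * c j := by
    intro j y hy1 hy2
    have hu0 : (0:ℝ) < 2^(j+1) := by positivity
    have hy0 : (0:ℝ) ≤ y := le_trans (by positivity) hy1
    have hlow : (g y / ((2:ℝ)^(j+2))^3) * (((2:ℝ)^(j+2)) - ((2:ℝ)^(j+1))) ≤ c j := by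
      have hconst : ∫ t in Set.Ioc ((2:ℝ)^(j+1)) ((2:ℝ)^(j+2)), (g y / ((2:ℝ)^(j+2))^3)
          = (g y / ((2:ℝ)^(j+2))^3) * (((2:ℝ)^(j+2)) - ((2:ℝ)^(j+1))) := by
        rw [setIntegral_const, smul_eq_mul, measureReal_def, Real.volume_Ioc, ENNReal.toReal_ofReal (by
          have : (2:ℝ)^(j+1) ≤ 2^(j+2) := pow_le_pow_right₀ one_le_two (by omega)
          linarith)]
        ring
      rw [← hconst, hcdef]
      refine setIntegral_mono_on (integrableOn_const measure_Ioc_lt_top.ne)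
        (hintblock j) measurableSet_Ioc ?_
      intro t ht
      have ht0 : (0:ℝ) < t := lt_trans hu0 ht.1
      have hyt : y ≤ t := le_trans hy2.le ht.1.le
      refine div_le_div₀ (hnn t (le_trans hy0 hyt)) (hmono hy0 (le_trans hy0 hyt) hyt)
        (by positivity) (pow_le_pow_left₀ ht0.le ht.2 3)
    -- arithmetic
    have h2s : (2:ℝ)^(j+2) = 2 * 2^(j+1) := by rw [pow_succ]; ring
    have h4s : (4:ℝ)^(j+1) = ((2:ℝ)^(j+1))^2 := by
      rw [show (4:ℝ) = 2^2 by norm_num, ← pow_mul, ← pow_mul]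
      ring_nf
    rw [h2s] at hlow
    rw [h4s]
    set u : ℝ := (2:ℝ)^(j+1) with hu
    have h8 : ((2*u)^3 : ℝ) = 8 * u^3 := by ring
    rw [h8] at hlow
    -- hlow : g y / (8 u^3) * (2u - u) ≤ c j, i.e. g y * u / (8 u^3) ≤ c j
    have hgy0 : 0 ≤ g y := hnn y hy0
    have hkey : g y / (8 * u^2) ≤ c j := by
      have : g y / (8*u^3) * (2*u - u) = g y / (8*u^2) := by
        field_simp
        ring
      linarith [hlow, this.symm.le, this.le]
    rw [div_le_iff₀ (by positivity)] at hkey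
    nlinarith [sq_nonneg u]
  -- bound for g 1
  have hg1le : g 1 ≤ 2 * I := by
    have hpow : ∀ t:ℝ, 0 < t → t ^ (-3:ℝ) = 1 / t^3 := by
      intro t ht
      rw [show (-3:ℝ) = -((3:ℕ):ℝ) by norm_num, Real.rpow_neg ht.le, Real.rpow_natCast, one_div]
    have hintg : IntegrableOn (fun t:ℝ => g 1 * t ^ (-3:ℝ)) (Set.Ioi 1) :=
      (integrableOn_Ioi_rpow_of_lt (by norm_num) one_pos).const_mul _
    have h1 : ∫ t in Set.Ioi (1:ℝ), g 1 * t ^ (-3:ℝ) ≤ I := by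
      refine setIntegral_mono_on hintg hint measurableSet_Ioi ?_
      intro t ht
      have ht1 : (1:ℝ) < t := ht
      have ht0 : (0:ℝ) < t := lt_trans one_pos ht1
      rw [hpow t ht0, mul_one_div]
      rw [div_le_div_iff₀ (by positivity) (by positivity)]
      have hgle : g 1 ≤ g t := hmono (Set.mem_Ici.mpr (by norm_num)) (Set.mem_Ici.mpr (by linarith)) ht1.le
      nlinarith [pow_pos ht0 3]
    have h2 : ∫ t in Set.Ioi (1:ℝ), g 1 * t ^ (-3:ℝ) = g 1 * (1/2) := by
      rw [integral_const_mul, integral_Ioi_rpow_of_lt (by norm_num) one_pos]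
      norm_num
    rw [h2] at h1
    linarith
  -- the kernel K
  obtain ⟨K, hKdef⟩ : ∃ K : ℕ → ℝ → ℝ≥0∞, ∀ j s,
      K j s = ENNReal.ofReal (8 * 4^(j+1) * c j * Real.exp (-(4^j) * s^2)) := ⟨_, fun _ _ => rfl⟩
  -- pointwise bound
  have hpoint : ∀ (s:ℝ) ω, X ω ∈ Set.Icc (0:ℝ) 1 → ENNReal.ofReal (h s ω) ≤
      Set.indicator (Y ⁻¹' Set.Iio 1) (fun _ => ENNReal.ofReal (2*I)) ω
        + ∑' j, Set.indicator (B j) (fun _ => K j s) ω := by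
    intro s ω hω
    by_cases hx : X ω = 0
    · rw [hhdef]
      simp [hx]
    have hx0 : 0 < X ω := lt_of_le_of_ne hω.1 (Ne.symm hx)
    have hx1 : X ω ≤ 1 := hω.2
    have hL0 : 0 ≤ Real.log (1 / X ω) := by
      refine Real.log_nonneg ?_
      rw [le_div_iff₀ hx0, one_mul]
      exact hx1
    have hYsq : Y ω ^ 2 = Real.log (1 / X ω) := by
      rw [hYdef]; exact Real.sq_sqrt hL0
    have hXpow : X ω ^ (s^2) = Real.exp (-(Y ω ^2 * s^2)) := by
      rw [Real.rpow_def_of_pos hx0, hYsq]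
      congr 1
      rw [one_div, Real.log_inv]
      ring
    have hval : h s ω = Real.exp (-(Y ω^2 * s^2)) * g (Y ω) := by
      rw [hhdef, if_neg hx, hXpow, hYdef]
    by_cases hY1 : Y ω < 1
    · have hmem : ω ∈ Y ⁻¹' Set.Iio 1 := hY1
      rw [Set.indicator_of_mem hmem]
      refine le_trans ?_ le_self_add
      rw [hval]
      refine ENNReal.ofReal_le_ofReal ?_
      have h1 : Real.exp (-(Y ω^2*s^2)) ≤ 1 := by
        rw [Real.exp_le_one_iff]
        nlinarith [sq_nonneg (Y ω), sq_nonneg s]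
      have h2 : g (Y ω) ≤ g 1 := hmono (hY0 ω) (by norm_num) hY1.le
      nlinarith [hgY0 ω, hg1le, Real.exp_pos (-(Y ω^2*s^2))]
    · push_neg at hY1
      set j := ⌊Real.logb 2 (Y ω)⌋₊ with hj
      have hYpos : (0:ℝ) < Y ω := lt_of_lt_of_le one_pos hY1
      have hlb0 : 0 ≤ Real.logb 2 (Y ω) := Real.logb_nonneg one_lt_two hY1
      have hj1 : (2:ℝ)^j ≤ Y ω := by
        calc (2:ℝ)^j = (2:ℝ) ^ ((j:ℕ):ℝ) := by rw [Real.rpow_natCast]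
          _ ≤ (2:ℝ) ^ Real.logb 2 (Y ω) :=
              Real.rpow_le_rpow_of_exponent_le one_le_two (Nat.floor_le hlb0)
          _ = Y ω := Real.rpow_logb two_pos (by norm_num) hYpos
      have hj2 : Y ω < (2:ℝ)^(j+1) := by
        have hcast : Real.logb 2 (Y ω) < ((j+1:ℕ):ℝ) := by
          push_cast
          exact Nat.lt_floor_add_one _
        calc Y ω = (2:ℝ) ^ Real.logb 2 (Y ω) := (Real.rpow_logb two_pos (by norm_num) hYpos).symm
          _ < (2:ℝ) ^ (((j+1:ℕ)):ℝ) := Real.rpow_lt_rpow_of_exponent_lt one_lt_two hcast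
          _ = (2:ℝ)^(j+1) := by rw [Real.rpow_natCast]
      have hmem : ω ∈ B j := by
        rw [hBdef]; exact ⟨hj1, hj2⟩
      calc ENNReal.ofReal (h s ω) ≤ K j s := by
            rw [hval, hKdef]
            refine ENNReal.ofReal_le_ofReal ?_
            have e1 : Real.exp (-(Y ω^2 * s^2)) ≤ Real.exp (-(4^j) * s^2) := by
              rw [Real.exp_le_exp]
              have h4 : (4:ℝ)^j = ((2:ℝ)^j)^2 := by
                rw [show (4:ℝ) = 2^2 by norm_num, ← pow_mul, ← pow_mul]
                ring_nf
              have : (4:ℝ)^j ≤ Y ω^2 := by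
                rw [h4]
                nlinarith [pow_pos (show (0:ℝ)<2 by norm_num) j]
              nlinarith [sq_nonneg s]
            have e2 : g (Y ω) ≤ 8 * 4^(j+1) * c j := hgblock j (Y ω) hj1 hj2
            have e3 : 0 ≤ g (Y ω) := hgY0 ω
            nlinarith [Real.exp_pos (-(4^j) * s^2), Real.exp_pos (-(Y ω^2*s^2)),
              Real.exp_le_one_iff.2 (by nlinarith [sq_nonneg (Y ω), sq_nonneg s] :
                -(Y ω^2 * s^2) ≤ 0)]
        _ ≤ ∑' j', Set.indicator (B j') (fun _ => K j' s) ω := by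
            refine le_trans (le_of_eq ?_) (ENNReal.le_tsum j)
            rw [Set.indicator_of_mem hmem]
        _ ≤ _ := le_add_self
  -- integrate the pointwise bound over Ω
  have hSind : MeasurableSet (Y ⁻¹' Set.Iio 1) := hYmeas measurableSet_Iio
  have hΦ : ∀ s:ℝ, ∫⁻ ω, ENNReal.ofReal (h s ω) ∂μ
      ≤ ENNReal.ofReal (2*I) + ∑' j, K j s * μ (B j) := by
    intro s
    have step1 : ∫⁻ ω, ENNReal.ofReal (h s ω) ∂μ ≤
        ∫⁻ ω, (Set.indicator (Y ⁻¹' Set.Iio 1) (fun _ => ENNReal.ofReal (2*I)) ω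
              + ∑' j, Set.indicator (B j) (fun _ => K j s) ω) ∂μ :=
      lintegral_mono_ae (hX.mono fun ω hω => hpoint s ω hω)
    refine le_trans step1 ?_
    rw [lintegral_add_left (measurable_const.indicator hSind)]
    rw [lintegral_tsum (fun j => (measurable_const.indicator (hBmeas j)).aemeasurable)]
    refine add_le_add ?_ ?_
    · rw [lintegral_indicator_const hSind]
      calc ENNReal.ofReal (2*I) * μ (Y ⁻¹' Set.Iio 1) ≤ ENNReal.ofReal (2*I) * 1 :=
            mul_le_mul_right prob_le_one _
        _ = ENNReal.ofReal (2*I) := mul_one _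
    · refine ENNReal.tsum_le_tsum fun j => le_of_eq ?_
      rw [lintegral_indicator_const (hBmeas j)]
  -- the per-s bound on ofReal (φ s)
  have hφbound : ∀ s:ℝ, ENNReal.ofReal (φ s) ≤
      ENNReal.ofReal (Real.sqrt (2*I)) + ∑' j, (K j s)^((1:ℝ)/2) * (μ (B j))^((1:ℝ)/2) := by
    intro s
    have e0 : ENNReal.ofReal (φ s) = (ENNReal.ofReal (∫ ω, h s ω ∂μ)) ^ ((1:ℝ)/2) := by
      rw [hφdef, ENNReal.ofReal_rpow_of_nonneg (hint_nonneg s) (by norm_num)]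
    have e1 : ENNReal.ofReal (∫ ω, h s ω ∂μ) ≤ ∫⁻ ω, ENNReal.ofReal (h s ω) ∂μ := by
      by_cases hi : Integrable (h s) μ
      · exact le_of_eq (ofReal_integral_eq_lintegral_ofReal hi (hX.mono fun ω hω => hh0 s ω hω))
      · rw [integral_undef hi]; simp
    calc ENNReal.ofReal (φ s) = (ENNReal.ofReal (∫ ω, h s ω ∂μ)) ^ ((1:ℝ)/2) := e0
      _ ≤ (ENNReal.ofReal (2*I) + ∑' j, K j s * μ (B j)) ^ ((1:ℝ)/2) :=
          ENNReal.rpow_le_rpow (le_trans e1 (hΦ s)) (by norm_num)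
      _ ≤ (ENNReal.ofReal (2*I)) ^ ((1:ℝ)/2) + (∑' j, K j s * μ (B j)) ^ ((1:ℝ)/2) :=
          ENNReal.rpow_add_le_add_rpow _ _ (by norm_num) (by norm_num)
      _ ≤ ENNReal.ofReal (Real.sqrt (2*I)) + ∑' j, (K j s)^((1:ℝ)/2) * (μ (B j))^((1:ℝ)/2) := by
          refine add_le_add (le_of_eq ?_) ?_
          · rw [ENNReal.ofReal_rpow_of_nonneg (by linarith) (by norm_num), Real.sqrt_eq_rpow]
          · refine le_trans (aux_tsum_rpow_half_le _) ?_
            exact ENNReal.tsum_le_tsum fun j =>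
              le_of_eq (ENNReal.mul_rpow_of_nonneg _ _ (by norm_num))
  -- Gaussian integral bound
  have hsqrtexp : ∀ z:ℝ, Real.sqrt (Real.exp z) = Real.exp (z/2) := by
    intro z
    rw [show Real.exp z = (Real.exp (z/2))^2 by rw [sq, ← Real.exp_add]; ring_nf]
    exact Real.sqrt_sq (Real.exp_pos _).le
  have hgauss : ∀ j:ℕ, ∫⁻ s in Set.Ioc (0:ℝ) 1, (K j s) ^ ((1:ℝ)/2)
      ≤ ENNReal.ofReal ((4 * Real.sqrt Real.pi) * Real.sqrt (c j)) := by
    intro j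
    have hb : (0:ℝ) < 4^j/2 := by positivity
    have hC0 : (0:ℝ) ≤ 8 * 4^(j+1) * c j := by
      have := hc0 j
      positivity
    have hKs : ∀ s:ℝ, (K j s)^((1:ℝ)/2)
        = ENNReal.ofReal (Real.sqrt (8 * 4^(j+1) * c j) * Real.exp (-(4^j/2) * s^2)) := by
      intro s
      rw [hKdef, ENNReal.ofReal_rpow_of_nonneg
        (mul_nonneg hC0 (Real.exp_pos _).le) (by norm_num)]
      congr 1
      rw [← Real.sqrt_eq_rpow, Real.sqrt_mul hC0, hsqrtexp]
      congr 2
      ring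
    calc ∫⁻ s in Set.Ioc (0:ℝ) 1, (K j s) ^ ((1:ℝ)/2)
        = ∫⁻ s in Set.Ioc (0:ℝ) 1,
            ENNReal.ofReal (Real.sqrt (8 * 4^(j+1) * c j) * Real.exp (-(4^j/2) * s^2)) := by
          simp_rw [hKs]
      _ ≤ ∫⁻ s in Set.Ioi (0:ℝ),
            ENNReal.ofReal (Real.sqrt (8 * 4^(j+1) * c j) * Real.exp (-(4^j/2) * s^2)) :=
          lintegral_mono_set Set.Ioc_subset_Ioi_self
      _ = ENNReal.ofReal (∫ s in Set.Ioi (0:ℝ),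
            Real.sqrt (8 * 4^(j+1) * c j) * Real.exp (-(4^j/2) * s^2)) := by
          refine (ofReal_integral_eq_lintegral_ofReal
            (((integrable_exp_neg_mul_sq hb).integrableOn).const_mul _) ?_).symm
          refine ae_of_all _ fun s => ?_
          positivity
      _ = ENNReal.ofReal (Real.sqrt (8 * 4^(j+1) * c j) * (Real.sqrt (Real.pi/(4^j/2)) / 2)) := by
          rw [integral_const_mul, integral_gaussian_Ioi]
      _ = ENNReal.ofReal ((4 * Real.sqrt Real.pi) * Real.sqrt (c j)) := by
          congr 1
          rw [mul_div_assoc', ← Real.sqrt_mul hC0]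
          have h4j : (0:ℝ) < 4^j := by positivity
          have harg : 8 * 4^(j+1) * c j * (Real.pi/(4^j/2)) = 64 * (Real.pi * c j) := by
            rw [pow_succ]
            field_simp
            ring
          rw [harg, Real.sqrt_mul (by norm_num : (0:ℝ) ≤ 64),
            Real.sqrt_mul Real.pi_pos.le,
            show Real.sqrt 64 = 8 by
              rw [show (64:ℝ) = 8^2 by norm_num]; exact Real.sqrt_sq (by norm_num)]
          ring
  -- assembling the s-integral
  have hmain : ∫⁻ s in Set.Ioc (0:ℝ) 1, ENNReal.ofReal (φ s)
      ≤ ENNReal.ofReal ((Real.sqrt 2 + 8 * Real.sqrt Real.pi) * I ^ ((1:ℝ)/2)) := by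
    have hKmeas : ∀ j:ℕ, Measurable (fun s:ℝ => (K j s)^((1:ℝ)/2)) := by
      intro j
      have : Measurable (fun s:ℝ => K j s) := by
        have hfe : (fun s:ℝ => K j s)
            = fun s => ENNReal.ofReal (8 * 4^(j+1) * c j * Real.exp (-(4^j) * s^2)) :=
          funext (hKdef j)
        rw [hfe]
        exact (Continuous.measurable (by continuity)).ennreal_ofReal
      exact this.pow measurable_const
    calc ∫⁻ s in Set.Ioc (0:ℝ) 1, ENNReal.ofReal (φ s)
        ≤ ∫⁻ s in Set.Ioc (0:ℝ) 1, (ENNReal.ofReal (Real.sqrt (2*I))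
            + ∑' j, (K j s)^((1:ℝ)/2) * (μ (B j))^((1:ℝ)/2)) :=
          lintegral_mono fun s => hφbound s
      _ = ENNReal.ofReal (Real.sqrt (2*I)) * volume (Set.Ioc (0:ℝ) 1)
            + ∑' j, (∫⁻ s in Set.Ioc (0:ℝ) 1, (K j s)^((1:ℝ)/2)) * (μ (B j))^((1:ℝ)/2) := by
          rw [lintegral_add_left measurable_const, setLIntegral_const]
          congr 1
          rw [lintegral_tsum (fun j => ((hKmeas j).mul_const _).aemeasurable)]
          exact tsum_congr fun j => lintegral_mul_const _ (hKmeas j)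
      _ ≤ ENNReal.ofReal (Real.sqrt (2*I)) * 1
            + ∑' j, ENNReal.ofReal ((4 * Real.sqrt Real.pi) * Real.sqrt (c j))
                * (μ (B j))^((1:ℝ)/2) := by
          refine add_le_add (mul_le_mul_right ?_ _)
            (ENNReal.tsum_le_tsum fun j => mul_le_mul_left (hgauss j) _)
          rw [Real.volume_Ioc]
          simp
      _ = ENNReal.ofReal (Real.sqrt (2*I))
            + ENNReal.ofReal (4 * Real.sqrt Real.pi)
              * ∑' j, (ENNReal.ofReal (c j))^((1:ℝ)/2) * (μ (B j))^((1:ℝ)/2) := by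
          rw [mul_one]
          congr 1
          rw [← ENNReal.tsum_mul_left]
          refine tsum_congr fun j => ?_
          rw [ENNReal.ofReal_mul (by positivity), ENNReal.ofReal_rpow_of_nonneg (hc0 j)
            (by norm_num), ← Real.sqrt_eq_rpow, mul_assoc]
      _ ≤ ENNReal.ofReal (Real.sqrt (2*I))
            + ENNReal.ofReal (4 * Real.sqrt Real.pi)
              * ((ENNReal.ofReal I)^((1:ℝ)/2) * 1^((1:ℝ)/2)) := by
          refine add_le_add le_rfl (mul_le_mul_right ?_ _)
          refine le_trans (aux_tsum_cs _ _) ?_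
          exact mul_le_mul (ENNReal.rpow_le_rpow hcI (by norm_num))
            (ENNReal.rpow_le_rpow hμB (by norm_num)) zero_le zero_le
      _ ≤ ENNReal.ofReal ((Real.sqrt 2 + 8 * Real.sqrt Real.pi) * I ^ ((1:ℝ)/2)) := by
          rw [ENNReal.one_rpow, mul_one,
            ENNReal.ofReal_rpow_of_nonneg hI0 (by norm_num), ← ENNReal.ofReal_mul (by positivity),
            ← ENNReal.ofReal_add (Real.sqrt_nonneg _) (by positivity)]
          refine ENNReal.ofReal_le_ofReal ?_
          have hsqI : Real.sqrt (2*I) = Real.sqrt 2 * I ^ ((1:ℝ)/2) := by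
            rw [Real.sqrt_mul (by norm_num : (0:ℝ) ≤ 2), Real.sqrt_eq_rpow I]
          rw [hsqI]
          have hIr : 0 ≤ I ^ ((1:ℝ)/2) := Real.rpow_nonneg hI0 _
          nlinarith [Real.sqrt_nonneg Real.pi]
  -- conclusion
  by_cases hφint : IntervalIntegrable φ volume 0 1
  · rw [intervalIntegral.integral_of_le (by norm_num : (0:ℝ) ≤ 1)]
    rw [integral_eq_lintegral_of_nonneg_ae (ae_of_all _ hφ0) hφint.1.aestronglyMeasurable]
    exact ENNReal.toReal_le_of_le_ofReal hRHS0 hmain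
  · rw [intervalIntegral.integral_undef hφint]
    exact hRHS0
end
end

section
/- For every nondecreasing g : [0,∞) → [0,∞) with ∫_1^∞ g(t)/t³ dt < ∞ there exists a random variable X taking values in [0,1] such that ∫_0^1 ( E[ X^{s²} · g( √(log(1/X)) ) ] )^{1/2} ds ≥ (e^{-8}/2) · ( ∫_1^∞ g(s)/s³ ds )^{1/2}, where the integrand inside the expectation is interpreted as 0 on the event {X = 0}. (Proposition 5.2, sharpness of Lemma 5.1.) -/
open MeasureTheory
open scoped NNReal ENNReal

set_option maxHeartbeats 2000000

noncomputable section

/-- Proposition 5.2 (sharpness of Lemma 5.1): for every nondecreasing `g ≥ 0` on `[0,∞)` with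
`∫_1^∞ g(t)/t³ dt < ∞` there is a random variable `X` with values in `[0,1]` (given here by
its distribution `μ` on `ℝ`) such that
`∫_0^1 (E[X^{s²} g(√(log(1/X)))])^{1/2} ds ≥ (e^{-8}/2) (∫_1^∞ g(s)/s³ ds)^{1/2}`,
where the integrand inside the expectation is interpreted as `0` on `{X = 0}`. -/
theorem sharpness_texnika (g : ℝ → ℝ) (hmono : MonotoneOn g (Set.Ici 0))
    (hnn : ∀ t, 0 ≤ t → 0 ≤ g t)
    (hint : IntegrableOn (fun t => g t / t ^ 3) (Set.Ioi 1)) :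
    ∃ μ : Measure ℝ, IsProbabilityMeasure μ ∧ (∀ᵐ x ∂μ, x ∈ Set.Icc (0 : ℝ) 1) ∧
      Real.exp (-8) / 2 * (∫ s in Set.Ioi (1 : ℝ), g s / s ^ 3) ^ ((1 : ℝ) / 2)
        ≤ ∫ s in (0 : ℝ)..1,
            (∫ x, (if x = 0 then 0
                   else x ^ (s ^ 2) * g (Real.sqrt (Real.log (1 / x)))) ∂μ) ^ ((1 : ℝ) / 2) := by
  set G : ℝ := ∫ s in Set.Ioi (1 : ℝ), g s / s ^ 3 with hGdef
  have hG0 : 0 ≤ G := setIntegral_nonneg measurableSet_Ioi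
    (fun t ht => div_nonneg (hnn t (le_of_lt (lt_trans one_pos ht))) (pow_nonneg (le_of_lt (lt_trans one_pos ht)) 3))
  rcases hG0.eq_or_lt with hG | hG
  · refine ⟨Measure.dirac 1, inferInstance, ?_, ?_⟩
    · rw [MeasureTheory.ae_dirac_eq]
      exact Filter.eventually_pure.2 (by norm_num)
    · rw [← hG, Real.zero_rpow (by norm_num), mul_zero]
      apply intervalIntegral.integral_nonneg (by norm_num)
      intro s hs
      rw [integral_dirac, ← Real.sqrt_eq_rpow]
      exact Real.sqrt_nonneg _
  · -- main case 0 < G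
    -- measurable monotone surrogate for g
    set g₁ : ℝ → ℝ := fun t => g (max t 1) with hg₁def
    have hg₁mono : Monotone g₁ := fun a b hab =>
      hmono (le_trans zero_le_one (le_max_right a 1)) (le_trans zero_le_one (le_max_right b 1))
        (max_le_max hab le_rfl)
    have hg₁meas : Measurable g₁ := hg₁mono.measurable
    have hg₁nn : ∀ t, 0 ≤ g₁ t := fun t => hnn _ (le_trans zero_le_one (le_max_right t 1))
    have hg₁eq : ∀ t : ℝ, 1 ≤ t → g₁ t = g t := fun t ht => by
      simp only [hg₁def, max_eq_left ht]
    -- choose truncation level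
    have hU : (⋃ n : ℕ, Set.Ioc (1:ℝ) n) = Set.Ioi 1 := by
      ext x
      simp only [Set.mem_iUnion, Set.mem_Ioc, Set.mem_Ioi]
      constructor
      · rintro ⟨n, h1, _⟩; exact h1
      · intro hx; obtain ⟨n, hn⟩ := exists_nat_ge x; exact ⟨n, hx, hn⟩
    have hTend : Filter.Tendsto (fun n : ℕ => ∫ t in Set.Ioc 1 (n:ℝ), g t / t ^ 3)
        Filter.atTop (nhds G) := by
      have h := tendsto_setIntegral_of_monotone (μ := volume)
        (f := fun t => g t / t ^ 3) (s := fun n : ℕ => Set.Ioc (1:ℝ) n)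
        (fun n => measurableSet_Ioc)
        (fun a b hab => Set.Ioc_subset_Ioc le_rfl (by exact_mod_cast hab))
        (by rw [hU]; exact hint)
      rwa [hU] at h
    obtain ⟨n, hn3, hnG⟩ := ((Filter.eventually_ge_atTop 3).and
      (hTend.eventually (eventually_gt_nhds (by linarith : G/2 < G)))).exists
    set R : ℝ := 2 * n with hRdef
    have hn3' : (3:ℝ) ≤ n := by exact_mod_cast hn3
    have hR6 : (6:ℝ) ≤ R := by rw [hRdef]; linarith
    have hR1 : (1:ℝ) < R := by linarith
    have hR0 : (0:ℝ) < R := by linarith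
    set GR : ℝ := ∫ t in Set.Ioc 1 R, g t / t ^ 3 with hGRdef
    have hint' : IntegrableOn (fun t => g t / t ^ 3) (Set.Ioc 1 R) :=
      hint.mono_set Set.Ioc_subset_Ioi_self
    have hae_nn : ∀ (S : Set ℝ), MeasurableSet S → S ⊆ Set.Ioi 1 →
        (0 : ℝ → ℝ) ≤ᵐ[volume.restrict S] fun t => g t / t ^ 3 := fun S hS hSsub =>
      (ae_restrict_iff' hS).2 (Filter.Eventually.of_forall fun t ht =>
        div_nonneg (hnn t (le_of_lt (lt_trans one_pos (hSsub ht))))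
          (pow_nonneg (le_of_lt (lt_trans one_pos (hSsub ht))) 3))
    have hGRn : ∫ t in Set.Ioc 1 (n:ℝ), g t / t ^ 3 ≤ GR :=
      setIntegral_mono_set hint' (hae_nn _ measurableSet_Ioc Set.Ioc_subset_Ioi_self)
        ((Set.Ioc_subset_Ioc le_rfl (by rw [hRdef]; linarith)).eventuallyLE)
    have hGRpos : 0 < GR := by linarith
    have hGR_le_G : GR ≤ G :=
      setIntegral_mono_set hint (hae_nn _ measurableSet_Ioi (fun x hx => hx))
        (Set.Ioc_subset_Ioi_self.eventuallyLE)
    have hGR_eq : GR = ∫ t in Set.Ioc 1 R, g₁ t / (t ^ 3) := by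
      refine setIntegral_congr_fun measurableSet_Ioc (fun t ht => ?_)
      rw [hg₁eq t (le_of_lt ht.1)]
    -- the measure
    set d : ℝ → ℝ≥0 := fun t => Real.toNNReal (g₁ t / (t ^ 3 * GR)) with hddef
    have hdmeas : Measurable d :=
      (hg₁meas.div ((measurable_id.pow_const 3).mul_const GR)).real_toNNReal
    set ν : Measure ℝ := (volume.restrict (Set.Ioc 1 R)).withDensity
      (fun t => (d t : ℝ≥0∞)) with hνdef
    set e : ℝ → ℝ := fun t => Real.exp (-(t ^ 2)) with hedef
    have he_meas : Measurable e := (Real.measurable_exp.comp (measurable_id.pow_const 2).neg)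
    set μ : Measure ℝ := ν.map e with hμdef
    -- density integrable and integrates to 1
    have hIntd : IntegrableOn (fun t => g₁ t / (t ^ 3 * GR)) (Set.Ioc 1 R) := by
      refine Integrable.mono' (integrable_const (g₁ R / GR))
        ((hg₁meas.div ((measurable_id.pow_const 3).mul_const GR)).aestronglyMeasurable) ?_
      refine (ae_restrict_iff' measurableSet_Ioc).2 (Filter.Eventually.of_forall fun t ht => ?_)
      have ht1 : (1:ℝ) < t := ht.1
      have htnn : (0:ℝ) ≤ t := by linarith
      rw [Real.norm_eq_abs, abs_of_nonneg (div_nonneg (hg₁nn t) (by positivity))]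
      have ht3 : (1:ℝ) ≤ t ^ 3 := one_le_pow₀ ht1.le
      refine div_le_div₀ (hg₁nn R) (hg₁mono ht.2) hGRpos ?_
      calc GR = 1 * GR := (one_mul _).symm
        _ ≤ t ^ 3 * GR := mul_le_mul_of_nonneg_right ht3 hGRpos.le
    have hνprob : IsProbabilityMeasure ν := by
      constructor
      rw [hνdef, withDensity_apply _ MeasurableSet.univ, Measure.restrict_univ]
      have hcoe : ∀ t, ((d t : ℝ≥0) : ℝ≥0∞) = ENNReal.ofReal (g₁ t / (t ^ 3 * GR)) := fun t => rfl
      simp only [hcoe]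
      rw [← ofReal_integral_eq_lintegral_ofReal hIntd]
      · have : ∫ t in Set.Ioc 1 R, g₁ t / (t ^ 3 * GR) = 1 := by
          have h1 : ∀ t ∈ Set.Ioc (1:ℝ) R, g₁ t / (t ^ 3 * GR) = (g₁ t / t ^ 3) / GR := by
            intro t ht; rw [div_div]
          rw [setIntegral_congr_fun measurableSet_Ioc h1, integral_div, ← hGR_eq,
            div_self (ne_of_gt hGRpos)]
        rw [this, ENNReal.ofReal_one]
      · refine (ae_restrict_iff' measurableSet_Ioc).2 (Filter.Eventually.of_forall fun t ht => ?_)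
        have ht1 : (1:ℝ) < t := ht.1
        exact div_nonneg (hg₁nn t) (by positivity)
    have hμprob : IsProbabilityMeasure μ := Measure.isProbabilityMeasure_map he_meas.aemeasurable
    -- a.e. location of X
    have hνae : ∀ᵐ t ∂ν, t ∈ Set.Ioc 1 R :=
      (withDensity_absolutelyContinuous _ _).ae_le (ae_restrict_mem measurableSet_Ioc)
    have hμae : ∀ᵐ x ∂μ, x ∈ Set.Ico (Real.exp (-(R ^ 2))) (Real.exp (-1)) := by
      rw [hμdef]
      refine (ae_map_iff he_meas.aemeasurable measurableSet_Ico).2 ?_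
      filter_upwards [hνae] with t ht
      have ht1 : (1:ℝ) < t := ht.1
      constructor
      · exact Real.exp_le_exp.2 (neg_le_neg (by nlinarith [ht.2]))
      · exact Real.exp_lt_exp.2 (by nlinarith)
    have hμIcc : ∀ᵐ x ∂μ, x ∈ Set.Icc (0:ℝ) 1 := by
      filter_upwards [hμae] with x hx
      refine ⟨le_trans (Real.exp_pos _).le hx.1, le_trans hx.2.le ?_⟩
      calc Real.exp (-1) ≤ Real.exp 0 := Real.exp_le_exp.2 (by norm_num)
        _ = 1 := Real.exp_zero
    refine ⟨μ, hμprob, hμIcc, ?_⟩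
    -- measurable version of the integrand
    have hΨmeas : ∀ s : ℝ, Measurable fun x : ℝ =>
        x ^ (s ^ 2) * g₁ (Real.sqrt (Real.log (1 / x))) := by
      intro s
      exact ((Real.continuous_rpow_const (by positivity)).measurable).mul
        (hg₁meas.comp (Real.continuous_sqrt.measurable.comp
          (Real.measurable_log.comp (measurable_const.div measurable_id))))
    have hae_eq : ∀ s : ℝ,
        (fun x : ℝ => if x = 0 then (0:ℝ) else x ^ (s ^ 2) * g (Real.sqrt (Real.log (1 / x))))
          =ᵐ[μ] fun x => x ^ (s ^ 2) * g₁ (Real.sqrt (Real.log (1 / x))) := by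
      intro s
      filter_upwards [hμae] with x hx
      have hx0 : 0 < x := lt_of_lt_of_le (Real.exp_pos _) hx.1
      rw [if_neg (ne_of_gt hx0)]
      have hlog : 1 ≤ Real.log (1 / x) := by
        rw [one_div, Real.log_inv]
        have h2 := Real.log_lt_log hx0 hx.2
        rw [Real.log_exp] at h2
        linarith
      have hsq : 1 ≤ Real.sqrt (Real.log (1 / x)) := by
        rw [show (1:ℝ) = Real.sqrt 1 from (Real.sqrt_one).symm]
        exact Real.sqrt_le_sqrt (by rw [Real.sqrt_one]; exact hlog)
      rw [hg₁eq _ hsq]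
    -- the explicit inner integral
    set I : ℝ → ℝ := fun s => ∫ t in Set.Ioc 1 R,
        Real.exp (-(s ^ 2 * t ^ 2)) * (g₁ t * (g₁ t / (t ^ 3 * GR))) with hIdef
    have hKey : ∀ s : ℝ,
        (∫ x, (if x = 0 then (0:ℝ) else x ^ (s ^ 2) * g (Real.sqrt (Real.log (1 / x)))) ∂μ)
          = I s := by
      intro s
      rw [integral_congr_ae (hae_eq s), hμdef,
        integral_map he_meas.aemeasurable ((hΨmeas s).aestronglyMeasurable), hνdef,
        integral_withDensity_eq_integral_smul hdmeas]
      refine setIntegral_congr_fun measurableSet_Ioc (fun t ht => ?_)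
      have ht1 : (1:ℝ) < t := ht.1
      have ht0 : (0:ℝ) < t := by linarith
      have hd : ((d t : ℝ≥0) : ℝ) = g₁ t / (t ^ 3 * GR) := by
        rw [hddef]
        exact Real.coe_toNNReal _ (div_nonneg (hg₁nn t) (by positivity))
      have hlog : Real.sqrt (Real.log (1 / e t)) = t := by
        rw [hedef]
        simp only [one_div, Real.log_inv, Real.log_exp, neg_neg]
        exact Real.sqrt_sq ht0.le
      have hrpow : (e t) ^ (s ^ 2) = Real.exp (-(s ^ 2 * t ^ 2)) := by
        rw [hedef]
        simp only []
        rw [← Real.exp_mul]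
        ring_nf
      show (d t) • (e t ^ (s ^ 2) * g₁ (Real.sqrt (Real.log (1 / e t))))
          = Real.exp (-(s ^ 2 * t ^ 2)) * (g₁ t * (g₁ t / (t ^ 3 * GR)))
      rw [NNReal.smul_def, hd, hlog, hrpow, smul_eq_mul]
      ring
    -- measurability and integrability of the explicit integrand
    have hJmeas : ∀ s : ℝ, AEStronglyMeasurable
        (fun t => Real.exp (-(s ^ 2 * t ^ 2)) * (g₁ t * (g₁ t / (t ^ 3 * GR))))
        (volume.restrict (Set.Ioc 1 R)) :=
      fun s => ((Real.measurable_exp.comp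
          (((measurable_id.pow_const 2).const_mul (s ^ 2)).neg)).mul
        (hg₁meas.mul (hg₁meas.div ((measurable_id.pow_const 3).mul_const GR)))).aestronglyMeasurable
    have hbound_nn : ∀ t : ℝ, 1 < t → 0 ≤ g₁ t * (g₁ t / (t ^ 3 * GR)) := by
      intro t ht1
      have ht0 : (0:ℝ) < t := by linarith
      exact mul_nonneg (hg₁nn t) (div_nonneg (hg₁nn t) (by positivity))
    have hbound_int : IntegrableOn (fun t => g₁ t * (g₁ t / (t ^ 3 * GR))) (Set.Ioc 1 R) := by
      refine Integrable.mono' (integrable_const (g₁ R * (g₁ R / GR)))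
        ((hg₁meas.mul (hg₁meas.div
          ((measurable_id.pow_const 3).mul_const GR))).aestronglyMeasurable) ?_
      refine (ae_restrict_iff' measurableSet_Ioc).2 (Filter.Eventually.of_forall fun t ht => ?_)
      have ht1 : (1:ℝ) < t := ht.1
      have ht0 : (0:ℝ) < t := by linarith
      have ht3 : (1:ℝ) ≤ t ^ 3 := one_le_pow₀ ht1.le
      rw [Real.norm_eq_abs, abs_of_nonneg (hbound_nn t ht1)]
      refine mul_le_mul (hg₁mono ht.2) ?_ (div_nonneg (hg₁nn t) (by positivity)) (hg₁nn R)
      refine div_le_div₀ (hg₁nn R) (hg₁mono ht.2) hGRpos ?_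
      calc GR = 1 * GR := (one_mul _).symm
        _ ≤ t ^ 3 * GR := mul_le_mul_of_nonneg_right ht3 hGRpos.le
    have hJbound : ∀ s : ℝ, ∀ᵐ t ∂(volume.restrict (Set.Ioc 1 R)),
        ‖Real.exp (-(s ^ 2 * t ^ 2)) * (g₁ t * (g₁ t / (t ^ 3 * GR)))‖
          ≤ g₁ t * (g₁ t / (t ^ 3 * GR)) := by
      intro s
      refine (ae_restrict_iff' measurableSet_Ioc).2 (Filter.Eventually.of_forall fun t ht => ?_)
      have ht1 : (1:ℝ) < t := ht.1
      rw [Real.norm_eq_abs,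
        abs_of_nonneg (mul_nonneg (Real.exp_pos _).le (hbound_nn t ht1))]
      exact mul_le_of_le_one_left (hbound_nn t ht1)
        (Real.exp_le_one_iff.2 (neg_nonpos.2 (by positivity)))
    have hJint : ∀ s : ℝ, IntegrableOn
        (fun t => Real.exp (-(s ^ 2 * t ^ 2)) * (g₁ t * (g₁ t / (t ^ 3 * GR))))
        (Set.Ioc 1 R) := fun s => hbound_int.mono' (hJmeas s) (hJbound s)
    have hIcont : Continuous I := by
      rw [hIdef]
      refine continuous_of_dominated hJmeas hJbound hbound_int ?_
      refine Filter.Eventually.of_forall fun t => ?_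
      have hcont : Continuous fun s : ℝ => Real.exp (-(s ^ 2 * t ^ 2)) := by fun_prop
      exact hcont.mul continuous_const
    -- rewrite the goal in terms of I and sqrt
    simp only [hKey, ← Real.sqrt_eq_rpow]
    rw [intervalIntegral.integral_of_le (by norm_num : (0:ℝ) ≤ 1)]
    have hFcont : Continuous fun s : ℝ => Real.sqrt (I s) := Real.continuous_sqrt.comp hIcont
    have hFint : IntegrableOn (fun s => Real.sqrt (I s)) (Set.Ioc (0:ℝ) 1) :=
      hFcont.integrableOn_Ioc
    have hRinv : (0:ℝ) < 1 / R := by positivity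
    have hsub1 : Set.Ioo (1/R) (1/2) ⊆ Set.Ioc (0:ℝ) 1 := fun x hx =>
      ⟨lt_trans hRinv hx.1, le_trans hx.2.le (by norm_num)⟩
    have hmono1 : ∫ s in Set.Ioo (1/R) (1/2), Real.sqrt (I s)
        ≤ ∫ s in Set.Ioc (0:ℝ) 1, Real.sqrt (I s) :=
      setIntegral_mono_set hFint
        (Filter.Eventually.of_forall fun s => Real.sqrt_nonneg _) hsub1.eventuallyLE
    set κ : ℝ := Real.sqrt (Real.exp (-1) / (2 * GR)) with hκdef
    have hκ0 : 0 ≤ κ := Real.sqrt_nonneg _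
    -- pointwise lower bound on Ioo (1/R) (1/2)
    have hpt : ∀ s ∈ Set.Ioo (1/R) (1/2), κ * (s * g₁ (1/(2*s))) ≤ Real.sqrt (I s) := by
      intro s hs
      have hs0 : 0 < s := lt_trans hRinv hs.1
      have hs2 : 2 * s < 1 := by linarith [hs.2]
      have h2s0 : (0:ℝ) < 2 * s := by linarith
      have hkey : Real.exp (-1) / (2 * GR) * (s * g₁ (1/(2*s))) ^ 2 ≤ I s := by
        have hsR : 1 < s * R := by
          have h1 : 1/R < s := hs.1
          rw [div_lt_iff₀ hR0] at h1
          linarith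
        have hsubset : Set.Ioc (1/(2*s)) (1/s) ⊆ Set.Ioc 1 R := by
          intro t ht
          have h1 : 1 ≤ 1/(2*s) := by rw [le_div_iff₀ h2s0]; linarith
          have h2 : 1/s ≤ R := by rw [div_le_iff₀ hs0]; linarith
          exact ⟨lt_of_le_of_lt h1 ht.1, le_trans ht.2 h2⟩
        have hstep1 : ∫ t in Set.Ioc (1/(2*s)) (1/s),
            Real.exp (-(s^2*t^2)) * (g₁ t * (g₁ t / (t^3*GR))) ≤ I s := by
          refine setIntegral_mono_set (hJint s) ?_ hsubset.eventuallyLE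
          refine (ae_restrict_iff' measurableSet_Ioc).2
            (Filter.Eventually.of_forall fun t ht => ?_)
          exact mul_nonneg (Real.exp_pos _).le (hbound_nn t ht.1)
        set c₀ : ℝ := Real.exp (-1) * (g₁ (1/(2*s)) * (g₁ (1/(2*s)) * s^3 / GR)) with hc₀def
        have hstep2 : ∫ _t in Set.Ioc (1/(2*s)) (1/s), c₀
            ≤ ∫ t in Set.Ioc (1/(2*s)) (1/s),
              Real.exp (-(s^2*t^2)) * (g₁ t * (g₁ t / (t^3*GR))) := by
          refine setIntegral_mono_on (integrableOn_const measure_Ioc_lt_top.ne)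
            ((hJint s).mono_set hsubset) measurableSet_Ioc ?_
          intro t ht
          have h1a : 1 ≤ 1/(2*s) := by rw [le_div_iff₀ h2s0]; linarith
          have h1t : (1:ℝ) < t := lt_of_le_of_lt h1a ht.1
          have ht0 : (0:ℝ) < t := by linarith
          have hst : s * t ≤ 1 := by
            have h := (le_div_iff₀ hs0).1 ht.2
            nlinarith
          have ha := hg₁nn (1/(2*s))
          have hab : g₁ (1/(2*s)) ≤ g₁ t := hg₁mono ht.1.le
          have hexp : Real.exp (-1) ≤ Real.exp (-(s^2*t^2)) := by
            refine Real.exp_le_exp.2 (neg_le_neg ?_)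
            have h2 : (s*t)^2 ≤ 1 := pow_le_one₀ (by positivity) hst
            nlinarith [h2]
          have hfrac : g₁ (1/(2*s)) * s^3 / GR ≤ g₁ t / (t^3*GR) := by
            rw [div_le_div_iff₀ hGRpos (by positivity)]
            have hs3t3 : s^3 * t^3 ≤ 1 := by
              have h3 : (s*t)^3 ≤ 1 := pow_le_one₀ (by positivity) hst
              nlinarith [h3]
            nlinarith [mul_le_mul_of_nonneg_left hs3t3 (mul_nonneg ha hGRpos.le),
              mul_le_mul_of_nonneg_right hab hGRpos.le, hGRpos.le, ha]
          rw [hc₀def]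
          refine mul_le_mul hexp (mul_le_mul hab hfrac
            (div_nonneg (mul_nonneg ha (by positivity)) hGRpos.le) (hg₁nn t))
            (mul_nonneg ha (div_nonneg (mul_nonneg ha (by positivity)) hGRpos.le))
            (Real.exp_pos _).le
        have hconst : ∫ _t in Set.Ioc (1/(2*s)) (1/s), c₀ = c₀ * (1/(2*s)) := by
          rw [setIntegral_const, measureReal_def, Real.volume_Ioc, smul_eq_mul]
          have hd1 : 1/s - 1/(2*s) = 1/(2*s) := by field_simp; ring
          rw [ENNReal.toReal_ofReal (by rw [hd1]; positivity), hd1, mul_comm]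
        have hform : Real.exp (-1) / (2*GR) * (s * g₁ (1/(2*s)))^2 = c₀ * (1/(2*s)) := by
          rw [hc₀def]; field_simp
        rw [hform, ← hconst]
        exact le_trans hstep2 hstep1
      have h2 := Real.sqrt_le_sqrt hkey
      rwa [Real.sqrt_mul (by positivity) ((s * g₁ (1/(2*s)))^2),
        Real.sqrt_sq (mul_nonneg hs0.le (hg₁nn _))] at h2
    -- integral comparison on Ioo (1/R) (1/2)
    have hψmeas : Measurable fun s : ℝ => κ * (s * g₁ (1/(2*s))) :=
      ((measurable_id.mul (hg₁meas.comp
        (measurable_const.div (measurable_id.const_mul 2))))).const_mul κ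
    have hψint : IntegrableOn (fun s => κ * (s * g₁ (1/(2*s)))) (Set.Ioo (1/R) (1/2)) := by
      refine Integrable.mono' (integrable_const (κ * ((1/2) * g₁ R)))
        hψmeas.aestronglyMeasurable ?_
      refine (ae_restrict_iff' measurableSet_Ioo).2 (Filter.Eventually.of_forall fun s hs => ?_)
      have hs0 : 0 < s := lt_trans hRinv hs.1
      have hsR : 1 < s * R := by
        have h1 : 1/R < s := hs.1
        rw [div_lt_iff₀ hR0] at h1
        linarith
      have harg : 1/(2*s) ≤ R := by
        rw [div_le_iff₀ (by linarith : (0:ℝ) < 2*s)]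
        nlinarith
      rw [Real.norm_eq_abs, abs_of_nonneg (mul_nonneg hκ0 (mul_nonneg hs0.le (hg₁nn _)))]
      refine mul_le_mul_of_nonneg_left ?_ hκ0
      exact mul_le_mul hs.2.le (hg₁mono harg) (hg₁nn _) (by norm_num)
    have hFint2 : IntegrableOn (fun s => Real.sqrt (I s)) (Set.Ioo (1/R) (1/2)) :=
      hFcont.integrableOn_Ioc.mono_set Set.Ioo_subset_Ioc_self
    have hmono2 : ∫ s in Set.Ioo (1/R) (1/2), κ * (s * g₁ (1/(2*s)))
        ≤ ∫ s in Set.Ioo (1/R) (1/2), Real.sqrt (I s) :=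
      setIntegral_mono_on hψint hFint2 measurableSet_Ioo hpt
    -- change of variables u = 1/(2t)
    have hderiv : ∀ t ∈ Set.Ioo (1:ℝ) (R/2), HasDerivWithinAt (fun t : ℝ => 1/(2*t))
        (-(1/(2*t^2))) (Set.Ioo (1:ℝ) (R/2)) t := by
      intro t ht
      have ht1 : (1:ℝ) < t := ht.1
      have ht0 : (2:ℝ)*t ≠ 0 := ne_of_gt (by linarith)
      have h := ((hasDerivAt_id t).const_mul (2:ℝ)).inv ht0
      have h2 : HasDerivAt (fun t : ℝ => 1/(2*t)) (-(2*1)/(2*t)^2) t := by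
        simpa [Pi.inv_def, one_div] using h
      have h3 : -(2*1)/(2*t)^2 = -(1/(2*t^2)) := by field_simp
      rw [h3] at h2
      exact h2.hasDerivWithinAt
    have hinj : Set.InjOn (fun t : ℝ => 1/(2*t)) (Set.Ioo (1:ℝ) (R/2)) := by
      intro a ha b hb hab
      have ha0 : a ≠ 0 := ne_of_gt (by linarith [ha.1])
      have hb0 : b ≠ 0 := ne_of_gt (by linarith [hb.1])
      field_simp at hab
      linarith
    have hImg : (fun t : ℝ => 1/(2*t)) '' Set.Ioo (1:ℝ) (R/2) = Set.Ioo (1/R) (1/2) := by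
      ext u
      simp only [Set.mem_image, Set.mem_Ioo]
      constructor
      · rintro ⟨t, ⟨ht1, ht2⟩, rfl⟩
        have ht0 : (0:ℝ) < t := by linarith
        constructor
        · rw [div_lt_div_iff₀ hR0 (by linarith)]
          nlinarith
        · rw [div_lt_div_iff₀ (by linarith) (by norm_num : (0:ℝ) < 2)]
          nlinarith
      · rintro ⟨hu1, hu2⟩
        have hu0 : 0 < u := lt_trans hRinv hu1
        have huR : 1 < u * R := by
          rw [div_lt_iff₀ hR0] at hu1
          linarith
        refine ⟨1/(2*u), ⟨?_, ?_⟩, ?_⟩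
        · rw [lt_div_iff₀ (by linarith : (0:ℝ) < 2*u)]
          linarith
        · rw [div_lt_div_iff₀ (by linarith : (0:ℝ) < 2*u) (by norm_num : (0:ℝ) < 2)]
          nlinarith
        · field_simp
    have hCV := integral_image_eq_integral_abs_deriv_smul measurableSet_Ioo hderiv hinj
      (fun u => u * g₁ (1/(2*u)))
    rw [hImg] at hCV
    have hCV2 : (∫ t in Set.Ioo (1:ℝ) (R/2),
          |(-(1/(2*t^2)))| • ((fun u => u * g₁ (1/(2*u))) (1/(2*t))))
        = ∫ t in Set.Ioo (1:ℝ) (R/2), (g t / t^3)/4 := by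
      refine setIntegral_congr_fun measurableSet_Ioo (fun t ht => ?_)
      have ht1 : (1:ℝ) < t := ht.1
      have ht0 : (0:ℝ) < t := by linarith
      have hrec : 1/(2*(1/(2*t))) = t := by field_simp
      show |(-(1/(2*t^2)))| • ((1/(2*t)) * g₁ (1/(2*(1/(2*t))))) = (g t / t^3)/4
      rw [hrec, smul_eq_mul, abs_neg, abs_of_nonneg (by positivity), hg₁eq t ht1.le]
      field_simp
      try ring
      try tauto
    have hR2n : R/2 = (n:ℝ) := by rw [hRdef]; ring
    have hIoo_val : (∫ t in Set.Ioo (1:ℝ) (R/2), (g t/t^3)/4)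
        = (∫ t in Set.Ioc (1:ℝ) (n:ℝ), g t/t^3)/4 := by
      rw [hR2n, integral_div, integral_Ioc_eq_integral_Ioo]
    -- the numerical comparison
    have hcore : Real.exp (-8)/2 * Real.sqrt G
        ≤ Real.sqrt (Real.exp (-1)/(2*G)) * (G/8) := by
      have hG' : G ≠ 0 := ne_of_gt hG
      have hmulsqrt : Real.sqrt (Real.exp (-1)/(2*G)) * Real.sqrt G
          = Real.sqrt (Real.exp (-1)/2) := by
        rw [← Real.sqrt_mul (by positivity) G]
        congr 1
        field_simp
      have hscal : Real.exp (-8)/2 ≤ Real.sqrt (Real.exp (-1)/2)/8 := by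
        have h4 : 4 * Real.exp (-8) ≤ Real.sqrt (Real.exp (-1)/2) := by
          rw [Real.le_sqrt (by positivity) (by positivity)]
          have h15 : (32:ℝ) ≤ Real.exp 15 := by
            have h2e : (2:ℝ) ≤ Real.exp 1 := by linarith [Real.add_one_le_exp (1:ℝ)]
            calc (32:ℝ) ≤ 2^(15:ℕ) := by norm_num
              _ ≤ Real.exp 1 ^ (15:ℕ) := pow_le_pow_left₀ (by norm_num) h2e 15
              _ = Real.exp 15 := by rw [← Real.exp_nat_mul]; norm_num
          have hsq : (4*Real.exp (-8))^2 = 16 * Real.exp (-16) := by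
            rw [mul_pow, sq (Real.exp (-8)), ← Real.exp_add]; norm_num
          have h16 : Real.exp (-1) = Real.exp 15 * Real.exp (-16) := by
            rw [← Real.exp_add]; norm_num
          rw [hsq, h16]
          nlinarith [Real.exp_pos (-16), h15]
        linarith
      have heqq : Real.sqrt (Real.exp (-1)/(2*G)) * (G/8)
          = (Real.sqrt (Real.exp (-1)/2)/8) * Real.sqrt G := by
        have h1 : Real.sqrt G * Real.sqrt G = G := Real.mul_self_sqrt hG0
        nth_rewrite 2 [← h1]
        rw [show Real.sqrt (Real.exp (-1)/(2*G)) * (Real.sqrt G * Real.sqrt G / 8)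
            = (Real.sqrt (Real.exp (-1)/(2*G)) * Real.sqrt G) * Real.sqrt G / 8 from by ring,
          hmulsqrt]
        ring
      rw [heqq]
      exact mul_le_mul_of_nonneg_right hscal (Real.sqrt_nonneg G)
    have hκlb : Real.sqrt (Real.exp (-1)/(2*G)) ≤ κ := by
      rw [hκdef]
      apply Real.sqrt_le_sqrt
      apply div_le_div_of_nonneg_left (Real.exp_pos _).le (by linarith) (by linarith)
    calc Real.exp (-8)/2 * Real.sqrt G
        ≤ Real.sqrt (Real.exp (-1)/(2*G)) * (G/8) := hcore
      _ ≤ κ * ((∫ t in Set.Ioc (1:ℝ) (n:ℝ), g t/t^3)/4) :=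
          mul_le_mul hκlb (by linarith) (by linarith) hκ0
      _ = κ * ∫ t in Set.Ioo (1:ℝ) (R/2), (g t/t^3)/4 := by rw [hIoo_val]
      _ = κ * ∫ u in Set.Ioo (1/R) (1/2), u * g₁ (1/(2*u)) := by
          rw [← (hCV.trans hCV2)]
      _ = ∫ u in Set.Ioo (1/R) (1/2), κ * (u * g₁ (1/(2*u))) := (integral_const_mul κ _).symm
      _ ≤ ∫ s in Set.Ioo (1/R) (1/2), Real.sqrt (I s) := hmono2
      _ ≤ ∫ s in Set.Ioc (0:ℝ) 1, Real.sqrt (I s) := hmono1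
end
end

section
/- There is no finite universal constant C > 0 such that ∫_0^∞ ( ∑_{j=1}^n b_j^{1 + (1-e^{-2t})/(1+e^{-2t})} )^{1/2} dt/√(e^{2t}-1) ≤ C · ( ∑_{j=1}^n b_j / log(1/b_j) )^{1/2} holds for all n ≥ 1 and all b_1,…,b_n ∈ (0,1). Equivalently: for every C > 0 there exist n ≥ 1 and b_1,…,b_n ∈ (0,1) for which the left-hand side exceeds the right-hand side. (Proposition 5.3.) -/
open MeasureTheory

noncomputable section

set_option maxHeartbeats 1000000 in
/-- Proposition 5.3: there is no finite universal constant `C > 0` such that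
`∫_0^∞ (∑_j b_j^{1+(1-e^{-2t})/(1+e^{-2t})})^{1/2} dt/√(e^{2t}-1)
  ≤ C (∑_j b_j / log(1/b_j))^{1/2}`
holds for all `n ≥ 1` and all `b_1,…,b_n ∈ (0,1)`. -/
theorem no_universal_constant_boolean_case :
    ∀ C : ℝ, 0 < C → ∃ n : ℕ, 1 ≤ n ∧ ∃ b : Fin n → ℝ,
      (∀ j, b j ∈ Set.Ioo (0 : ℝ) 1) ∧
      C * (∑ j, b j / Real.log (1 / b j)) ^ ((1 : ℝ) / 2)
        < ∫ t in Set.Ioi (0 : ℝ),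
            (∑ j, b j ^ (1 + (1 - Real.exp (-2 * t)) / (1 + Real.exp (-2 * t)))) ^ ((1 : ℝ) / 2) /
              Real.sqrt (Real.exp (2 * t) - 1) := by
  intro C hC
  set k : ℕ := ⌈(288 : ℝ) * C ^ 2⌉₊ + 1 with hk_def
  have hk1 : 1 ≤ k := Nat.le_add_left 1 _
  have hkC : 288 * C ^ 2 < (k : ℝ) := by
    have h := Nat.le_ceil ((288 : ℝ) * C ^ 2)
    have : ((⌈(288 : ℝ) * C ^ 2⌉₊ : ℝ) + 1 : ℝ) = (k : ℝ) := by rw [hk_def]; push_cast; ring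
    linarith
  set L : Fin k → ℝ := fun j => (4 : ℝ) ^ (j.val + 1) with hL_def
  have hL4 : ∀ j, (4 : ℝ) ≤ L j := by
    intro j
    calc (4 : ℝ) = 4 ^ 1 := (pow_one 4).symm
    _ ≤ 4 ^ (j.val + 1) := pow_le_pow_right₀ (by norm_num) (by omega)
  have hLpos : ∀ j, (0 : ℝ) < L j := fun j => lt_of_lt_of_le (by norm_num) (hL4 j)
  set β : Fin k → ℝ := fun j => Real.exp (-(L j)) with hβ_def
  have hβmem : ∀ j, β j ∈ Set.Ioo (0 : ℝ) 1 := fun j =>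
    ⟨Real.exp_pos _, Real.exp_lt_one_iff.mpr (by linarith [hLpos j])⟩
  set m : Fin k → ℕ := fun j => ⌈L j * Real.exp (L j)⌉₊ with hm_def
  have hm1 : ∀ j, 1 ≤ m j := fun j => Nat.one_le_ceil_iff.mpr (by positivity)
  have hmN : ∀ j, L j * Real.exp (L j) ≤ (m j : ℝ) := fun j => Nat.le_ceil _
  have hm_le : ∀ j, (m j : ℝ) ≤ L j * Real.exp (L j) + 1 := fun j =>
    (Nat.ceil_lt_add_one (by positivity : (0 : ℝ) ≤ L j * Real.exp (L j))).le
  set l : List ℝ := (List.finRange k).flatMap (fun j => List.replicate (m j) (β j)) with hl_def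
  -- every entry of l lies in (0,1)
  have hmem_all : ∀ x ∈ l, x ∈ Set.Ioo (0 : ℝ) 1 := by
    intro x hx
    rw [hl_def] at hx
    obtain ⟨j, -, hj⟩ := List.mem_flatMap.mp hx
    rw [List.eq_of_mem_replicate hj]
    exact hβmem j
  have hbIoo : ∀ i : Fin l.length, l.get i ∈ Set.Ioo (0 : ℝ) 1 := fun i =>
    hmem_all _ (List.get_mem l i)
  -- the fundamental sum identity
  have sum_eq : ∀ F : ℝ → ℝ, ∑ i, F (l.get i) = ∑ j, (m j : ℝ) * F (β j) := by
    intro F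
    have h1 : ∑ i, F (l.get i) = (l.map F).sum := by
      rw [← List.ofFn_getElem_eq_map l F, Fin.sum_ofFn]
      apply Finset.sum_congr rfl
      intro i _
      rw [List.get_eq_getElem]
    rw [h1, hl_def, List.map_flatMap]
    simp only [List.map_replicate]
    rw [List.flatMap_def, List.sum_flatten, List.map_map]
    rw [Fin.sum_univ_def]
    congr 1
    apply List.map_congr_left
    intro j _
    simp [List.sum_replicate, nsmul_eq_mul]
  have hn1 : 1 ≤ l.length := by
    have hne : l ≠ [] := by
      have : β ⟨0, hk1⟩ ∈ l := by
        rw [hl_def]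
        refine List.mem_flatMap.mpr ⟨⟨0, hk1⟩, List.mem_finRange _, ?_⟩
        exact List.mem_replicate.mpr ⟨by have := hm1 ⟨0, hk1⟩; omega, rfl⟩
      exact List.ne_nil_of_mem this
    exact List.length_pos_iff.mpr hne
  -- the integrand
  set f : ℝ → ℝ := fun t =>
      (∑ i, l.get i ^ (1 + (1 - Real.exp (-2 * t)) / (1 + Real.exp (-2 * t)))) ^ ((1 : ℝ) / 2) /
        Real.sqrt (Real.exp (2 * t) - 1) with hf_def
  have hf_nonneg : ∀ t, 0 ≤ f t := by
    intro t
    rw [hf_def]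
    have : 0 ≤ ∑ i, l.get i ^ (1 + (1 - Real.exp (-2 * t)) / (1 + Real.exp (-2 * t))) :=
      Finset.sum_nonneg fun i _ => Real.rpow_nonneg (hbIoo i).1.le _
    positivity
  have hp_cont : Continuous fun t : ℝ =>
      1 + (1 - Real.exp (-2 * t)) / (1 + Real.exp (-2 * t)) := by
    apply Continuous.add continuous_const
    apply Continuous.div (by fun_prop) (by fun_prop)
    intro t
    positivity
  have hf_meas : Measurable f := by
    rw [hf_def]
    have hnum : Continuous fun t : ℝ =>
        ∑ i, l.get i ^ (1 + (1 - Real.exp (-2 * t)) / (1 + Real.exp (-2 * t))) := by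
      apply continuous_finset_sum
      intro i _
      have hbpos := (hbIoo i).1
      have hrw : (fun t : ℝ =>
          l.get i ^ (1 + (1 - Real.exp (-2 * t)) / (1 + Real.exp (-2 * t))))
          = fun t => Real.exp (Real.log (l.get i)
              * (1 + (1 - Real.exp (-2 * t)) / (1 + Real.exp (-2 * t)))) := by
        funext t
        rw [Real.rpow_def_of_pos hbpos]
      rw [hrw]
      exact Real.continuous_exp.comp (continuous_const.mul hp_cont)
    have hnum2 : Continuous fun t : ℝ =>
        (∑ i, l.get i ^ (1 + (1 - Real.exp (-2 * t)) / (1 + Real.exp (-2 * t)))) ^ ((1 : ℝ) / 2) :=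
      hnum.rpow_const (fun t => Or.inr (by norm_num))
    exact hnum2.measurable.div (by fun_prop)
  -- integrability
  have hinv : IntegrableOn (fun t => 1 / Real.sqrt (Real.exp (2 * t) - 1)) (Set.Ioi (0 : ℝ)) := by
    rw [← Set.Ioc_union_Ioi_eq_Ioi (zero_le_one : (0 : ℝ) ≤ 1)]
    refine IntegrableOn.union ?_ ?_
    · have hint : IntegrableOn (fun t : ℝ => t ^ (-(1 / 2) : ℝ)) (Set.Ioc (0 : ℝ) 1) := by
        have h := intervalIntegral.intervalIntegrable_rpow' (a := 0) (b := 1)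
          (r := -(1 / 2)) (by norm_num)
        rwa [intervalIntegrable_iff_integrableOn_Ioc_of_le zero_le_one] at h
      refine Integrable.mono' hint ?_ ?_
      · apply Measurable.aestronglyMeasurable
        apply Measurable.div measurable_const
        fun_prop
      · rw [ae_restrict_iff' measurableSet_Ioc]
        refine Filter.Eventually.of_forall fun t ht => ?_
        have ht0 : 0 < t := ht.1
        have h2t : 2 * t ≤ Real.exp (2 * t) - 1 := by
          have := Real.add_one_le_exp (2 * t); linarith
        have hsq : Real.sqrt t ≤ Real.sqrt (Real.exp (2 * t) - 1) :=
          Real.sqrt_le_sqrt (by linarith)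
        have hpos : 0 < Real.sqrt t := Real.sqrt_pos.mpr ht0
        rw [Real.norm_eq_abs, abs_of_nonneg (by positivity)]
        have hrw : t ^ (-(1 / 2) : ℝ) = 1 / Real.sqrt t := by
          rw [Real.rpow_neg ht0.le, Real.sqrt_eq_rpow]
          exact (one_div _).symm
        rw [hrw]
        exact one_div_le_one_div_of_le hpos hsq
    · have hexp : Integrable (fun t : ℝ => Real.sqrt 2 * Real.exp (-1 * t))
          (volume.restrict (Set.Ioi (1 : ℝ))) :=
        (exp_neg_integrableOn_Ioi 1 one_pos).const_mul _
      refine Integrable.mono' hexp ?_ ?_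
      · apply Measurable.aestronglyMeasurable
        apply Measurable.div measurable_const
        fun_prop
      · rw [ae_restrict_iff' measurableSet_Ioi]
        refine Filter.Eventually.of_forall fun t ht => ?_
        have ht1 : (1 : ℝ) < t := ht
        have he2 : (2 : ℝ) ≤ Real.exp (2 * t) := by
          have := Real.add_one_le_exp (2 * t); linarith
        have hDpos : 0 < Real.exp (2 * t) - 1 := by linarith
        rw [Real.norm_eq_abs, abs_of_nonneg (by positivity)]
        have h1 : Real.sqrt (Real.exp (2 * t)) = Real.exp t := by
          rw [show (2 : ℝ) * t = t + t by ring, Real.exp_add,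
            Real.sqrt_mul_self (Real.exp_nonneg t)]
        have h3 : Real.exp t / Real.sqrt 2 ≤ Real.sqrt (Real.exp (2 * t) - 1) := by
          rw [← h1, ← Real.sqrt_div (Real.exp_nonneg _)]
          exact Real.sqrt_le_sqrt (by linarith)
        calc 1 / Real.sqrt (Real.exp (2 * t) - 1)
            ≤ 1 / (Real.exp t / Real.sqrt 2) := by
              apply one_div_le_one_div_of_le _ h3
              positivity
          _ = Real.sqrt 2 * Real.exp (-1 * t) := by
              rw [one_div_div, neg_one_mul, Real.exp_neg, div_eq_mul_inv]
  have hf_int : IntegrableOn f (Set.Ioi (0 : ℝ)) := by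
    refine Integrable.mono' (hinv.const_mul (Real.sqrt l.length)) hf_meas.aestronglyMeasurable ?_
    rw [ae_restrict_iff' measurableSet_Ioi]
    refine Filter.Eventually.of_forall fun t ht => ?_
    have ht0 : 0 < t := ht
    rw [Real.norm_eq_abs, abs_of_nonneg (hf_nonneg t)]
    have he1 : Real.exp (-2 * t) ≤ 1 := Real.exp_le_one_iff.mpr (by linarith)
    have hden : (0 : ℝ) < 1 + Real.exp (-2 * t) := by positivity
    have hpt : 0 ≤ 1 + (1 - Real.exp (-2 * t)) / (1 + Real.exp (-2 * t)) := by
      have : 0 ≤ (1 - Real.exp (-2 * t)) / (1 + Real.exp (-2 * t)) :=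
        div_nonneg (by linarith) hden.le
      linarith
    have hX_le : (∑ i, l.get i ^ (1 + (1 - Real.exp (-2 * t)) / (1 + Real.exp (-2 * t))))
        ≤ (l.length : ℝ) := by
      calc ∑ i, l.get i ^ (1 + (1 - Real.exp (-2 * t)) / (1 + Real.exp (-2 * t)))
          ≤ ∑ _i : Fin l.length, (1 : ℝ) :=
            Finset.sum_le_sum fun i _ =>
              Real.rpow_le_one (hbIoo i).1.le (hbIoo i).2.le hpt
        _ = (l.length : ℝ) := by simp
    have hDpos : 0 < Real.exp (2 * t) - 1 := by
      have := Real.add_one_le_exp (2 * t); linarith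
    have hsD : 0 < Real.sqrt (Real.exp (2 * t) - 1) := Real.sqrt_pos.mpr hDpos
    simp only [hf_def, mul_one_div]
    refine (div_le_div_iff_of_pos_right hsD).mpr ?_
    rw [← Real.sqrt_eq_rpow]
    exact Real.sqrt_le_sqrt hX_le
  -- the intervals
  set I : Fin k → Set ℝ := fun j => Set.Ioc (1 / (2 * L j)) (1 / L j) with hI_def
  have hIsub : ∀ j, I j ⊆ Set.Ioi (0 : ℝ) := by
    intro j t ht
    have := ht.1
    have hp : (0 : ℝ) < 1 / (2 * L j) := by positivity
    exact Set.mem_Ioi.mpr (lt_trans hp this)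
  -- pointwise lower bound on each interval
  have hIlower : ∀ j, ∀ t ∈ I j, L j / 6 ≤ f t := by
    intro j t ht
    obtain ⟨ht1, ht2⟩ := ht
    have hLj := hLpos j
    have hL4j := hL4 j
    have ht0 : 0 < t := lt_trans (by positivity) ht1
    have hepos : 0 < Real.exp (-2 * t) := Real.exp_pos _
    have hden : (0 : ℝ) < 1 + Real.exp (-2 * t) := by positivity
    have he1 : Real.exp (-2 * t) ≤ 1 := Real.exp_le_one_iff.mpr (by linarith)
    set s : ℝ := (1 - Real.exp (-2 * t)) / (1 + Real.exp (-2 * t)) with hs_def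
    have hs0 : 0 ≤ s := div_nonneg (by linarith) hden.le
    have hs2t : s ≤ 2 * t := by
      rw [hs_def, div_le_iff₀ hden]
      have h := Real.add_one_le_exp (-2 * t)
      nlinarith
    have htL : t ≤ 1 / L j := ht2
    have hsL : s ≤ 2 / L j := by
      calc s ≤ 2 * t := hs2t
      _ ≤ 2 * (1 / L j) := by linarith
      _ = 2 / L j := by ring
    -- numerator lower bound
    have hXm : (m j : ℝ) * (β j ^ (1 + s)) ≤ ∑ i, l.get i ^ (1 + s) := by
      rw [sum_eq (fun x => x ^ (1 + s))]
      exact Finset.single_le_sum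
        (fun j' _ => mul_nonneg (Nat.cast_nonneg _) (Real.rpow_nonneg (hβmem j').1.le _))
        (Finset.mem_univ j)
    have hβpow : Real.exp (-(L j) - 2) ≤ β j ^ (1 + s) := by
      show Real.exp (-(L j) - 2) ≤ Real.exp (-(L j)) ^ (1 + s)
      rw [← Real.exp_mul]
      apply Real.exp_le_exp.mpr
      have hmul : L j * s ≤ 2 := by
        calc L j * s ≤ L j * (2 / L j) := mul_le_mul_of_nonneg_left hsL hLj.le
        _ = 2 := by field_simp
      nlinarith
    have h9 : Real.exp (2 : ℝ) ≤ 9 := by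
      have h1 := Real.exp_one_lt_d9
      have h2 : Real.exp 2 = Real.exp 1 * Real.exp 1 := by
        rw [← Real.exp_add]; norm_num
      nlinarith [Real.exp_pos 1]
    have hX : L j / 9 ≤ ∑ i, l.get i ^ (1 + s) := by
      have key : L j * Real.exp (-(2 : ℝ)) ≤ (m j : ℝ) * Real.exp (-(L j) - 2) := by
        have heq : L j * Real.exp (-(2 : ℝ)) = (L j * Real.exp (L j)) * Real.exp (-(L j) - 2) := by
          rw [mul_assoc, ← Real.exp_add]
          congr 2
          ring
        rw [heq]
        exact mul_le_mul_of_nonneg_right (hmN j) (Real.exp_nonneg _)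
      have hinv9 : (1 : ℝ) / 9 ≤ Real.exp (-(2 : ℝ)) := by
        have hme : Real.exp (-(2 : ℝ)) * Real.exp 2 = 1 := by
          rw [← Real.exp_add]; norm_num
        nlinarith [Real.exp_pos (-(2 : ℝ))]
      have h1 : L j / 9 ≤ L j * Real.exp (-(2 : ℝ)) := by
        have := mul_le_mul_of_nonneg_left hinv9 hLj.le
        calc L j / 9 = L j * (1 / 9) := by ring
        _ ≤ L j * Real.exp (-(2 : ℝ)) := this
      calc L j / 9 ≤ L j * Real.exp (-(2 : ℝ)) := h1
      _ ≤ (m j : ℝ) * Real.exp (-(L j) - 2) := key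
      _ ≤ (m j : ℝ) * (β j ^ (1 + s)) :=
          mul_le_mul_of_nonneg_left hβpow (Nat.cast_nonneg _)
      _ ≤ ∑ i, l.get i ^ (1 + s) := hXm
    -- denominator bound
    have h2t : 2 * t ≤ 2 / L j := by
      calc 2 * t ≤ 2 * (1 / L j) := by linarith
      _ = 2 / L j := by ring
    have h2thalf : 2 * t ≤ 1 / 2 := by
      have h24 : 1 / L j ≤ 1 / 4 := one_div_le_one_div_of_le (by norm_num) hL4j
      linarith
    have hexhalf : Real.exp ((1 : ℝ) / 2) ≤ 2 := by
      have hh : Real.exp ((1 : ℝ) / 2) * Real.exp ((1 : ℝ) / 2) = Real.exp 1 := by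
        rw [← Real.exp_add]; norm_num
      nlinarith [Real.exp_one_lt_d9, Real.exp_pos ((1 : ℝ) / 2)]
    have hex2 : Real.exp (2 * t) ≤ 2 := by
      calc Real.exp (2 * t) ≤ Real.exp ((1 : ℝ) / 2) := Real.exp_le_exp.mpr h2thalf
      _ ≤ 2 := hexhalf
    have hmain : Real.exp (2 * t) - 1 ≤ 2 * t * Real.exp (2 * t) := by
      have h := Real.add_one_le_exp (-(2 * t))
      have hme : Real.exp (-(2 * t)) * Real.exp (2 * t) = 1 := by
        rw [← Real.exp_add]; simp
      nlinarith [Real.exp_pos (2 * t)]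
    have hD : Real.exp (2 * t) - 1 ≤ 4 / L j := by
      calc Real.exp (2 * t) - 1 ≤ 2 * t * Real.exp (2 * t) := hmain
      _ ≤ (2 / L j) * 2 := mul_le_mul h2t hex2 (Real.exp_nonneg _) (by positivity)
      _ = 4 / L j := by ring
    have hDpos : 0 < Real.exp (2 * t) - 1 := by
      have := Real.add_one_le_exp (2 * t); linarith
    have hsD : 0 < Real.sqrt (Real.exp (2 * t) - 1) := Real.sqrt_pos.mpr hDpos
    have hXnn : 0 ≤ ∑ i, l.get i ^ (1 + s) :=
      Finset.sum_nonneg fun i _ => Real.rpow_nonneg (hbIoo i).1.le _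
    show L j / 6 ≤ (∑ i, l.get i ^ (1 + s)) ^ ((1 : ℝ) / 2) / Real.sqrt (Real.exp (2 * t) - 1)
    rw [le_div_iff₀ hsD, ← Real.sqrt_eq_rpow]
    rw [Real.le_sqrt (by positivity) hXnn]
    have hexpand : (L j / 6 * Real.sqrt (Real.exp (2 * t) - 1)) ^ 2
        = (L j / 6) ^ 2 * (Real.exp (2 * t) - 1) := by
      rw [mul_pow, Real.sq_sqrt hDpos.le]
    rw [hexpand]
    calc (L j / 6) ^ 2 * (Real.exp (2 * t) - 1)
        ≤ (L j / 6) ^ 2 * (4 / L j) := mul_le_mul_of_nonneg_left hD (by positivity)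
      _ = L j / 9 := by field_simp; ring
      _ ≤ ∑ i, l.get i ^ (1 + s) := hX
  -- interval integrals
  have hIint : ∀ j, (1 : ℝ) / 12 ≤ ∫ t in I j, f t := by
    intro j
    have hLj := hLpos j
    have hms : MeasurableSet (I j) := measurableSet_Ioc
    have hvol : volume (I j) ≠ ⊤ := measure_Ioc_lt_top.ne
    have h := setIntegral_ge_of_const_le hms hvol (hIlower j)
      (hf_int.mono_set (hIsub j))
    have hv : (volume (I j)).toReal = 1 / (2 * L j) := by
      have hle : 1 / (2 * L j) ≤ 1 / L j := one_div_le_one_div_of_le hLj (by linarith)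
      have hne : L j ≠ 0 := ne_of_gt hLj
      simp only [hI_def, Real.volume_Ioc]
      rw [ENNReal.toReal_ofReal (by linarith)]
      field_simp
      ring
    rw [measureReal_def, hv] at h
    calc (1 : ℝ) / 12 = L j / 6 * (1 / (2 * L j)) := by
          field_simp
          ring
    _ ≤ ∫ t in I j, f t := by simpa only [smul_eq_mul, mul_comm] using h
  -- disjointness
  have key_disj : ∀ j1 j2 : Fin k, j1.val < j2.val → Disjoint (I j1) (I j2) := by
    intro j1 j2 h
    simp only [hI_def]
    refine Set.Ioc_disjoint_Ioc.mpr ?_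
    have hmono : 2 * L j1 ≤ L j2 := by
      have h1 : (4 : ℝ) ^ (j1.val + 2) ≤ 4 ^ (j2.val + 1) :=
        pow_le_pow_right₀ (by norm_num) (by omega)
      have h2 : (4 : ℝ) ^ (j1.val + 2) = 4 * 4 ^ (j1.val + 1) := by ring
      have h3 : (0 : ℝ) ≤ 4 ^ (j1.val + 1) := by positivity
      show 2 * (4 : ℝ) ^ (j1.val + 1) ≤ 4 ^ (j2.val + 1)
      linarith
    calc min (1 / L j1) (1 / L j2) ≤ 1 / L j2 := min_le_right _ _
    _ ≤ 1 / (2 * L j1) := one_div_le_one_div_of_le (by positivity) hmono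
    _ ≤ max (1 / (2 * L j1)) (1 / (2 * L j2)) := le_max_left _ _
  have hdisj : (↑(Finset.univ : Finset (Fin k)) : Set (Fin k)).Pairwise (Function.onFun Disjoint I) := by
    intro j1 _ j2 _ hne
    rcases lt_or_gt_of_ne hne with h | h
    · exact key_disj _ _ h
    · exact (key_disj _ _ h).symm
  have hUnion_eq : ∫ t in ⋃ j ∈ (Finset.univ : Finset (Fin k)), I j, f t
      = ∑ j, ∫ t in I j, f t :=
    integral_biUnion_finset Finset.univ (fun j _ => measurableSet_Ioc) hdisj
      (fun j _ => hf_int.mono_set (hIsub j))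
  have hUsub : (⋃ j ∈ (Finset.univ : Finset (Fin k)), I j) ⊆ Set.Ioi (0 : ℝ) := by
    apply Set.iUnion₂_subset
    intro j _
    exact hIsub j
  have hmono : ∫ t in ⋃ j ∈ (Finset.univ : Finset (Fin k)), I j, f t ≤ ∫ t in Set.Ioi 0, f t :=
    setIntegral_mono_set hf_int (Filter.Eventually.of_forall hf_nonneg)
      (HasSubset.Subset.eventuallyLE hUsub)
  have hsumI : (k : ℝ) / 12 ≤ ∑ j, ∫ t in I j, f t := by
    calc (k : ℝ) / 12 = ∑ _j : Fin k, (1 : ℝ) / 12 := by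
          rw [Finset.sum_const, Finset.card_univ, Fintype.card_fin, nsmul_eq_mul]; ring
    _ ≤ ∑ j, ∫ t in I j, f t := Finset.sum_le_sum fun j _ => hIint j
  -- right-hand side bound
  have hlogβ : ∀ j, Real.log (1 / β j) = L j := by
    intro j
    rw [hβ_def]
    show Real.log (1 / Real.exp (-(L j))) = L j
    rw [one_div, ← Real.exp_neg, neg_neg, Real.log_exp]
  have hRHS : ∑ i, l.get i / Real.log (1 / l.get i) ≤ 2 * (k : ℝ) := by
    rw [sum_eq (fun x => x / Real.log (1 / x))]
    have hterm : ∀ j, (m j : ℝ) * (β j / Real.log (1 / β j)) ≤ 2 := by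
      intro j
      have hLj := hLpos j
      rw [hlogβ j]
      have hβval : β j = Real.exp (-(L j)) := rfl
      have hee : Real.exp (L j) * Real.exp (-(L j)) = 1 := by
        rw [← Real.exp_add]; simp
      have hβle : Real.exp (-(L j)) ≤ 1 := Real.exp_le_one_iff.mpr (by linarith)
      have h1 : (m j : ℝ) * (β j / L j) ≤ (L j * Real.exp (L j) + 1) * (Real.exp (-(L j)) / L j) := by
        rw [hβval]
        exact mul_le_mul_of_nonneg_right (hm_le j) (by positivity)
      have h2 : (L j * Real.exp (L j) + 1) * (Real.exp (-(L j)) / L j)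
          = Real.exp (L j) * Real.exp (-(L j)) + Real.exp (-(L j)) / L j := by
        field_simp
      have h3 : Real.exp (-(L j)) / L j ≤ 1 := by
        rw [div_le_one hLj]
        linarith [hL4 j]
      rw [hee] at h2
      linarith [h1, h2.le, h2.ge]
    calc ∑ j, (m j : ℝ) * (β j / Real.log (1 / β j)) ≤ ∑ _j : Fin k, (2 : ℝ) :=
        Finset.sum_le_sum fun j _ => hterm j
    _ = 2 * (k : ℝ) := by
        rw [Finset.sum_const, Finset.card_univ, Fintype.card_fin, nsmul_eq_mul]; ring
  have hRHS0 : 0 ≤ ∑ i, l.get i / Real.log (1 / l.get i) := by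
    apply Finset.sum_nonneg
    intro i _
    have hb := hbIoo i
    have hlogpos : 0 < Real.log (1 / l.get i) :=
      Real.log_pos (one_lt_one_div hb.1 hb.2)
    exact div_nonneg hb.1.le hlogpos.le
  -- final numeric inequality
  have h2 : C * (2 * (k : ℝ)) ^ ((1 : ℝ) / 2) < (k : ℝ) / 12 := by
    rw [← Real.sqrt_eq_rpow]
    set S := Real.sqrt (2 * (k : ℝ)) with hS_def
    have hS0 : 0 ≤ S := Real.sqrt_nonneg _
    have hS2 : S ^ 2 = 2 * (k : ℝ) := Real.sq_sqrt (by positivity)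
    have hkpos : (1 : ℝ) ≤ (k : ℝ) := by exact_mod_cast hk1
    by_contra hcon
    push_neg at hcon
    have hk12 : (k : ℝ) ≤ 12 * (C * S) := by linarith
    have hk0 : (0 : ℝ) < (k : ℝ) := by linarith
    have hCS : (k : ℝ) * k ≤ (12 * (C * S)) * (12 * (C * S)) :=
      mul_le_mul hk12 hk12 (by linarith) (by linarith)
    have hexp : (12 * (C * S)) * (12 * (C * S)) = 144 * C ^ 2 * S ^ 2 := by ring
    rw [hexp, hS2] at hCS
    have hlt : 288 * C ^ 2 * (k : ℝ) < (k : ℝ) * k := mul_lt_mul_of_pos_right hkC hk0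
    nlinarith [hCS, hlt]
  refine ⟨l.length, hn1, l.get, hbIoo, ?_⟩
  have hLHS : (k : ℝ) / 12 ≤ ∫ t in Set.Ioi (0 : ℝ), f t := by
    calc (k : ℝ) / 12 ≤ ∑ j, ∫ t in I j, f t := hsumI
    _ = ∫ t in ⋃ j ∈ (Finset.univ : Finset (Fin k)), I j, f t := hUnion_eq.symm
    _ ≤ ∫ t in Set.Ioi 0, f t := hmono
  have h1 : C * (∑ i, l.get i / Real.log (1 / l.get i)) ^ ((1 : ℝ) / 2)
      ≤ C * (2 * (k : ℝ)) ^ ((1 : ℝ) / 2) :=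
    mul_le_mul_of_nonneg_left (Real.rpow_le_rpow hRHS0 hRHS (by norm_num)) hC.le
  calc C * (∑ i, l.get i / Real.log (1 / l.get i)) ^ ((1 : ℝ) / 2)
      ≤ C * (2 * (k : ℝ)) ^ ((1 : ℝ) / 2) := h1
    _ < (k : ℝ) / 12 := h2
    _ ≤ ∫ t in Set.Ioi (0 : ℝ), f t := hLHS
end
end

section
/- For every n ≥ 1 and every non-constant Boolean function f : {-1,1}^n → {-1,1}, E|f - E f|² ≤ 4 / log( e / max_{1≤k≤n} Inf_k(f) ) · ∑_{j=1}^n Inf_j(f), where Inf_j(f) = P( f(ε) ≠ f(ε^{⊕j}) ). (Appendix Theorem, Kahn–Kalai–Linial.) -/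
open Finset MeasureTheory

noncomputable section

/-- The influence `Inf_j(f) = P(f(ε) ≠ f(ε^{⊕j}))` of the `j`-th coordinate of a Boolean
function, where `Bool` encodes the values `{-1,1}`. -/
def influence {n : ℕ} (f : Cube n → Bool) (j : Fin n) : ℝ :=
  cubeAvg fun ε => if f ε ≠ f (flipCoord ε j) then 1 else 0

open scoped symmDiff

namespace KKL

variable {n : ℕ}

lemma sgn_mul_self (b : Bool) : sgn b * sgn b = 1 := by cases b <;> simp [sgn]

lemma sgn_not (b : Bool) : sgn (!b) = - sgn b := by cases b <;> simp [sgn]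

lemma flip_apply_self (ε : Cube n) (j : Fin n) : flipCoord ε j j = !(ε j) := by
  simp [flipCoord]

lemma flip_apply_ne (ε : Cube n) {j i : Fin n} (h : i ≠ j) : flipCoord ε j i = ε i := by
  simp [flipCoord, Function.update_of_ne h]

lemma flip_invol (j : Fin n) : Function.Involutive (fun ε : Cube n => flipCoord ε j) := by
  intro ε; funext i
  by_cases h : i = j
  · subst h; simp [flipCoord]
  · simp [flipCoord, Function.update_of_ne h]

lemma sum_flip (j : Fin n) (G : Cube n → ℝ) :
    ∑ ε : Cube n, G (flipCoord ε j) = ∑ ε : Cube n, G ε :=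
  Fintype.sum_bijective _ (flip_invol j).bijective _ _ (fun _ => rfl)

/-- Walsh character. -/
def w (S : Finset (Fin n)) (ε : Cube n) : ℝ := ∏ j ∈ S, sgn (ε j)

lemma w_empty (ε : Cube n) : w ∅ ε = 1 := by simp [w]

lemma w_mul (S T : Finset (Fin n)) (ε : Cube n) : w S ε * w T ε = w (S ∆ T) ε := by
  have h1 : S ∆ T ∪ S ∩ T = S ∪ T := by
    ext x; simp only [Finset.mem_union, Finset.mem_inter, Finset.mem_symmDiff]; tauto
  have h2 : Disjoint (S ∆ T) (S ∩ T) := by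
    simp only [Finset.disjoint_left, Finset.mem_symmDiff, Finset.mem_inter]
    tauto
  have key := Finset.prod_union_inter (s₁ := S) (s₂ := T) (f := fun j => sgn (ε j))
  rw [← h1, Finset.prod_union h2] at key
  have hsq : (∏ j ∈ S ∩ T, sgn (ε j)) * (∏ j ∈ S ∩ T, sgn (ε j)) = 1 := by
    rw [← Finset.prod_mul_distrib]; exact Finset.prod_eq_one fun j _ => sgn_mul_self _
  rw [mul_assoc, hsq, mul_one] at key
  unfold w
  rw [← key]

lemma w_flip_not_mem {S : Finset (Fin n)} {i : Fin n} (hi : i ∉ S) (ε : Cube n) :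
    w S (flipCoord ε i) = w S ε :=
  Finset.prod_congr rfl fun j hj => by
    rw [flip_apply_ne ε (show j ≠ i by rintro rfl; exact hi hj)]

lemma w_flip_mem {S : Finset (Fin n)} {i : Fin n} (hi : i ∈ S) (ε : Cube n) :
    w S (flipCoord ε i) = - w S ε := by
  have h : ∀ j ∈ S.erase i, sgn (flipCoord ε i j) = sgn (ε j) := fun j hj => by
    rw [flip_apply_ne ε (Finset.ne_of_mem_erase hj)]
  rw [w, w, ← Finset.mul_prod_erase S (fun j => sgn (flipCoord ε i j)) hi,
    ← Finset.mul_prod_erase S (fun j => sgn (ε j)) hi, flip_apply_self, sgn_not,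
    Finset.prod_congr rfl h]
  ring

lemma sum_w_eq_zero {S : Finset (Fin n)} (hS : S ≠ ∅) : ∑ ε : Cube n, w S ε = 0 := by
  obtain ⟨i, hi⟩ := Finset.nonempty_iff_ne_empty.2 hS
  have h := sum_flip i (w S)
  simp only [w_flip_mem hi, Finset.sum_neg_distrib] at h
  linarith

lemma card_cube : Fintype.card (Cube n) = 2 ^ n := by
  simp [Fintype.card_fun]

lemma sum_w_empty : ∑ ε : Cube n, w (∅ : Finset (Fin n)) ε = (2:ℝ)^n := by
  simp only [w_empty, Finset.sum_const, Finset.card_univ, card_cube, nsmul_eq_mul, mul_one]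
  push_cast
  ring

lemma sum_w_mul_w (S T : Finset (Fin n)) :
    ∑ ε : Cube n, w S ε * w T ε = if S = T then (2:ℝ)^n else 0 := by
  simp_rw [w_mul]
  by_cases h : S = T
  · subst h; simp [symmDiff_self, sum_w_empty]
  · rw [if_neg h]
    exact sum_w_eq_zero (fun he => h (symmDiff_eq_bot.1 he))


lemma cubeAvg_sum {ι : Type*} (A : Finset ι) (H : ι → Cube n → ℝ) :
    cubeAvg (fun ε => ∑ s ∈ A, H s ε) = ∑ s ∈ A, cubeAvg (H s) := by
  unfold cubeAvg
  rw [Finset.sum_comm, Finset.sum_div]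

lemma cubeAvg_nonneg {F : Cube n → ℝ} (h : ∀ ε, 0 ≤ F ε) : 0 ≤ cubeAvg F :=
  div_nonneg (Finset.sum_nonneg fun ε _ => h ε) (by positivity)

lemma cubeAvg_mono {F G : Cube n → ℝ} (h : ∀ ε, F ε ≤ G ε) : cubeAvg F ≤ cubeAvg G :=
  (div_le_div_iff_of_pos_right (by positivity)).2 (Finset.sum_le_sum fun ε _ => h ε)

lemma cubeAvg_const (c : ℝ) : cubeAvg (fun _ : Cube n => c) = c := by
  unfold cubeAvg
  rw [Finset.sum_const, Finset.card_univ, card_cube, nsmul_eq_mul]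
  push_cast
  field_simp

/-- Fourier coefficient. -/
def coef (F : Cube n → ℝ) (S : Finset (Fin n)) : ℝ := cubeAvg (fun ε => F ε * w S ε)

lemma sum_w_mul_w_delta (ε ε' : Cube n) :
    ∑ S : Finset (Fin n), w S ε * w S ε' = if ε = ε' then (2:ℝ)^n else 0 := by
  have h : ∀ S : Finset (Fin n), w S ε * w S ε' = ∏ j ∈ S, (sgn (ε j) * sgn (ε' j)) := by
    intro S; rw [w, w, Finset.prod_mul_distrib]
  simp_rw [h]
  have hps : ∑ S : Finset (Fin n), ∏ j ∈ S, (sgn (ε j) * sgn (ε' j))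
      = ∏ j : Fin n, (sgn (ε j) * sgn (ε' j) + 1) := by
    rw [Finset.prod_add]
    rw [← Finset.powerset_univ]
    exact (Finset.sum_congr rfl fun S _ => by rw [Finset.prod_const_one, mul_one]).symm
  rw [hps]
  by_cases h : ε = ε'
  · subst h
    rw [if_pos rfl]
    rw [Finset.prod_congr rfl (fun j _ => by rw [sgn_mul_self]; norm_num : ∀ j ∈ Finset.univ, sgn (ε j) * sgn (ε j) + 1 = 2)]
    simp [Finset.card_univ]
  · rw [if_neg h]
    obtain ⟨j, hj⟩ : ∃ j, ε j ≠ ε' j := by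
      by_contra hc; push_neg at hc; exact h (funext hc)
    apply Finset.prod_eq_zero (Finset.mem_univ j)
    have : sgn (ε j) * sgn (ε' j) = -1 := by
      cases hb : ε j <;> cases hb' : ε' j <;> simp_all [sgn]
    rw [this]; ring

lemma inversion (F : Cube n → ℝ) (ε : Cube n) :
    ∑ S : Finset (Fin n), coef F S * w S ε = F ε := by
  unfold coef cubeAvg
  simp_rw [div_mul_eq_mul_div, ← Finset.sum_div, Finset.sum_mul]
  rw [Finset.sum_comm]
  have : ∀ ε' : Cube n, ∑ S : Finset (Fin n), F ε' * w S ε' * w S ε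
      = F ε' * (if ε' = ε then (2:ℝ)^n else 0) := by
    intro ε'
    rw [← sum_w_mul_w_delta ε' ε, Finset.mul_sum]
    exact Finset.sum_congr rfl fun S _ => by ring
  simp_rw [this, mul_ite, mul_zero]
  rw [Finset.sum_ite_eq' Finset.univ ε (fun ε' => F ε' * (2:ℝ)^n)]
  simp only [Finset.mem_univ, if_true]
  field_simp

lemma cubeAvg_mul_left (c : ℝ) (H : Cube n → ℝ) :
    cubeAvg (fun ε => c * H ε) = c * cubeAvg H := by
  unfold cubeAvg
  rw [← Finset.mul_sum, mul_div_assoc]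

lemma parseval (F G : Cube n → ℝ) :
    cubeAvg (fun ε => F ε * G ε) = ∑ S : Finset (Fin n), coef F S * coef G S := by
  have h1 : (fun ε => F ε * G ε) = fun ε => ∑ S : Finset (Fin n), coef F S * (w S ε * G ε) := by
    funext ε
    simp_rw [← mul_assoc]
    rw [← Finset.sum_mul, inversion]
  rw [h1, cubeAvg_sum]
  refine Finset.sum_congr rfl fun S _ => ?_
  rw [cubeAvg_mul_left]
  congr 1
  exact congrArg cubeAvg (funext fun ε => mul_comm _ _)


/-- The critical noise rate `1/√3` for (2,4)-hypercontractivity. -/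
def σ : ℝ := (Real.sqrt 3)⁻¹

lemma σ_nonneg : (0:ℝ) ≤ σ := by
  unfold σ; positivity

lemma σ_sq : σ ^ 2 = 1 / 3 := by
  unfold σ
  rw [← one_div, div_pow, one_pow, Real.sq_sqrt (by norm_num : (3:ℝ) ≥ 0)]

lemma quart_identity (σ' a b s : ℝ) (hs : s = 1 ∨ s = -1) :
    (a + s * σ' * b) ^ 4 + (a - s * σ' * b) ^ 4
      = 2 * a ^ 4 + 12 * σ' ^ 2 * a ^ 2 * b ^ 2 + 2 * σ' ^ 4 * b ^ 4 := by
  rcases hs with h | h <;> subst h <;> ring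

lemma sgn_eq_one_or (b : Bool) : sgn b = 1 ∨ sgn b = -1 := by
  cases b <;> simp [sgn]

/-- Two-point induction: (2,4) hypercontractivity on the cube. -/
lemma hyper_aux (J : Finset (Fin n)) (c : Finset (Fin n) → ℝ) :
    cubeAvg (fun ε => (∑ S ∈ J.powerset, σ ^ S.card * c S * w S ε) ^ 4)
      ≤ (∑ S ∈ J.powerset, c S ^ 2) ^ 2 := by
  induction J using Finset.induction generalizing c with
  | empty =>
      simp only [Finset.powerset_empty, Finset.sum_singleton, Finset.card_empty, pow_zero,
        one_mul, w_empty, mul_one]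
      rw [cubeAvg_const]
      exact le_of_eq (by ring)
  | @insert i J' hi ih =>
      set A : Cube n → ℝ := fun ε => ∑ S ∈ J'.powerset, σ ^ S.card * c S * w S ε with hA
      set B : Cube n → ℝ := fun ε => ∑ S ∈ J'.powerset, σ ^ S.card * c (insert i S) * w S ε with hB
      have hmemJ' : ∀ S ∈ J'.powerset, i ∉ S := fun S hS h =>
        hi (Finset.mem_powerset.1 hS h)
      have hsplit : ∀ ε : Cube n, ∑ S ∈ (insert i J').powerset, σ ^ S.card * c S * w S ε
          = A ε + sgn (ε i) * σ * B ε := by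
        intro ε
        rw [Finset.sum_powerset_insert hi]
        congr 1
        rw [Finset.mul_sum]
        refine Finset.sum_congr rfl fun S hS => ?_
        have hiS : i ∉ S := hmemJ' S hS
        rw [Finset.card_insert_of_notMem hiS, w, Finset.prod_insert hiS, ← w]
        ring
      -- invariance under flipping coordinate i
      have hAflip : ∀ ε, A (flipCoord ε i) = A ε := fun ε =>
        Finset.sum_congr rfl fun S hS => by rw [w_flip_not_mem (hmemJ' S hS)]
      have hBflip : ∀ ε, B (flipCoord ε i) = B ε := fun ε =>
        Finset.sum_congr rfl fun S hS => by rw [w_flip_not_mem (hmemJ' S hS)]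
      -- moment identity
      have hmom : cubeAvg (fun ε => (A ε + sgn (ε i) * σ * B ε) ^ 4)
          = cubeAvg (fun ε => A ε ^ 4) + (6 * σ ^ 2) * cubeAvg (fun ε => A ε ^ 2 * B ε ^ 2)
            + σ ^ 4 * cubeAvg (fun ε => B ε ^ 4) := by
        have key : ∀ ε : Cube n, (A ε + sgn (ε i) * σ * B ε) ^ 4
              + (A (flipCoord ε i) + sgn (flipCoord ε i i) * σ * B (flipCoord ε i)) ^ 4
            = 2 * A ε ^ 4 + 12 * σ ^ 2 * A ε ^ 2 * B ε ^ 2 + 2 * σ ^ 4 * B ε ^ 4 := by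
          intro ε
          rw [hAflip, hBflip, flip_apply_self, sgn_not]
          have := quart_identity σ (A ε) (B ε) (sgn (ε i)) (sgn_eq_one_or (ε i))
          nlinarith [this]
        have hsum : (2:ℝ) * ∑ ε : Cube n, (A ε + sgn (ε i) * σ * B ε) ^ 4
            = ∑ ε : Cube n, (2 * A ε ^ 4 + 12 * σ ^ 2 * A ε ^ 2 * B ε ^ 2
                + 2 * σ ^ 4 * B ε ^ 4) := by
          rw [two_mul]
          nth_rewrite 2 [← sum_flip i (fun ε => (A ε + sgn (ε i) * σ * B ε) ^ 4)]
          rw [← Finset.sum_add_distrib]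
          exact Finset.sum_congr rfl fun ε _ => key ε
        have hmid : ∑ ε : Cube n, 12 * σ ^ 2 * A ε ^ 2 * B ε ^ 2
            = 12 * σ ^ 2 * ∑ ε : Cube n, A ε ^ 2 * B ε ^ 2 := by
          rw [Finset.mul_sum]; exact Finset.sum_congr rfl fun ε _ => by ring
        rw [Finset.sum_add_distrib, Finset.sum_add_distrib] at hsum
        simp_rw [← Finset.mul_sum] at hsum
        rw [hmid] at hsum
        have h2 : ∑ ε : Cube n, (A ε + sgn (ε i) * σ * B ε) ^ 4
            = ∑ ε : Cube n, A ε ^ 4 + 6 * σ ^ 2 * ∑ ε : Cube n, A ε ^ 2 * B ε ^ 2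
              + σ ^ 4 * ∑ ε : Cube n, B ε ^ 4 := by linarith [hsum]
        unfold cubeAvg
        rw [h2, add_div, add_div, mul_div_assoc, mul_div_assoc]
      calc cubeAvg (fun ε => (∑ S ∈ (insert i J').powerset, σ ^ S.card * c S * w S ε) ^ 4)
          = cubeAvg (fun ε => (A ε + sgn (ε i) * σ * B ε) ^ 4) := by
            exact congrArg cubeAvg (funext fun ε => by rw [hsplit ε])
        _ = cubeAvg (fun ε => A ε ^ 4) + (6 * σ ^ 2) * cubeAvg (fun ε => A ε ^ 2 * B ε ^ 2)
              + σ ^ 4 * cubeAvg (fun ε => B ε ^ 4) := hmom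
        _ ≤ (∑ S ∈ J'.powerset, c S ^ 2) ^ 2
              + 2 * ((∑ S ∈ J'.powerset, c S ^ 2) * (∑ S ∈ J'.powerset, c (insert i S) ^ 2))
              + (∑ S ∈ J'.powerset, c (insert i S) ^ 2) ^ 2 := by
            have ihA := ih c
            have ihB := ih (fun S => c (insert i S))
            have hCS : cubeAvg (fun ε => A ε ^ 2 * B ε ^ 2)
                ≤ (∑ S ∈ J'.powerset, c S ^ 2) * (∑ S ∈ J'.powerset, c (insert i S) ^ 2) := by
              have hsq : (∑ ε : Cube n, A ε ^ 2 * B ε ^ 2) ^ 2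
                  ≤ (∑ ε : Cube n, (A ε ^ 2) ^ 2) * ∑ ε : Cube n, (B ε ^ 2) ^ 2 :=
                Finset.sum_mul_sq_le_sq_mul_sq Finset.univ _ _
              have h4 : ∀ x : ℝ, (x ^ 2) ^ 2 = x ^ 4 := fun x => by ring
              simp_rw [h4] at hsq
              have havg : (cubeAvg (fun ε => A ε ^ 2 * B ε ^ 2)) ^ 2
                  ≤ cubeAvg (fun ε => A ε ^ 4) * cubeAvg (fun ε => B ε ^ 4) := by
                simp only [cubeAvg]
                rw [div_pow, div_mul_div_comm, pow_two ((2:ℝ)^n)]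
                exact (div_le_div_iff_of_pos_right (by positivity)).2 hsq
              have hα : (0:ℝ) ≤ ∑ S ∈ J'.powerset, c S ^ 2 :=
                Finset.sum_nonneg fun S _ => sq_nonneg _
              have hβ : (0:ℝ) ≤ ∑ S ∈ J'.powerset, c (insert i S) ^ 2 :=
                Finset.sum_nonneg fun S _ => sq_nonneg _
              have hA4 : (0:ℝ) ≤ cubeAvg (fun ε => A ε ^ 4) :=
                cubeAvg_nonneg fun ε => by positivity
              have hB4 : (0:ℝ) ≤ cubeAvg (fun ε => B ε ^ 4) :=
                cubeAvg_nonneg fun ε => by positivity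
              have hAB : (0:ℝ) ≤ cubeAvg (fun ε => A ε ^ 2 * B ε ^ 2) :=
                cubeAvg_nonneg fun ε => by positivity
              have hprod : (cubeAvg fun ε => A ε ^ 4) * (cubeAvg fun ε => B ε ^ 4)
                  ≤ (∑ S ∈ J'.powerset, c S ^ 2) ^ 2
                    * (∑ S ∈ J'.powerset, c (insert i S) ^ 2) ^ 2 :=
                mul_le_mul ihA ihB hB4 (sq_nonneg _)
              have hx2 : (cubeAvg fun ε => A ε ^ 2 * B ε ^ 2) ^ 2
                  ≤ ((∑ S ∈ J'.powerset, c S ^ 2)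
                    * (∑ S ∈ J'.powerset, c (insert i S) ^ 2)) ^ 2 := by
                rw [mul_pow]; exact le_trans havg hprod
              nlinarith [hx2, hAB, mul_nonneg hα hβ]
            have hB4n : (0:ℝ) ≤ cubeAvg (fun ε => B ε ^ 4) :=
              cubeAvg_nonneg fun ε => by positivity
            have hσ2 : 6 * σ ^ 2 = 2 := by rw [σ_sq]; norm_num
            have hσ4 : σ ^ 4 ≤ 1 := by
              have : σ ^ 4 = (σ ^ 2) ^ 2 := by ring
              rw [this, σ_sq]; norm_num
            have h1 := ih c
            have h2 := ih (fun S => c (insert i S))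
            rw [hσ2]
            have : σ ^ 4 * cubeAvg (fun ε => B ε ^ 4) ≤ cubeAvg (fun ε => B ε ^ 4) := by
              nlinarith [hB4n, hσ4]
            nlinarith [hCS, h1, h2, this]
        _ = (∑ S ∈ (insert i J').powerset, c S ^ 2) ^ 2 := by
            rw [Finset.sum_powerset_insert hi]
            ring


def wsum (c : Finset (Fin n) → ℝ) : Cube n → ℝ := fun ε => ∑ S : Finset (Fin n), c S * w S ε

lemma cubeAvg_w_mul_w (S T : Finset (Fin n)) :
    cubeAvg (fun ε => w S ε * w T ε) = if S = T then 1 else 0 := by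
  unfold cubeAvg
  rw [sum_w_mul_w]
  by_cases h : S = T
  · simp only [h, if_true]
    field_simp
  · simp [h]

lemma coef_wsum (c : Finset (Fin n) → ℝ) (T : Finset (Fin n)) : coef (wsum c) T = c T := by
  unfold coef wsum
  have h : (fun ε => (∑ S : Finset (Fin n), c S * w S ε) * w T ε)
      = fun ε => ∑ S : Finset (Fin n), c S * (w S ε * w T ε) := by
    funext ε; rw [Finset.sum_mul]; exact Finset.sum_congr rfl fun S _ => by ring
  rw [h, cubeAvg_sum]
  simp_rw [cubeAvg_mul_left, cubeAvg_w_mul_w, mul_ite, mul_one, mul_zero]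
  rw [Finset.sum_ite_eq' Finset.univ T c]
  simp

lemma hyper (c : Finset (Fin n) → ℝ) :
    cubeAvg (fun ε => (wsum (fun S => σ ^ S.card * c S) ε) ^ 4)
      ≤ (∑ S : Finset (Fin n), c S ^ 2) ^ 2 := by
  have h := hyper_aux (Finset.univ : Finset (Fin n)) c
  rw [Finset.powerset_univ] at h
  exact h

lemma cubeAvg_sub (F G : Cube n → ℝ) :
    cubeAvg (fun ε => F ε - G ε) = cubeAvg F - cubeAvg G := by
  unfold cubeAvg
  rw [Finset.sum_sub_distrib, sub_div]

lemma cubeAvg_add (F G : Cube n → ℝ) :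
    cubeAvg (fun ε => F ε + G ε) = cubeAvg F + cubeAvg G := by
  unfold cubeAvg
  rw [Finset.sum_add_distrib, add_div]

lemma parseval_sq (F : Cube n → ℝ) :
    cubeAvg (fun ε => F ε ^ 2) = ∑ S : Finset (Fin n), coef F S ^ 2 := by
  have h := parseval F F
  simp_rw [← pow_two] at h
  exact h

lemma coef_flip (F : Cube n → ℝ) (j : Fin n) (S : Finset (Fin n)) :
    coef (fun ε => F (flipCoord ε j)) S = (if j ∈ S then -1 else 1) * coef F S := by
  unfold coef cubeAvg
  have h := sum_flip j (fun ε => F ε * w S (flipCoord ε j))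
  have h1 : ∀ ε : Cube n, F (flipCoord ε j) * w S (flipCoord (flipCoord ε j) j)
      = F (flipCoord ε j) * w S ε := fun ε => by
    rw [show flipCoord (flipCoord ε j) j = ε from flip_invol j ε]
  simp only [h1] at h
  rw [h]
  by_cases hj : j ∈ S
  · simp only [hj, if_true]
    have hneg : ∑ ε : Cube n, F ε * w S (flipCoord ε j) = -∑ ε : Cube n, F ε * w S ε := by
      rw [← Finset.sum_neg_distrib]
      exact Finset.sum_congr rfl fun ε _ => by rw [w_flip_mem hj]; ring
    rw [hneg]; ring
  · simp only [hj, if_false, one_mul]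
    congr 1
    exact Finset.sum_congr rfl fun ε _ => by rw [w_flip_not_mem hj]

lemma coef_discDeriv (F : Cube n → ℝ) (j : Fin n) (S : Finset (Fin n)) :
    coef (discDeriv F j) S = if j ∈ S then coef F S else 0 := by
  have h : discDeriv F j = fun ε => (2:ℝ)⁻¹ * (F ε - F (flipCoord ε j)) := by
    funext ε; simp [discDeriv, smul_eq_mul]
  rw [h]
  unfold coef
  have h2 : (fun ε => (2:ℝ)⁻¹ * (F ε - F (flipCoord ε j)) * w S ε)
      = fun ε => (2:ℝ)⁻¹ * (F ε * w S ε - F (flipCoord ε j) * w S ε) := by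
    funext ε; ring
  rw [h2]
  rw [cubeAvg_mul_left]
  have h3 : cubeAvg (fun ε => F ε * w S ε - F (flipCoord ε j) * w S ε)
      = coef F S - coef (fun ε => F (flipCoord ε j)) S := cubeAvg_sub _ _
  rw [h3, coef_flip]
  by_cases hj : j ∈ S <;> simp only [hj, if_true, if_false] <;> ring_nf <;> try rfl


lemma cubeAvg_CS (F G : Cube n → ℝ) :
    (cubeAvg (fun ε => F ε * G ε)) ^ 2
      ≤ cubeAvg (fun ε => F ε ^ 2) * cubeAvg (fun ε => G ε ^ 2) := by
  have hsq := Finset.sum_mul_sq_le_sq_mul_sq Finset.univ F G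
  simp only [cubeAvg]
  rw [div_pow, div_mul_div_comm, pow_two ((2:ℝ)^n)]
  exact (div_le_div_iff_of_pos_right (by positivity)).2 hsq

lemma coef_empty (F : Cube n → ℝ) : coef F ∅ = cubeAvg F := by
  unfold coef
  exact congrArg cubeAvg (funext fun ε => by rw [w_empty, mul_one])

lemma gval (f : Cube n → Bool) (j : Fin n) (ε : Cube n) :
    discDeriv (fun ε' => sgn (f ε')) j ε = 0 ∨ discDeriv (fun ε' => sgn (f ε')) j ε = 1
      ∨ discDeriv (fun ε' => sgn (f ε')) j ε = -1 := by
  have hd : discDeriv (fun ε' => sgn (f ε')) j ε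
      = 2⁻¹ * (sgn (f ε) - sgn (f (flipCoord ε j))) := by
    simp [discDeriv, smul_eq_mul]
  rw [hd]
  cases hb : f ε <;> cases hb' : f (flipCoord ε j) <;> simp [sgn] <;> norm_num

lemma g_sq (f : Cube n → Bool) (j : Fin n) (ε : Cube n) :
    (discDeriv (fun ε' => sgn (f ε')) j ε) ^ 2
      = if f ε ≠ f (flipCoord ε j) then 1 else 0 := by
  have hd : discDeriv (fun ε' => sgn (f ε')) j ε
      = 2⁻¹ * (sgn (f ε) - sgn (f (flipCoord ε j))) := by
    simp [discDeriv, smul_eq_mul]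
  rw [hd]
  by_cases h : f ε = f (flipCoord ε j)
  · simp [h]
  · rw [if_pos h]
    cases hb : f ε <;> cases hb' : f (flipCoord ε j) <;> simp_all [sgn] <;> norm_num

lemma g_abs (f : Cube n → Bool) (j : Fin n) (ε : Cube n) :
    |discDeriv (fun ε' => sgn (f ε')) j ε| = (discDeriv (fun ε' => sgn (f ε')) j ε) ^ 2 := by
  rcases gval f j ε with h | h | h <;> rw [h] <;> norm_num

lemma g_pow4 (f : Cube n → Bool) (j : Fin n) (ε : Cube n) :
    (discDeriv (fun ε' => sgn (f ε')) j ε) ^ 4 = (discDeriv (fun ε' => sgn (f ε')) j ε) ^ 2 := by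
  rcases gval f j ε with h | h | h <;> rw [h] <;> norm_num

lemma influence_eq_avg_sq (f : Cube n → Bool) (j : Fin n) :
    influence f j = cubeAvg (fun ε => (discDeriv (fun ε' => sgn (f ε')) j ε) ^ 2) := by
  unfold influence
  exact congrArg cubeAvg (funext fun ε => (g_sq f j ε).symm)

lemma influence_eq_sum (f : Cube n → Bool) (j : Fin n) :
    influence f j = ∑ S : Finset (Fin n),
      (if j ∈ S then coef (fun ε => sgn (f ε)) S ^ 2 else 0) := by
  rw [influence_eq_avg_sq, parseval_sq]
  refine Finset.sum_congr rfl fun S _ => ?_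
  rw [coef_discDeriv]
  by_cases hj : j ∈ S <;> simp [hj]

lemma influence_nonneg (f : Cube n → Bool) (j : Fin n) : 0 ≤ influence f j :=
  cubeAvg_nonneg fun ε => by split <;> norm_num

lemma influence_le_one (f : Cube n → Bool) (j : Fin n) : influence f j ≤ 1 := by
  have := cubeAvg_mono (F := fun ε => if f ε ≠ f (flipCoord ε j) then (1:ℝ) else 0)
    (G := fun _ => (1:ℝ)) (fun ε => by by_cases h : f ε ≠ f (flipCoord ε j) <;> simp [h])
  rw [cubeAvg_const] at this
  exact this

/-- The per-coordinate hypercontractive estimate: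
`(∑_{S ∋ j} σ^{|S|} c_S²)⁴ ≤ Inf_j(f)⁵`. -/
lemma perj (f : Cube n → Bool) (j : Fin n) :
    (0 ≤ ∑ S : Finset (Fin n),
        (if j ∈ S then σ ^ S.card * coef (fun ε => sgn (f ε)) S ^ 2 else 0))
    ∧ (∑ S : Finset (Fin n),
        (if j ∈ S then σ ^ S.card * coef (fun ε => sgn (f ε)) S ^ 2 else 0)) ^ 4
      ≤ influence f j ^ 5 := by
  set F : Cube n → ℝ := fun ε => sgn (f ε) with hF
  set g : Cube n → ℝ := discDeriv F j with hg
  set T : Cube n → ℝ := wsum (fun S => σ ^ S.card * coef g S) with hT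
  set I : ℝ := influence f j with hI
  set Aj : ℝ := ∑ S : Finset (Fin n), (if j ∈ S then σ ^ S.card * coef F S ^ 2 else 0) with hAj
  have hInn : 0 ≤ I := influence_nonneg f j
  have hIsum : I = ∑ S : Finset (Fin n), coef g S ^ 2 := by
    rw [hI, influence_eq_avg_sq, parseval_sq]
  have hAnn : 0 ≤ Aj := Finset.sum_nonneg fun S _ => by
    split
    · exact mul_nonneg (pow_nonneg σ_nonneg _) (sq_nonneg _)
    · exact le_rfl
  have hgT : cubeAvg (fun ε => g ε * T ε) = Aj := by
    rw [parseval g T, hAj]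
    refine Finset.sum_congr rfl fun S _ => ?_
    rw [hT, coef_wsum, hg, coef_discDeriv]
    by_cases hj : j ∈ S <;> simp [hj] <;> ring
  -- pointwise: g·T ≤ g²·|T|
  have hp1 : ∀ ε, g ε * T ε ≤ g ε ^ 2 * |T ε| := fun ε => by
    calc g ε * T ε ≤ |g ε * T ε| := le_abs_self _
      _ = |g ε| * |T ε| := abs_mul _ _
      _ = g ε ^ 2 * |T ε| := by rw [g_abs f j ε]
  set x : ℝ := cubeAvg (fun ε => g ε ^ 2 * |T ε|) with hx
  set y : ℝ := cubeAvg (fun ε => g ε ^ 2 * T ε ^ 2) with hy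
  have hxnn : 0 ≤ x := cubeAvg_nonneg fun ε => by positivity
  have hynn : 0 ≤ y := cubeAvg_nonneg fun ε => by positivity
  have hAx : Aj ≤ x := by
    rw [← hgT]; exact cubeAvg_mono hp1
  have hx2 : x ^ 2 ≤ I * y := by
    have hCS := cubeAvg_CS (fun ε => |g ε|) (fun ε => |g ε| * |T ε|)
    have e1 : (fun ε => |g ε| * (|g ε| * |T ε|)) = fun ε => g ε ^ 2 * |T ε| := by
      funext ε; rw [← mul_assoc, ← abs_mul, abs_mul_self, ← pow_two]
    have e2 : (fun ε => |g ε| ^ 2) = fun ε => g ε ^ 2 := by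
      funext ε; rw [sq_abs]
    have e3 : (fun ε => (|g ε| * |T ε|) ^ 2) = fun ε => g ε ^ 2 * T ε ^ 2 := by
      funext ε; rw [mul_pow, sq_abs, sq_abs]
    rw [e1, e2, e3] at hCS
    have hIavg : cubeAvg (fun ε => g ε ^ 2) = I := by
      rw [hI, influence_eq_avg_sq]
    rw [hIavg] at hCS
    exact hCS
  have hy2 : y ^ 2 ≤ I * cubeAvg (fun ε => T ε ^ 4) := by
    have hCS := cubeAvg_CS (fun ε => g ε ^ 2) (fun ε => T ε ^ 2)
    have e1 : (fun ε => (g ε ^ 2) ^ 2) = fun ε => g ε ^ 2 := by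
      funext ε
      rw [← pow_mul]
      exact g_pow4 f j ε
    have e2 : (fun ε => (T ε ^ 2) ^ 2) = fun ε => T ε ^ 4 := by
      funext ε; ring
    rw [e1, e2] at hCS
    have hIavg : cubeAvg (fun ε => g ε ^ 2) = I := by
      rw [hI, influence_eq_avg_sq]
    rw [hIavg] at hCS
    exact hCS
  have hhyp : cubeAvg (fun ε => T ε ^ 4) ≤ I ^ 2 := by
    have := hyper (coef g)
    rw [← hIsum] at this
    exact this
  refine ⟨hAnn, ?_⟩
  have h1 : Aj ^ 4 ≤ x ^ 4 := pow_le_pow_left₀ hAnn hAx 4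
  have h3 : (x ^ 2) ^ 2 ≤ (I * y) ^ 2 := pow_le_pow_left₀ (sq_nonneg x) hx2 2
  have hTnn : 0 ≤ cubeAvg (fun ε => T ε ^ 4) := cubeAvg_nonneg fun ε => by positivity
  have h5 : y ^ 2 ≤ I * I ^ 2 := le_trans hy2 (mul_le_mul_of_nonneg_left hhyp hInn)
  have h6 : I ^ 2 * y ^ 2 ≤ I ^ 2 * (I * I ^ 2) :=
    mul_le_mul_of_nonneg_left h5 (sq_nonneg I)
  calc Aj ^ 4 ≤ x ^ 4 := h1
    _ = (x ^ 2) ^ 2 := by ring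
    _ ≤ (I * y) ^ 2 := h3
    _ = I ^ 2 * y ^ 2 := by ring
    _ ≤ I ^ 2 * (I * I ^ 2) := h6
    _ = I ^ 5 := by ring


/-! ### Non-constant functions have a positive influence -/

lemma const_of_no_influence (f : Cube n → Bool)
    (h : ∀ j : Fin n, ∀ ε : Cube n, f ε = f (flipCoord ε j)) :
    ∀ ε ε' : Cube n, f ε = f ε' := by
  have key : ∀ (s : Finset (Fin n)) (ε ε' : Cube n),
      (∀ i, i ∉ s → ε i = ε' i) → f ε = f ε' := by
    intro s
    induction s using Finset.induction with
    | empty =>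
        intro ε ε' hagree
        exact congrArg f (funext fun i => hagree i (Finset.notMem_empty i))
    | @insert a s' ha ih =>
        intro ε ε' hagree
        have h1 : f ε = f (Function.update ε' a (ε a)) := by
          apply ih
          intro i hi
          by_cases hia : i = a
          · subst hia; rw [Function.update_self]
          · rw [Function.update_of_ne hia]
            exact hagree i (by simp [hia, hi])
        rw [h1]
        by_cases hval : ε a = ε' a
        · rw [hval, Function.update_eq_self]
        · have heq : Function.update ε' a (ε a) = flipCoord ε' a := by
            funext i
            by_cases hia : i = a
            · subst hia
              rw [Function.update_self, flip_apply_self]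
              cases hε : ε i <;> cases hε' : ε' i <;> simp_all
            · rw [Function.update_of_ne hia, flip_apply_ne _ hia]
          rw [heq, ← h a ε']
  intro ε ε'
  exact key Finset.univ ε ε' (fun i hi => absurd (Finset.mem_univ i) hi)

lemma influence_zero (f : Cube n → Bool) (j : Fin n) (h : influence f j = 0) :
    ∀ ε, f ε = f (flipCoord ε j) := by
  intro ε
  unfold influence cubeAvg at h
  rcases div_eq_zero_iff.1 h with hsum | h2
  · have := (Finset.sum_eq_zero_iff_of_nonneg
        (fun ε' _ => by split <;> norm_num)).1 hsum ε (Finset.mem_univ ε)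
    by_contra hc
    rw [if_pos hc] at this
    norm_num at this
  · exfalso
    exact (by positivity : (0:ℝ) < 2 ^ n).ne' h2

lemma exists_pos_influence (f : Cube n → Bool) (hne : ∃ ε ε', f ε ≠ f ε') :
    ∃ j, 0 < influence f j := by
  by_contra hc
  push_neg at hc
  have hz : ∀ j ε, f ε = f (flipCoord ε j) := fun j =>
    influence_zero f j (le_antisymm (hc j) (influence_nonneg f j))
  obtain ⟨ε, ε', hεε⟩ := hne
  exact hεε (const_of_no_influence f hz ε ε')

/-! ### Numeric facts -/

lemma sqrt3_lb : (1.732 : ℝ) ≤ Real.sqrt 3 := by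
  rw [Real.le_sqrt (by norm_num) (by norm_num)]
  norm_num

lemma sqrt3_ub : Real.sqrt 3 ≤ 1.7320509 := by
  rw [Real.sqrt_le_iff]
  norm_num

lemma sqrt3_sq : (Real.sqrt 3) ^ 2 = 3 := Real.sq_sqrt (by norm_num)

lemma sqrt3_mul_σ : Real.sqrt 3 * σ = 1 := by
  unfold σ
  rw [mul_inv_cancel₀ (by positivity : Real.sqrt 3 ≠ 0)]

lemma log3_ub : Real.log 3 ≤ 11 / 10 := by
  rw [Real.log_le_iff_le_exp (by norm_num)]
  have h := Real.sum_le_exp_of_nonneg (by norm_num : (0:ℝ) ≤ 11/10) 6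
  refine le_trans ?_ h
  simp only [Finset.sum_range_succ, Finset.sum_range_zero, Nat.factorial]
  norm_num

lemma exp5_lb : (148.4 : ℝ) ≤ Real.exp 5 := by
  have h1 : Real.exp 5 = (Real.exp 1) ^ (5:ℕ) := by
    rw [← Real.exp_nat_mul]; norm_num
  have h2 := Real.exp_one_gt_d9.le
  rw [h1]
  calc (148.4:ℝ) ≤ 2.7182818283 ^ (5:ℕ) := by norm_num
    _ ≤ (Real.exp 1) ^ (5:ℕ) := pow_le_pow_left₀ (by norm_num) h2 5

lemma log_sqrt3 : Real.log (Real.sqrt 3) = Real.log 3 / 2 := by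
  rw [Real.log_sqrt (by norm_num)]


local notation "t" => Real.sqrt 3

lemma t_pow_eq (j : ℕ) : t ^ (2 * j) = 3 ^ j := by
  rw [pow_mul, sqrt3_sq]

/-- `t^j ≥ j + j²` for `j ≥ 8`. -/
lemma tj_ge : ∀ j : ℕ, 8 ≤ j → (j : ℝ) + (j:ℝ) ^ 2 ≤ t ^ j := by
  intro j hj
  induction j, hj using Nat.le_induction with
  | base =>
      have h := t_pow_eq 4
      norm_num at h
      rw [h]
      norm_num
  | succ j hj ih =>
      have ht := sqrt3_lb
      have htn : (0:ℝ) ≤ t := Real.sqrt_nonneg 3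
      have hjr : (8:ℝ) ≤ (j:ℝ) := by exact_mod_cast hj
      have hstep : t ^ (j+1) = t ^ j * t := by ring
      rw [hstep]
      push_cast
      have hmul : ((j:ℝ) + (j:ℝ)^2) * (1.732) ≤ t ^ j * t := by
        apply mul_le_mul ih ht (by norm_num) (by positivity)
      nlinarith [hmul, hjr]

/-- `k·t^j ≥ (k+j)·j` for `k ≥ 4`, `j ≥ 1`, except `(k,j) = (4,3)`. -/
lemma keyjk (k j : ℕ) (hk : 4 ≤ k) (hj : 1 ≤ j) (hex : ¬(k = 4 ∧ j = 3)) :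
    ((k:ℝ) + j) * j ≤ k * t ^ j := by
  have ht := sqrt3_lb
  have ht2 := sqrt3_sq
  have htn : (0:ℝ) ≤ t := Real.sqrt_nonneg 3
  have hkr : (4:ℝ) ≤ (k:ℝ) := by exact_mod_cast hk
  have hkn : (0:ℝ) ≤ (k:ℝ) := by linarith
  have hkt : (k:ℝ) * 1.732 ≤ (k:ℝ) * t := mul_le_mul_of_nonneg_left ht hkn
  by_cases hj7 : j ≤ 7
  · have h3 : t ^ 3 = 3 * t := by nlinarith [ht2]
    have h4 : t ^ 4 = 9 := by nlinarith [ht2]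
    have h5 : t ^ 5 = 9 * t := by nlinarith [ht2, h3]
    have h6 : t ^ 6 = 27 := by nlinarith [ht2, h4]
    have h7 : t ^ 7 = 27 * t := by nlinarith [ht2, h5]
    interval_cases j
    · rw [pow_one]; push_cast; nlinarith [hkt]
    · rw [ht2]; push_cast; nlinarith
    · have hk5 : 5 ≤ k := by
        rcases Nat.lt_or_ge k 5 with h | h
        · interval_cases k
          · exact absurd ⟨rfl, rfl⟩ hex
        · exact h
      have hkr5 : (5:ℝ) ≤ (k:ℝ) := by exact_mod_cast hk5
      rw [h3]; push_cast; nlinarith [hkt, hkr5]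
    · rw [h4]; push_cast; nlinarith
    · rw [h5]; push_cast; nlinarith [hkt]
    · rw [h6]; push_cast; nlinarith
    · rw [h7]; push_cast; nlinarith [hkt]
  · push_neg at hj7
    have h8 : 8 ≤ j := hj7
    have htj := tj_ge j h8
    have hjr : (8:ℝ) ≤ (j:ℝ) := by exact_mod_cast h8
    have hmul : (k:ℝ) * ((j:ℝ) + (j:ℝ)^2) ≤ (k:ℝ) * t ^ j :=
      mul_le_mul_of_nonneg_left htj hkn
    nlinarith [hmul, hjr, hkr]

set_option maxHeartbeats 1000000 in
/-- Coverage inequality for the large-`u` family. -/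
lemma cover (m k : ℕ) (hm : 1 ≤ m) (hk : 1 ≤ k) :
    1 ≤ (t ^ m / m ^ 2 + t) * ((k:ℝ) * σ ^ k) + (k:ℝ) / m := by
  have ht := sqrt3_lb
  have ht2 := sqrt3_sq
  have htn : (0:ℝ) ≤ t := Real.sqrt_nonneg 3
  have hσn : (0:ℝ) ≤ σ := σ_nonneg
  have htσ : t * σ = 1 := sqrt3_mul_σ
  have hσ2 : σ ^ 2 = 1/3 := σ_sq
  have hmr : (1:ℝ) ≤ (m:ℝ) := by exact_mod_cast hm
  have hmr0 : (0:ℝ) < (m:ℝ) := by linarith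
  have hkr : (1:ℝ) ≤ (k:ℝ) := by exact_mod_cast hk
  have hco : (0:ℝ) ≤ t ^ m / m ^ 2 := by positivity
  have hterm : (0:ℝ) ≤ (k:ℝ) * σ ^ k := by positivity
  by_cases hkm : m ≤ k
  · -- third term alone suffices
    have : (1:ℝ) ≤ (k:ℝ) / m := by
      rw [le_div_iff₀ hmr0]
      have : (m:ℝ) ≤ (k:ℝ) := by exact_mod_cast hkm
      linarith
    nlinarith [mul_nonneg (by linarith : (0:ℝ) ≤ t ^ m / m ^ 2 + t) hterm]
  · push_neg at hkm  -- k < m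
    have hdiv : (0:ℝ) ≤ (k:ℝ) / m := by positivity
    by_cases hk3 : k ≤ 3
    · -- t · k σ^k ≥ 1
      have hmain : (1:ℝ) ≤ t * ((k:ℝ) * σ ^ k) := by
        interval_cases k
        · simp only [pow_one, Nat.cast_one, one_mul]
          linarith [htσ]
        · have : σ ^ 2 = 1/3 := hσ2
          rw [this]; push_cast; nlinarith
        · have h3 : σ ^ 3 = σ * (1/3) := by nlinarith [hσ2]
          rw [h3]; push_cast; nlinarith [htσ]
      nlinarith [mul_le_mul_of_nonneg_right (by linarith : t ≤ t ^ m / m ^ 2 + t) hterm]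
    · push_neg at hk3
      have hk4 : 4 ≤ k := hk3
      obtain ⟨j, hjm⟩ : ∃ j, m = k + j := ⟨m - k, by omega⟩
      have hj1 : 1 ≤ j := by omega
      have htpow : t ^ m * σ ^ k = t ^ j := by
        rw [hjm, pow_add]
        have : σ ^ k = (t ^ k)⁻¹ := by
          unfold σ; rw [inv_pow]
        rw [this]
        field_simp
      by_cases hex : k = 4 ∧ j = 3
      · -- exceptional case m = 7, k = 4
        obtain ⟨hk4', hj3⟩ := hex
        subst hk4'
        have hm7 : m = 7 := by omega
        subst hm7
        have h4 : σ ^ 4 = 1/9 := by nlinarith [hσ2]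
        have h4t : t ^ 4 = 9 := by nlinarith [ht2]
        have h6 : t ^ 6 = 27 := by nlinarith [ht2, h4t]
        have ht7 : t ^ 7 = 27 * t := by
          calc t ^ 7 = t ^ 6 * t := by ring
            _ = 27 * t := by rw [h6]
        rw [ht7, h4]
        push_cast
        nlinarith [ht]
      · have hkey := keyjk k j hk4 hj1 hex
        -- (t^m/m²)·kσ^k = k t^j/m² ≥ mj/m² = j/m
        have hstep : (t ^ m / (m:ℝ) ^ 2) * ((k:ℝ) * σ ^ k) = (k:ℝ) * t ^ j / (m:ℝ) ^ 2 := by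
          rw [div_mul_eq_mul_div]
          congr 1
          calc t ^ m * ((k:ℝ) * σ ^ k) = (k:ℝ) * (t ^ m * σ ^ k) := by ring
            _ = (k:ℝ) * t ^ j := by rw [htpow]
        have hjk : ((k:ℝ) + j) = m := by rw [hjm]; push_cast; ring
        have hge : (j:ℝ) / m ≤ (k:ℝ) * t ^ j / m ^ 2 := by
          rw [div_le_div_iff₀ hmr0 (by positivity)]
          calc (j:ℝ) * (m:ℝ)^2 = ((m:ℝ) * j) * m := by ring
            _ ≤ ((k:ℝ) * t ^ j) * m := by
                apply mul_le_mul_of_nonneg_right _ (le_of_lt hmr0)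
                calc (m:ℝ) * j = ((k:ℝ)+j) * j := by rw [hjk]
                  _ ≤ k * t ^ j := hkey
            _ = (k:ℝ) * t ^ j * m := rfl
        have hsum : 1 ≤ (j:ℝ)/m + (k:ℝ)/m := by
          rw [← add_div, le_div_iff₀ hmr0]
          have : (j:ℝ) + k = m := by rw [hjm]; push_cast; ring
          linarith
        have hexp : (t ^ m / m ^ 2 + t) * ((k:ℝ) * σ ^ k)
            = (t ^ m / m ^ 2) * ((k:ℝ) * σ ^ k) + t * ((k:ℝ) * σ ^ k) := by ring
        have htk : 0 ≤ t * ((k:ℝ) * σ ^ k) := by positivity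
        rw [hexp, hstep]
        linarith [hge, hsum, htk]

set_option maxHeartbeats 1000000 in
/-- Coverage inequality for the small-`u` family: `1 ≤ (22/25)·√3·k·σ^k + (3/25)·k`. -/
lemma cover1 (k : ℕ) (hk : 1 ≤ k) :
    1 ≤ (22/25) * t * ((k:ℝ) * σ ^ k) + (3/25) * k := by
  have ht := sqrt3_lb
  have hσn : (0:ℝ) ≤ σ := σ_nonneg
  have htσ : t * σ = 1 := sqrt3_mul_σ
  have hσ2 : σ ^ 2 = 1/3 := σ_sq
  by_cases hk9 : 9 ≤ k
  · have : (9:ℝ) ≤ (k:ℝ) := by exact_mod_cast hk9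
    have h1 : (0:ℝ) ≤ (22/25) * t * ((k:ℝ) * σ ^ k) := by positivity
    nlinarith
  · push_neg at hk9
    have h3 : σ ^ 3 = σ / 3 := by nlinarith [hσ2]
    have h4 : σ ^ 4 = 1 / 9 := by nlinarith [hσ2]
    have h5 : σ ^ 5 = σ / 9 := by nlinarith [hσ2, h3]
    have h6 : σ ^ 6 = 1 / 27 := by nlinarith [hσ2, h4]
    have h7 : σ ^ 7 = σ / 27 := by nlinarith [hσ2, h5]
    have h8 : σ ^ 8 = 1 / 81 := by nlinarith [hσ2, h6]
    interval_cases k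
    · simp only [pow_one, Nat.cast_one]; nlinarith [htσ]
    · rw [hσ2]; push_cast; nlinarith
    · rw [h3]; push_cast; nlinarith [htσ]
    · rw [h4]; push_cast; nlinarith
    · rw [h5]; push_cast; nlinarith [htσ]
    · rw [h6]; push_cast; nlinarith
    · rw [h7]; push_cast; nlinarith [htσ]
    · rw [h8]; push_cast; nlinarith


lemma var_eq (F : Cube n → ℝ) :
    cubeAvg (fun ε => |F ε - cubeAvg F| ^ 2)
      = ∑ S : Finset (Fin n), (if S = ∅ then 0 else coef F S ^ 2) := by
  have h1 : (fun ε => |F ε - cubeAvg F| ^ 2)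
      = fun ε => (F ε ^ 2 - (2 * cubeAvg F) * F ε) + (cubeAvg F) ^ 2 := by
    funext ε; rw [sq_abs]; ring
  rw [h1, cubeAvg_add, cubeAvg_sub, cubeAvg_mul_left, cubeAvg_const, parseval_sq]
  have hm : cubeAvg F = coef F ∅ := (coef_empty F).symm
  have hsplit : ∑ S : Finset (Fin n), (if S = ∅ then (coef F S ^ 2) else 0)
      = coef F ∅ ^ 2 := by
    rw [Finset.sum_ite_eq' Finset.univ ∅ (fun S => coef F S ^ 2)]
    simp
  have hdecomp : ∑ S : Finset (Fin n), (if S = ∅ then 0 else coef F S ^ 2)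
      = (∑ S : Finset (Fin n), coef F S ^ 2) - coef F ∅ ^ 2 := by
    rw [← hsplit, ← Finset.sum_sub_distrib]
    refine Finset.sum_congr rfl fun S _ => ?_
    by_cases h : S = ∅ <;> simp [h]
  rw [hdecomp, hm]
  ring

lemma sum_ind (S : Finset (Fin n)) (v : ℝ) :
    ∑ j : Fin n, (if j ∈ S then v else 0) = (S.card : ℝ) * v := by
  rw [Finset.sum_ite_mem, Finset.univ_inter, Finset.sum_const, nsmul_eq_mul]

lemma sum_influence (f : Cube n → Bool) :
    ∑ j : Fin n, influence f j
      = ∑ S : Finset (Fin n), (S.card : ℝ) * coef (fun ε => sgn (f ε)) S ^ 2 := by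
  have h : ∀ j : Fin n, influence f j = ∑ S : Finset (Fin n),
      (if j ∈ S then coef (fun ε => sgn (f ε)) S ^ 2 else 0) := influence_eq_sum f
  rw [Finset.sum_congr rfl (fun j _ => h j), Finset.sum_comm]
  exact Finset.sum_congr rfl fun S _ => sum_ind S _

lemma sum_Aj (f : Cube n → Bool) :
    ∑ j : Fin n, (∑ S : Finset (Fin n),
        (if j ∈ S then σ ^ S.card * coef (fun ε => sgn (f ε)) S ^ 2 else 0))
      = ∑ S : Finset (Fin n),
          (S.card : ℝ) * (σ ^ S.card * coef (fun ε => sgn (f ε)) S ^ 2) := by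
  rw [Finset.sum_comm]
  exact Finset.sum_congr rfl fun S _ => sum_ind S _



set_option maxHeartbeats 1000000 in
/-- The scalar optimization underlying KKL. -/
lemma scalar (M : ℝ) (hM0 : 0 < M) (hM1 : M ≤ 1) :
    ∃ β γ : ℝ, 0 ≤ β ∧ 0 ≤ γ
      ∧ (∀ k : ℕ, 1 ≤ k → 1 ≤ β * ((k:ℝ) * σ ^ k) + γ * k)
      ∧ β * M ^ ((4:ℝ)⁻¹) + γ ≤ 4 / (1 - Real.log M) := by
  obtain ⟨u, hu_def⟩ : ∃ u : ℝ, u = - Real.log M := ⟨_, rfl⟩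
  have hu : 0 ≤ u := by
    rw [hu_def]
    simp only [neg_nonneg]
    exact Real.log_nonpos (le_of_lt hM0) hM1
  have hden : 1 - Real.log M = 1 + u := by rw [hu_def]; ring
  have hM4 : M ^ ((4:ℝ)⁻¹) = Real.exp (-(u/4)) := by
    rw [Real.rpow_def_of_pos hM0]
    congr 1
    rw [hu_def]
    ring
  have htn : (0:ℝ) ≤ t := Real.sqrt_nonneg 3
  have ht_lb := sqrt3_lb
  have ht_ub := sqrt3_ub
  have hE : Real.exp (-(u/4)) = (Real.exp (u/4))⁻¹ := Real.exp_neg _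
  have hEpos : 0 < Real.exp (u/4) := Real.exp_pos _
  have h1u : (0:ℝ) < 1 + u := by linarith
  rw [hden, hM4]
  by_cases hcase : u ≤ 20
  · -- small u : β = (22/25)·√3, γ = 3/25
    refine ⟨(22/25) * t, 3/25, by positivity, by norm_num, fun k hk => cover1 k hk, ?_⟩
    -- exp(u/4) ≥ 4th-order Taylor polynomial
    have hP := Real.sum_le_exp_of_nonneg (by positivity : (0:ℝ) ≤ u/4) 4
    have hPeval : ∑ i ∈ Finset.range 4, (u/4) ^ i / (Nat.factorial i)
        = 1 + u/4 + u^2/32 + u^3/384 := by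
      simp only [Finset.sum_range_succ, Finset.sum_range_zero, Nat.factorial]
      norm_num
      ring
    rw [hPeval] at hP
    have hPpos : (0:ℝ) < 1 + u/4 + u^2/32 + u^3/384 := by positivity
    have hpoly : (1.5243) * (1 + u)
        ≤ (4 - (3/25) * (1 + u)) * (1 + u/4 + u^2/32 + u^3/384) := by
      have hcube : (0:ℝ) ≤ u * u * u := by positivity
      nlinarith [hu, hcase, sq_nonneg (u - 3.6948),
        mul_nonneg hcube (by linarith : (0:ℝ) ≤ 20 - u), hcube]
    have hβub : (22/25) * t ≤ 1.5243 := by nlinarith [ht_ub]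
    have hexp_inv : (Real.exp (u/4))⁻¹
        ≤ (1 + u/4 + u^2/32 + u^3/384)⁻¹ :=
      inv_anti₀ hPpos hP
    have hstep : (22/25) * t * (Real.exp (u/4))⁻¹
        ≤ 1.5243 * (1 + u/4 + u^2/32 + u^3/384)⁻¹ := by
      apply mul_le_mul hβub hexp_inv (by positivity) (by norm_num)
    rw [hE]
    have hfin : 1.5243 * (1 + u/4 + u^2/32 + u^3/384)⁻¹ + 3/25 ≤ 4 / (1 + u) := by
      rw [inv_eq_one_div, ← sub_nonneg]
      have expand : 4 / (1 + u) - (1.5243 * (1 / (1 + u/4 + u^2/32 + u^3/384)) + 3/25)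
          = ((4 - (3/25) * (1+u)) * (1 + u/4 + u^2/32 + u^3/384)
              - 1.5243 * (1+u)) / ((1+u) * (1 + u/4 + u^2/32 + u^3/384)) := by
        field_simp
        ring
      rw [expand]
      apply div_nonneg (by linarith [hpoly]) (by positivity)
    linarith [hstep, hfin]
  · -- large u : anchored family with m = ⌈(1+u)/3⌉
    push_neg at hcase
    set m : ℕ := ⌈(1 + u) / 3⌉₊ with hm_def
    have hm_lb : (1 + u) / 3 ≤ (m : ℝ) := Nat.le_ceil _
    have hm_ub : (m : ℝ) < (1 + u) / 3 + 1 := Nat.ceil_lt_add_one (by positivity)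
    have hm_pos : 0 < m := by
      rw [hm_def]
      apply Nat.ceil_pos.2
      positivity
    have hm1 : 1 ≤ m := hm_pos
    have hmr : (0:ℝ) < (m:ℝ) := by exact_mod_cast hm_pos
    refine ⟨t ^ m / (m:ℝ) ^ 2 + t, 1 / (m:ℝ), by positivity, by positivity,
      fun k hk => by
        have := cover m k hm1 hk
        calc (1:ℝ) ≤ (t ^ m / (m:ℝ) ^ 2 + t) * ((k:ℝ) * σ ^ k) + (k:ℝ) / m := this
          _ = (t ^ m / (m:ℝ) ^ 2 + t) * ((k:ℝ) * σ ^ k) + 1 / (m:ℝ) * k := by ring, ?_⟩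
    rw [hE]
    -- third term
    have hc : 1 / (m:ℝ) ≤ 3 / (1 + u) := by
      rw [div_le_div_iff₀ hmr h1u]
      linarith [hm_lb]
    -- second term : t·exp(-u/4) ≤ 1/(2(1+u))
    have h2 : t * (Real.exp (u/4))⁻¹ ≤ 1 / (2 * (1 + u)) := by
      rw [← div_eq_mul_inv, div_le_div_iff₀ hEpos (by positivity)]
      have hsplit : Real.exp (u/4) = Real.exp 5 * Real.exp ((u - 20)/4) := by
        rw [← Real.exp_add]; congr 1; ring
      have hlin := Real.add_one_le_exp ((u - 20)/4)
      have he5 := exp5_lb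
      calc t * (2 * (1 + u)) ≤ 148.4 * ((u-20)/4 + 1) := by nlinarith [ht_ub, hcase]
        _ ≤ Real.exp 5 * Real.exp ((u-20)/4) := by
            apply mul_le_mul he5 hlin (by linarith [hcase]) (by positivity)
        _ = Real.exp (u/4) := hsplit.symm
        _ = 1 * Real.exp (u/4) := (one_mul _).symm
    -- first term : (t^m/m²)·exp(-u/4) ≤ 1/(2(1+u))
    have h3 : t ^ m / (m:ℝ)^2 * (Real.exp (u/4))⁻¹ ≤ 1 / (2 * (1 + u)) := by
      have hlogt : Real.log t ≤ 11/20 := by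
        rw [log_sqrt3]
        linarith [log3_ub]
      have hlogt0 : 0 ≤ Real.log t := Real.log_nonneg (by nlinarith [ht_lb])
      have htm : t ^ m = Real.exp ((m:ℝ) * Real.log t) := by
        rw [← Real.log_pow, Real.exp_log (pow_pos (by positivity) m)]
      have hmu : (m:ℝ) ≤ (u + 4)/3 := by linarith [hm_ub]
      have hexp_le : (m:ℝ) * Real.log t ≤ (11 * (u + 4))/60 := by
        calc (m:ℝ) * Real.log t ≤ ((u+4)/3) * Real.log t :=
              mul_le_mul_of_nonneg_right hmu hlogt0
          _ ≤ ((u+4)/3) * (11/20) := by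
              apply mul_le_mul_of_nonneg_left hlogt (by linarith)
          _ = (11 * (u + 4))/60 := by ring
      have htm_le : t ^ m ≤ Real.exp ((11 * (u + 4))/60) := by
        rw [htm]; exact Real.exp_le_exp.2 hexp_le
      have hsplit2 : Real.exp (u/4)
          = Real.exp ((11 * (u + 4))/60) * Real.exp ((u - 11)/15) := by
        rw [← Real.exp_add]; congr 1; ring
      have h15 : (u+4)/15 ≤ Real.exp ((u-11)/15) := by
        have := Real.add_one_le_exp ((u-11)/15); linarith
      have hcore : 2 * (1+u) * Real.exp ((11 * (u + 4))/60)
          ≤ (1+u)^2/9 * Real.exp (u/4) := by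
        rw [hsplit2]
        have hstep1 : 2 * (1+u) ≤ (1+u)^2/9 * Real.exp ((u-11)/15) := by
          calc 2*(1+u) ≤ (1+u)^2/9 * ((u+4)/15) := by nlinarith [hcase]
            _ ≤ (1+u)^2/9 * Real.exp ((u-11)/15) :=
                mul_le_mul_of_nonneg_left h15 (by positivity)
        calc 2*(1+u)*Real.exp ((11 * (u + 4))/60)
            ≤ ((1+u)^2/9 * Real.exp ((u-11)/15)) * Real.exp ((11 * (u + 4))/60) :=
              mul_le_mul_of_nonneg_right hstep1 (Real.exp_nonneg _)
          _ = (1+u)^2/9 * (Real.exp ((11 * (u + 4))/60) * Real.exp ((u-11)/15)) := by ring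
      have e1 : t^m / (m:ℝ)^2 * (Real.exp (u/4))⁻¹
          = t^m / ((m:ℝ)^2 * Real.exp (u/4)) := by
        rw [division_def, division_def, mul_assoc, ← mul_inv, ← division_def]
      rw [e1, div_le_div_iff₀ (by positivity) (by positivity)]
      calc t^m * (2*(1+u)) ≤ Real.exp ((11 * (u + 4))/60) * (2*(1+u)) :=
            mul_le_mul_of_nonneg_right htm_le (by positivity)
        _ = 2 * (1+u) * Real.exp ((11 * (u + 4))/60) := by ring
        _ ≤ (1+u)^2/9 * Real.exp (u/4) := hcore
        _ ≤ 1 * ((m:ℝ)^2 * Real.exp (u/4)) := by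
            rw [one_mul]
            apply mul_le_mul_of_nonneg_right _ (Real.exp_nonneg _)
            nlinarith [hm_lb, h1u, hmr.le]
    calc (t ^ m / (m:ℝ) ^ 2 + t) * (Real.exp (u/4))⁻¹ + 1/(m:ℝ)
        = t ^ m / (m:ℝ)^2 * (Real.exp (u/4))⁻¹ + t * (Real.exp (u/4))⁻¹ + 1/(m:ℝ) := by
          ring
      _ ≤ 1/(2*(1+u)) + 1/(2*(1+u)) + 3/(1+u) := by linarith [h3, h2, hc]
      _ = 4/(1+u) := by field_simp; ring


set_option maxHeartbeats 1000000 in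
theorem kkl_main (n : ℕ) (hn : 1 ≤ n) (f : Cube n → Bool)
    (hne : ∃ ε ε', f ε ≠ f ε') :
    cubeAvg (fun ε => |sgn (f ε) - cubeAvg (fun ε' => sgn (f ε'))| ^ 2)
      ≤ 4 / Real.log (Real.exp 1 /
            (Finset.univ.sup' (Finset.univ_nonempty_iff.mpr ⟨⟨0, hn⟩⟩)
              fun k => influence f k)) *
        ∑ j : Fin n, influence f j := by
  classical
  obtain ⟨M, hMdef⟩ : ∃ M : ℝ, M = Finset.univ.sup' (Finset.univ_nonempty_iff.mpr ⟨⟨0, hn⟩⟩)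
      (fun k => influence f k) := ⟨_, rfl⟩
  obtain ⟨j₀, hj₀⟩ := exists_pos_influence f hne
  have hM0 : 0 < M := by
    rw [hMdef]
    exact lt_of_lt_of_le hj₀ (Finset.le_sup' _ (Finset.mem_univ j₀))
  have hM1 : M ≤ 1 := by
    rw [hMdef]
    exact Finset.sup'_le _ _ (fun k _ => influence_le_one f k)
  have hIM : ∀ j, influence f j ≤ M := fun j => by
    rw [hMdef]; exact Finset.le_sup' _ (Finset.mem_univ j)
  have hlog : Real.log (Real.exp 1 /
      (Finset.univ.sup' (Finset.univ_nonempty_iff.mpr ⟨⟨0, hn⟩⟩)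
        fun k => influence f k)) = 1 - Real.log M := by
    rw [← hMdef, Real.log_div (Real.exp_ne_zero 1) (ne_of_gt hM0), Real.log_exp]
  rw [hlog]
  obtain ⟨β, γ, hβ, hγ, hcov, hfin⟩ := scalar M hM0 hM1
  have hSnn : (0:ℝ) ≤ ∑ j : Fin n, influence f j :=
    Finset.sum_nonneg fun j _ => influence_nonneg f j
  have hM4nn : (0:ℝ) ≤ M ^ ((4:ℝ)⁻¹) := Real.rpow_nonneg hM0.le _
  have hM4pow : (M ^ ((4:ℝ)⁻¹)) ^ (4:ℕ) = M := by
    rw [← Real.rpow_natCast (M ^ ((4:ℝ)⁻¹)) 4, ← Real.rpow_mul hM0.le]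
    norm_num
  -- per-coordinate bound
  have hAjle : ∀ j : Fin n, (∑ S : Finset (Fin n),
      (if j ∈ S then σ ^ S.card * coef (fun ε => sgn (f ε)) S ^ 2 else 0))
      ≤ influence f j * M ^ ((4:ℝ)⁻¹) := by
    intro j
    obtain ⟨hA0, hA4⟩ := perj f j
    have hInn := influence_nonneg f j
    have hpow : (∑ S : Finset (Fin n),
        (if j ∈ S then σ ^ S.card * coef (fun ε => sgn (f ε)) S ^ 2 else 0)) ^ (4:ℕ)
        ≤ (influence f j * M ^ ((4:ℝ)⁻¹)) ^ (4:ℕ) := by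
      calc (∑ S : Finset (Fin n),
          (if j ∈ S then σ ^ S.card * coef (fun ε => sgn (f ε)) S ^ 2 else 0)) ^ (4:ℕ)
            ≤ influence f j ^ 5 := hA4
        _ = influence f j ^ 4 * influence f j := by ring
        _ ≤ influence f j ^ 4 * M := mul_le_mul_of_nonneg_left (hIM j) (by positivity)
        _ = (influence f j * M ^ ((4:ℝ)⁻¹)) ^ (4:ℕ) := by
            rw [mul_pow, hM4pow]
    exact le_of_pow_le_pow_left₀ (by norm_num) (mul_nonneg hInn hM4nn) hpow
  have hsumA : ∑ S : Finset (Fin n),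
      (S.card : ℝ) * (σ ^ S.card * coef (fun ε => sgn (f ε)) S ^ 2)
      ≤ M ^ ((4:ℝ)⁻¹) * ∑ j : Fin n, influence f j := by
    rw [← sum_Aj f]
    calc ∑ j : Fin n, (∑ S : Finset (Fin n),
        (if j ∈ S then σ ^ S.card * coef (fun ε => sgn (f ε)) S ^ 2 else 0))
        ≤ ∑ j : Fin n, influence f j * M ^ ((4:ℝ)⁻¹) :=
          Finset.sum_le_sum fun j _ => hAjle j
      _ = M ^ ((4:ℝ)⁻¹) * ∑ j : Fin n, influence f j := by
          rw [← Finset.sum_mul]; ring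
  have hsumI : ∑ S : Finset (Fin n), (S.card : ℝ) * coef (fun ε => sgn (f ε)) S ^ 2
      = ∑ j : Fin n, influence f j := (sum_influence f).symm
  -- variance
  show cubeAvg (fun ε => |(fun ε' => sgn (f ε')) ε
      - cubeAvg (fun ε' => sgn (f ε'))| ^ 2) ≤ _
  rw [var_eq (fun ε' => sgn (f ε'))]
  have hperS : ∀ S : Finset (Fin n),
      (if S = ∅ then (0:ℝ) else coef (fun ε => sgn (f ε)) S ^ 2)
      ≤ β * ((S.card:ℝ) * (σ ^ S.card * coef (fun ε => sgn (f ε)) S ^ 2))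
        + γ * ((S.card:ℝ) * coef (fun ε => sgn (f ε)) S ^ 2) := by
    intro S
    by_cases hS : S = ∅
    · subst hS
      simp
    · rw [if_neg hS]
      have hk : 1 ≤ S.card := Finset.one_le_card.2 (Finset.nonempty_iff_ne_empty.2 hS)
      have hcv := hcov S.card hk
      have hc2 : (0:ℝ) ≤ coef (fun ε => sgn (f ε)) S ^ 2 := sq_nonneg _
      calc coef (fun ε => sgn (f ε)) S ^ 2
          = 1 * coef (fun ε => sgn (f ε)) S ^ 2 := by ring
        _ ≤ (β * ((S.card:ℝ) * σ ^ S.card) + γ * S.card)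
              * coef (fun ε => sgn (f ε)) S ^ 2 :=
            mul_le_mul_of_nonneg_right hcv hc2
        _ = β * ((S.card:ℝ) * (σ ^ S.card * coef (fun ε => sgn (f ε)) S ^ 2))
              + γ * ((S.card:ℝ) * coef (fun ε => sgn (f ε)) S ^ 2) := by ring
  calc ∑ S : Finset (Fin n), (if S = ∅ then (0:ℝ) else coef (fun ε => sgn (f ε)) S ^ 2)
      ≤ ∑ S : Finset (Fin n),
          (β * ((S.card:ℝ) * (σ ^ S.card * coef (fun ε => sgn (f ε)) S ^ 2))
            + γ * ((S.card:ℝ) * coef (fun ε => sgn (f ε)) S ^ 2)) :=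
        Finset.sum_le_sum fun S _ => hperS S
    _ = β * (∑ S : Finset (Fin n),
            (S.card:ℝ) * (σ ^ S.card * coef (fun ε => sgn (f ε)) S ^ 2))
          + γ * (∑ S : Finset (Fin n), (S.card:ℝ) * coef (fun ε => sgn (f ε)) S ^ 2) := by
        rw [Finset.sum_add_distrib, ← Finset.mul_sum, ← Finset.mul_sum]
    _ ≤ β * (M ^ ((4:ℝ)⁻¹) * ∑ j : Fin n, influence f j)
          + γ * ∑ j : Fin n, influence f j := by
        have h1 := mul_le_mul_of_nonneg_left hsumA hβ
        rw [hsumI]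
        linarith
    _ = (β * M ^ ((4:ℝ)⁻¹) + γ) * ∑ j : Fin n, influence f j := by ring
    _ ≤ 4 / (1 - Real.log M) * ∑ j : Fin n, influence f j :=
        mul_le_mul_of_nonneg_right hfin hSnn

end KKL

/-- The Kahn–Kalai–Linial inequality for Boolean functions (Appendix Theorem). -/
theorem kkl_boolean (n : ℕ) (hn : 1 ≤ n) (f : Cube n → Bool)
    (hne : ∃ ε ε', f ε ≠ f ε') :
    cubeAvg (fun ε => |sgn (f ε) - cubeAvg (fun ε' => sgn (f ε'))| ^ 2)
      ≤ 4 / Real.log (Real.exp 1 /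
            (Finset.univ.sup' (Finset.univ_nonempty_iff.mpr ⟨⟨0, hn⟩⟩)
              fun k => influence f k)) *
        ∑ j : Fin n, influence f j :=
  KKL.kkl_main n hn f hne
end
end

section
/- For every a ∈ (0,1], ∫_0^∞ a^{(1-e^{-2t})/(1+e^{-2t})} dt/√(e^{2t}-1) ≤ e√π / √(log(e/a)). -/
open MeasureTheory

noncomputable section

open Real Set in
set_option maxHeartbeats 1000000 in
private lemma key_numeric (c : ℝ) (hc : 1 ≤ c) :
    Real.exp (-((1 - Real.exp (-1)) * c)) / Real.sqrt (1 - Real.exp (-2))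
      ≤ Real.exp 1 * Real.sqrt Real.pi * (1 / Real.sqrt c - 1 / Real.sqrt (c + 1)) := by
  have hw : Real.exp (-1) ≤ 0.37 := by
    have h1 : Real.exp (-1) * Real.exp 1 = 1 := by rw [← Real.exp_add]; norm_num
    nlinarith [Real.exp_one_gt_d9, (Real.exp_pos (-1)).le]
  have hw0 : (0:ℝ) < Real.exp (-1) := Real.exp_pos _
  have he : (2.7182818283:ℝ) < Real.exp 1 := Real.exp_one_gt_d9
  have hpi : (3.141592:ℝ) < Real.pi := Real.pi_gt_d6
  set s1 := Real.sqrt c with hs1def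
  set s2 := Real.sqrt (c + 1) with hs2def
  have hs1 : 1 ≤ s1 := by
    rw [hs1def, show (1:ℝ) = Real.sqrt 1 by rw [Real.sqrt_one]]
    exact Real.sqrt_le_sqrt hc
  have hs1sq : s1 ^ 2 = c := Real.sq_sqrt (by linarith)
  have hs2sq : s2 ^ 2 = c + 1 := Real.sq_sqrt (by linarith)
  have hs12 : s1 ≤ s2 := Real.sqrt_le_sqrt (by linarith)
  have hs1pos : (0:ℝ) < s1 := by linarith
  have hs2pos : (0:ℝ) < s2 := by linarith
  -- gap lower bound
  have hgap : 1 / (2 * s2 ^ 3) ≤ 1 / s1 - 1 / s2 := by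
    have h1 : 1 / s1 - 1 / s2 = (s2 - s1) / (s1 * s2) := by
      field_simp
    have h2 : s2 - s1 = 1 / (s2 + s1) := by
      rw [eq_div_iff (by positivity)]
      nlinarith
    rw [h1, h2, div_div]
    apply one_div_le_one_div_of_le (by positivity)
    nlinarith
  -- tail denominator
  have hD : (0.92:ℝ) ≤ Real.sqrt (1 - Real.exp (-2)) := by
    have h2 : Real.exp (-2) = Real.exp (-1) * Real.exp (-1) := by
      rw [← Real.exp_add]; norm_num
    have h3 : (0.8464:ℝ) ≤ 1 - Real.exp (-2) := by nlinarith
    calc (0.92:ℝ) = Real.sqrt 0.8464 := by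
          rw [show (0.8464:ℝ) = 0.92 ^ 2 by norm_num, Real.sqrt_sq (by norm_num)]
      _ ≤ _ := Real.sqrt_le_sqrt h3
  have hexpb : Real.exp (-((1 - Real.exp (-1)) * c)) ≤ Real.exp (-(0.63 * c)) := by
    apply Real.exp_le_exp.mpr
    nlinarith
  -- core inequality
  have hcore : Real.exp (-(0.63 * c)) / 0.92 ≤ Real.exp 1 * Real.sqrt Real.pi / (2 * s2 ^ 3) := by
    rw [div_le_div_iff₀ (by norm_num) (by positivity)]
    have hmul : Real.exp (-(0.63 * c)) * Real.exp (0.63 * c) = 1 := by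
      rw [← Real.exp_add]; ring_nf; exact Real.exp_zero
    have hkey : 2 * s2 ^ 3 ≤ 0.92 * (Real.exp 1 * Real.sqrt Real.pi) * Real.exp (0.63 * c) := by
      have hA : (0:ℝ) ≤ 2 * s2 ^ 3 := by positivity
      have hB : (0:ℝ) ≤ 0.92 * (Real.exp 1 * Real.sqrt Real.pi) * Real.exp (0.63 * c) := by positivity
      have htay : 1 + 1.26 * c + (1.26 * c) ^ 2 / 2 + (1.26 * c) ^ 3 / 6 ≤ Real.exp (1.26 * c) := by
        have := Real.sum_le_exp_of_nonneg (by linarith : (0:ℝ) ≤ 1.26 * c) 4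
        simp [Finset.sum_range_succ, Nat.factorial] at this
        linarith
      have hpp : Real.sqrt Real.pi ^ 2 = Real.pi := Real.sq_sqrt Real.pi_pos.le
      have hee : Real.exp (0.63 * c) ^ 2 = Real.exp (1.26 * c) := by
        rw [sq, ← Real.exp_add]; ring_nf
      have hsq : (2 * s2 ^ 3) ^ 2 ≤ (0.92 * (Real.exp 1 * Real.sqrt Real.pi) * Real.exp (0.63 * c)) ^ 2 := by
        have h1 : (2 * s2 ^ 3) ^ 2 = 4 * (c + 1) ^ 3 := by
          have h6 : s2 ^ 6 = (c + 1) ^ 3 := by rw [← hs2sq]; ring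
          rw [show (2 * s2 ^ 3) ^ 2 = 4 * s2 ^ 6 by ring, h6]
        have h2 : (0.92 * (Real.exp 1 * Real.sqrt Real.pi) * Real.exp (0.63 * c)) ^ 2
            = 0.8464 * (Real.exp 1 ^ 2 * Real.pi) * Real.exp (1.26 * c) := by
          rw [show (0.92 * (Real.exp 1 * Real.sqrt Real.pi) * Real.exp (0.63 * c)) ^ 2
              = 0.8464 * (Real.exp 1 ^ 2 * Real.sqrt Real.pi ^ 2) * Real.exp (0.63 * c) ^ 2 by ring,
            hpp, hee]
        rw [h1, h2]
        have he2 : (7.389:ℝ) ≤ Real.exp 1 ^ 2 := by nlinarith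
        have h3 : (19.6:ℝ) ≤ 0.8464 * (Real.exp 1 ^ 2 * Real.pi) := by nlinarith
        have h4 : (0:ℝ) ≤ 1 + 1.26 * c + (1.26 * c) ^ 2 / 2 + (1.26 * c) ^ 3 / 6 := by positivity
        have h5 : 4 * (c + 1) ^ 3 ≤ 19.6 * (1 + 1.26 * c + (1.26 * c) ^ 2 / 2 + (1.26 * c) ^ 3 / 6) := by
          nlinarith
        calc 4 * (c + 1) ^ 3 ≤ 19.6 * (1 + 1.26 * c + (1.26 * c) ^ 2 / 2 + (1.26 * c) ^ 3 / 6) := h5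
          _ ≤ (0.8464 * (Real.exp 1 ^ 2 * Real.pi)) * Real.exp (1.26 * c) :=
              mul_le_mul h3 htay h4 (by positivity)
          _ = 0.8464 * (Real.exp 1 ^ 2 * Real.pi) * Real.exp (1.26 * c) := by ring
      nlinarith [hsq, hA, hB]
    calc Real.exp (-(0.63 * c)) * (2 * s2 ^ 3)
        ≤ Real.exp (-(0.63 * c)) * (0.92 * (Real.exp 1 * Real.sqrt Real.pi) * Real.exp (0.63 * c)) := by
          exact mul_le_mul_of_nonneg_left hkey (Real.exp_pos _).le
      _ = (Real.exp (-(0.63 * c)) * Real.exp (0.63 * c)) * (0.92 * (Real.exp 1 * Real.sqrt Real.pi)) := by ring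
      _ = Real.exp 1 * Real.sqrt Real.pi * 0.92 := by rw [hmul]; ring
  -- combine
  calc Real.exp (-((1 - Real.exp (-1)) * c)) / Real.sqrt (1 - Real.exp (-2))
      ≤ Real.exp (-(0.63 * c)) / 0.92 :=
        div_le_div₀ (Real.exp_pos _).le hexpb (by norm_num) hD
    _ ≤ Real.exp 1 * Real.sqrt Real.pi / (2 * s2 ^ 3) := hcore
    _ = Real.exp 1 * Real.sqrt Real.pi * (1 / (2 * s2 ^ 3)) := by ring
    _ ≤ Real.exp 1 * Real.sqrt Real.pi * (1 / s1 - 1 / s2) := by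
        exact mul_le_mul_of_nonneg_left hgap (by positivity)


open Real Set in
set_option maxHeartbeats 1000000 in
/-- For every `a ∈ (0,1]`,
`∫_0^∞ a^{(1-e^{-2t})/(1+e^{-2t})} dt/√(e^{2t}-1) ≤ e√π / √(log(e/a))`. -/
theorem integral_bound_main (a : ℝ) (ha0 : 0 < a) (ha1 : a ≤ 1) :
    (∫ t in Set.Ioi (0 : ℝ),
        a ^ ((1 - Real.exp (-2 * t)) / (1 + Real.exp (-2 * t))) /
          Real.sqrt (Real.exp (2 * t) - 1))
      ≤ Real.exp 1 * Real.sqrt Real.pi / Real.sqrt (Real.log (Real.exp 1 / a)) := by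
  have hloga : Real.log a ≤ 0 := Real.log_nonpos ha0.le ha1
  set c : ℝ := 1 - Real.log a with hcdef
  have hc : 1 ≤ c := by rw [hcdef]; linarith
  have hla : Real.log a = 1 - c := by rw [hcdef]; ring
  have hlog : Real.log (Real.exp 1 / a) = c := by
    rw [Real.log_div (Real.exp_ne_zero 1) (ne_of_gt ha0), Real.log_exp, hla]; ring
  rw [hlog]
  set β : ℝ := 1 - Real.exp (-1) with hβdef
  set D : ℝ := Real.sqrt (1 - Real.exp (-2)) with hDdef
  have hexp2 : Real.exp (-2) < 1 := by
    calc Real.exp (-2) < Real.exp 0 := Real.exp_lt_exp.mpr (by norm_num)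
      _ = 1 := Real.exp_zero
  have hDpos : 0 < D := by rw [hDdef]; exact Real.sqrt_pos.mpr (by linarith)
  set K : ℝ := Real.exp 1 * Real.exp (-(β * c)) / D with hKdef
  set r : ℝ := (c + 1) / 2 with hrdef
  have hr1 : 1 ≤ r := by rw [hrdef]; linarith
  have hrpos : 0 < r := by linarith
  set E : ℝ := Real.exp 1 / Real.sqrt 2 with hEdef
  have hEpos : 0 < E := by rw [hEdef]; positivity
  set f : ℝ → ℝ := fun t => a ^ ((1 - Real.exp (-2 * t)) / (1 + Real.exp (-2 * t))) /
      Real.sqrt (Real.exp (2 * t) - 1) with hfdef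
  set g1 : ℝ → ℝ := fun t => E * (t ^ ((1:ℝ) / 2 - 1) * Real.exp (-(r * t))) with hg1def
  set g2 : ℝ → ℝ := fun t => K * Real.exp (-t) with hg2def
  have hfnonneg : ∀ t : ℝ, 0 ≤ f t := fun t => by
    rw [hfdef]
    positivity
  have hmeas : Measurable f := by
    rw [hfdef]
    have hca : Continuous fun y : ℝ => a ^ y :=
      continuous_iff_continuousAt.mpr fun b => Real.continuousAt_const_rpow (ne_of_gt ha0)
    have hinner : Continuous fun t : ℝ => (1 - Real.exp (-2 * t)) / (1 + Real.exp (-2 * t)) := by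
      apply Continuous.div (by fun_prop) (by fun_prop)
      intro t
      positivity
    exact ((hca.comp hinner).measurable).div (by fun_prop)
  -- rewrite of the power
  have hfx : ∀ t : ℝ, f t = Real.exp ((1 - c) * ((1 - Real.exp (-2 * t)) / (1 + Real.exp (-2 * t)))) /
      Real.sqrt (Real.exp (2 * t) - 1) := by
    intro t
    rw [hfdef]
    simp only
    rw [Real.rpow_def_of_pos ha0, hla]
  -- head pointwise bound
  have hhead : ∀ t ∈ Ioc (0:ℝ) 1, f t ≤ g1 t := by
    intro t ht
    obtain ⟨ht0, ht1⟩ := ht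
    rw [hfx t]
    set x := (1 - Real.exp (-2 * t)) / (1 + Real.exp (-2 * t)) with hxdef
    have hv0 : 0 < Real.exp (-2 * t) := Real.exp_pos _
    have hx1 : x ≤ 1 := by
      rw [hxdef, div_le_one (by linarith)]; linarith
    have hxge : t / 2 ≤ x := by
      rw [hxdef, le_div_iff₀ (by linarith)]
      have h1 : 1 + 2 * t ≤ Real.exp (2 * t) := by
        have := Real.add_one_le_exp (2 * t); linarith
      have h2 : Real.exp (-2 * t) * Real.exp (2 * t) = 1 := by
        rw [← Real.exp_add]; ring_nf; exact Real.exp_zero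
      nlinarith [hv0, h1, h2, ht0, ht1]
    have hnum : Real.exp ((1 - c) * x) ≤ Real.exp 1 * Real.exp (-(c * (t / 2))) := by
      rw [← Real.exp_add]
      apply Real.exp_le_exp.mpr
      nlinarith [hx1, hxge, hc]
    have hden : Real.sqrt (2 * t) * Real.exp (t / 2) ≤ Real.sqrt (Real.exp (2 * t) - 1) := by
      have hut : 1 + t + t ^ 2 / 2 ≤ Real.exp t := by
        have := Real.sum_le_exp_of_nonneg ht0.le 4
        simp [Finset.sum_range_succ, Nat.factorial] at this
        nlinarith [pow_nonneg ht0.le 3]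
      have he2t : Real.exp (2 * t) = Real.exp t * Real.exp t := by
        rw [← Real.exp_add]; ring_nf
      have h3 : 2 * t * Real.exp t ≤ Real.exp (2 * t) - 1 := by
        nlinarith [hut, ht0.le, sq_nonneg (Real.exp t - t - 1 - t ^ 2 / 2), sq_nonneg t, sq_nonneg (t^2)]
      calc Real.sqrt (2 * t) * Real.exp (t / 2) = Real.sqrt (2 * t) * Real.sqrt (Real.exp t) := by
            rw [Real.exp_half]
        _ = Real.sqrt (2 * t * Real.exp t) := (Real.sqrt_mul (by linarith) _).symm
        _ ≤ Real.sqrt (Real.exp (2 * t) - 1) := Real.sqrt_le_sqrt h3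
    have hEt : g1 t = Real.exp 1 * Real.exp (-(c * (t / 2))) / (Real.sqrt (2 * t) * Real.exp (t / 2)) := by
      rw [hg1def]
      simp only
      rw [show ((1:ℝ) / 2 - 1) = -(1 / 2) by norm_num, Real.rpow_neg ht0.le, ← Real.sqrt_eq_rpow]
      rw [show -(r * t) = -(c * (t / 2)) + -(t / 2) by rw [hrdef]; ring, Real.exp_add]
      rw [Real.sqrt_mul (by norm_num : (0:ℝ) ≤ 2), hEdef]
      have h1 : Real.sqrt t ≠ 0 := by positivity
      have h2 : Real.sqrt 2 ≠ 0 := by positivity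
      have h3 : Real.exp (t / 2) ≠ 0 := Real.exp_ne_zero _
      rw [Real.exp_neg (t/2)]
      field_simp
    rw [hEt]
    exact div_le_div₀ (by positivity) hnum (by positivity) hden
  -- tail pointwise bound
  have htail : ∀ t ∈ Ioi (1:ℝ), f t ≤ g2 t := by
    intro t ht
    have ht1 : (1:ℝ) < t := ht
    rw [hfx t]
    set x := (1 - Real.exp (-2 * t)) / (1 + Real.exp (-2 * t)) with hxdef
    have hv0 : 0 < Real.exp (-2 * t) := Real.exp_pos _
    have hx1 : x ≤ 1 := by
      rw [hxdef, div_le_one (by linarith)]; linarith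
    have hxge : β ≤ x := by
      have hw1 : Real.exp (-t) ≤ Real.exp (-1) := Real.exp_le_exp.mpr (by linarith)
      have step : 1 - Real.exp (-t) ≤ x := by
        rw [hxdef, le_div_iff₀ (by linarith)]
        have hv : Real.exp (-2 * t) = Real.exp (-t) * Real.exp (-t) := by
          rw [← Real.exp_add]; ring_nf
        have hwle1 : Real.exp (-t) ≤ 1 := by
          calc Real.exp (-t) ≤ Real.exp 0 := Real.exp_le_exp.mpr (by linarith)
            _ = 1 := Real.exp_zero
        nlinarith [Real.exp_pos (-t), hwle1, hv, mul_nonneg (Real.exp_pos (-t)).le (sq_nonneg (1 - Real.exp (-t)))]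
      rw [hβdef]; linarith
    have hnum : Real.exp ((1 - c) * x) ≤ Real.exp 1 * Real.exp (-(β * c)) := by
      rw [← Real.exp_add]
      apply Real.exp_le_exp.mpr
      have hβ1 : β ≤ 1 := by
        rw [hβdef]; have := (Real.exp_pos (-1)).le; linarith [Real.exp_pos (-1)]
      nlinarith [hx1, hxge, hc]
    have hden : Real.exp t * D ≤ Real.sqrt (Real.exp (2 * t) - 1) := by
      have h2 : Real.exp (2 * t) * Real.exp (-2) = Real.exp (2 * t - 2) := by
        rw [← Real.exp_add]; ring_nf
      have h3 : 1 ≤ Real.exp (2 * t - 2) := by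
        rw [show (1:ℝ) = Real.exp 0 by rw [Real.exp_zero]]
        exact Real.exp_le_exp.mpr (by linarith)
      have h1 : Real.exp (2 * t) * (1 - Real.exp (-2)) ≤ Real.exp (2 * t) - 1 := by
        nlinarith [h2, h3]
      calc Real.exp t * D = Real.sqrt (Real.exp (2 * t)) * D := by
            rw [← Real.exp_half]; congr 1; ring
        _ = Real.sqrt (Real.exp (2 * t) * (1 - Real.exp (-2))) := by
            rw [hDdef, Real.sqrt_mul (Real.exp_pos _).le]
        _ ≤ Real.sqrt (Real.exp (2 * t) - 1) := Real.sqrt_le_sqrt h1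
    have hg2t : g2 t = Real.exp 1 * Real.exp (-(β * c)) / (Real.exp t * D) := by
      rw [hg2def, hKdef]
      simp only
      rw [Real.exp_neg t]
      field_simp
    rw [hg2t]
    exact div_le_div₀ (by positivity) hnum (by positivity) hden
  -- integrability of g1 on Ioi 0
  have hg1int : IntegrableOn g1 (Ioi 0) := by
    apply Integrable.mono'
      ((Real.GammaIntegral_convergent (by norm_num : (0:ℝ) < 1/2)).const_mul E)
    · apply Measurable.aestronglyMeasurable
      rw [hg1def]
      fun_prop
    · filter_upwards [ae_restrict_mem measurableSet_Ioi] with t ht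
      have ht0 : (0:ℝ) < t := ht
      have hrp : (0:ℝ) ≤ t ^ ((1:ℝ)/2 - 1) := Real.rpow_nonneg ht0.le _
      have hb : 0 ≤ g1 t := by
        rw [hg1def]; simp only; positivity
      rw [Real.norm_eq_abs, abs_of_nonneg hb]
      rw [hg1def]; simp only
      have hle : Real.exp (-(r * t)) ≤ Real.exp (-t) := by
        apply Real.exp_le_exp.mpr
        nlinarith [hr1, ht0.le]
      calc E * (t ^ ((1:ℝ)/2 - 1) * Real.exp (-(r * t)))
          ≤ E * (t ^ ((1:ℝ)/2 - 1) * Real.exp (-t)) := by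
            apply mul_le_mul_of_nonneg_left _ hEpos.le
            exact mul_le_mul_of_nonneg_left hle hrp
        _ = E * (Real.exp (-t) * t ^ ((1:ℝ)/2 - 1)) := by ring
  have hifIoc : IntegrableOn f (Ioc 0 1) := by
    apply Integrable.mono' (hg1int.mono_set Ioc_subset_Ioi_self) hmeas.aestronglyMeasurable
    filter_upwards [ae_restrict_mem measurableSet_Ioc] with t ht
    rw [Real.norm_eq_abs, abs_of_nonneg (hfnonneg t)]
    exact hhead t ht
  have hg2int : IntegrableOn g2 (Ioi 1) := by
    have h := (exp_neg_integrableOn_Ioi (1:ℝ) zero_lt_one).const_mul K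
    rw [hg2def]
    simpa [IntegrableOn] using h
  have hifIoi : IntegrableOn f (Ioi 1) := by
    apply Integrable.mono' hg2int hmeas.aestronglyMeasurable
    filter_upwards [ae_restrict_mem measurableSet_Ioi] with t ht
    rw [Real.norm_eq_abs, abs_of_nonneg (hfnonneg t)]
    exact htail t ht
  have hsplit : (∫ t in Ioi (0:ℝ), f t) = (∫ t in Ioc (0:ℝ) 1, f t) + ∫ t in Ioi (1:ℝ), f t := by
    rw [← setIntegral_union (Set.Ioc_disjoint_Ioi le_rfl) measurableSet_Ioi hifIoc hifIoi,
      Set.Ioc_union_Ioi_eq_Ioi zero_le_one]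
  have hval1 : (∫ t in Ioi (0:ℝ), g1 t) = Real.exp 1 * Real.sqrt Real.pi / Real.sqrt (c + 1) := by
    rw [hg1def]
    simp only
    rw [MeasureTheory.integral_const_mul]
    rw [Real.integral_rpow_mul_exp_neg_mul_Ioi (by norm_num : (0:ℝ) < 1/2) hrpos]
    rw [Real.Gamma_one_half_eq, ← Real.sqrt_eq_rpow]
    rw [hrdef, show (1:ℝ) / ((c + 1) / 2) = 2 / (c + 1) by
      rw [one_div_div]]
    rw [Real.sqrt_div (by norm_num : (0:ℝ) ≤ 2), hEdef]
    have h2 : Real.sqrt 2 ≠ 0 := by positivity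
    have hc1 : Real.sqrt (c + 1) ≠ 0 := ne_of_gt (Real.sqrt_pos.mpr (by linarith))
    field_simp
  have hval2 : (∫ t in Ioi (1:ℝ), g2 t) = K * Real.exp (-1) := by
    rw [hg2def]
    simp only
    rw [MeasureTheory.integral_const_mul, integral_exp_neg_Ioi]
  have hb1 : (∫ t in Ioc (0:ℝ) 1, f t) ≤ Real.exp 1 * Real.sqrt Real.pi / Real.sqrt (c + 1) := by
    rw [← hval1]
    calc (∫ t in Ioc (0:ℝ) 1, f t) ≤ ∫ t in Ioc (0:ℝ) 1, g1 t :=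
        setIntegral_mono_on hifIoc (hg1int.mono_set Ioc_subset_Ioi_self) measurableSet_Ioc hhead
      _ ≤ ∫ t in Ioi (0:ℝ), g1 t := by
        apply setIntegral_mono_set hg1int
        · filter_upwards [ae_restrict_mem measurableSet_Ioi] with t ht
          have ht0 : (0:ℝ) < t := ht
          have hrp : (0:ℝ) ≤ t ^ ((1:ℝ)/2 - 1) := Real.rpow_nonneg ht0.le _
          rw [hg1def]; simp only; positivity
        · exact HasSubset.Subset.eventuallyLE Ioc_subset_Ioi_self
  have hb2 : (∫ t in Ioi (1:ℝ), f t) ≤ K * Real.exp (-1) := by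
    rw [← hval2]
    exact setIntegral_mono_on hifIoi hg2int measurableSet_Ioi htail
  have hKe : K * Real.exp (-1) = Real.exp (-(β * c)) / D := by
    rw [hKdef]
    have h1 : Real.exp 1 * Real.exp (-1) = 1 := by rw [← Real.exp_add]; norm_num
    rw [div_mul_eq_mul_div, mul_right_comm, h1, one_mul]
  have hkey := key_numeric c hc
  rw [← hβdef, ← hDdef] at hkey
  have hc0 : (0:ℝ) < c := by linarith
  have hfin : Real.exp 1 * Real.sqrt Real.pi / Real.sqrt (c + 1)
      + Real.exp (-(β * c)) / D ≤ Real.exp 1 * Real.sqrt Real.pi / Real.sqrt c := by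
    have hexpand : Real.exp 1 * Real.sqrt Real.pi * (1 / Real.sqrt c - 1 / Real.sqrt (c + 1))
        = Real.exp 1 * Real.sqrt Real.pi / Real.sqrt c
          - Real.exp 1 * Real.sqrt Real.pi / Real.sqrt (c + 1) := by
      rw [mul_sub, mul_one_div, mul_one_div]
    linarith [hkey]
  rw [hsplit]
  calc (∫ t in Ioc (0:ℝ) 1, f t) + ∫ t in Ioi (1:ℝ), f t
      ≤ Real.exp 1 * Real.sqrt Real.pi / Real.sqrt (c + 1) + K * Real.exp (-1) :=
        add_le_add hb1 hb2
    _ = Real.exp 1 * Real.sqrt Real.pi / Real.sqrt (c + 1) + Real.exp (-(β * c)) / D := by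
        rw [hKe]
    _ ≤ Real.exp 1 * Real.sqrt Real.pi / Real.sqrt c := hfin
end
end

section
/- For every a ∈ (0,1], ∫_0^1 a^{(1-s)/(1+s)} ds ≤ 2 / log(e/a). -/
open MeasureTheory

noncomputable section

/-- For every `a ∈ (0,1]`, `∫_0^1 a^{(1-s)/(1+s)} ds ≤ 2 / log(e/a)`. -/
theorem integral_bound_appendix (a : ℝ) (ha0 : 0 < a) (ha1 : a ≤ 1) :
    (∫ s in (0 : ℝ)..1, a ^ ((1 - s) / (1 + s))) ≤ 2 / Real.log (Real.exp 1 / a) := by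
  set L := Real.log (Real.exp 1 / a) with hLdef
  have hloga : Real.log a ≤ 0 := Real.log_nonpos ha0.le ha1
  have hLeq : L = 1 - Real.log a := by
    rw [hLdef, Real.log_div (Real.exp_ne_zero 1) (ne_of_gt ha0), Real.log_exp]
  have hL1 : 1 ≤ L := by rw [hLeq]; linarith
  have hL0 : (0:ℝ) < L := lt_of_lt_of_le one_pos hL1
  set g : ℝ → ℝ := fun s => 4 / (1 + s) ^ 2 * Real.exp (-L * ((1 - s) / (1 + s))) with hg
  set F : ℝ → ℝ := fun s => 2 / L * Real.exp (-L * ((1 - s) / (1 + s))) with hF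
  -- continuity facts
  have hcont_u : ContinuousOn (fun s : ℝ => (1 - s) / (1 + s)) (Set.Icc 0 1) := by
    apply ContinuousOn.div (by fun_prop) (by fun_prop)
    intro s hs; rcases hs with ⟨h0, _⟩; positivity
  have hconta : ContinuousOn (fun s : ℝ => a ^ ((1 - s) / (1 + s))) (Set.Icc 0 1) := by
    have : (fun s : ℝ => a ^ ((1 - s) / (1 + s)))
        = fun s => Real.exp (Real.log a * ((1 - s) / (1 + s))) := by
      funext s; rw [Real.rpow_def_of_pos ha0]
    rw [this]
    exact Real.continuous_exp.comp_continuousOn (continuousOn_const.mul hcont_u)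
  have hcontg : ContinuousOn g (Set.Icc 0 1) := by
    apply ContinuousOn.mul
    · apply ContinuousOn.div continuousOn_const (by fun_prop)
      intro s hs; rcases hs with ⟨h0, _⟩; positivity
    · exact Real.continuous_exp.comp_continuousOn (continuousOn_const.mul hcont_u)
  -- pointwise bound
  have hpoint : ∀ s ∈ Set.Icc (0:ℝ) 1, a ^ ((1 - s) / (1 + s)) ≤ g s := by
    intro s hs
    rcases hs with ⟨h0, h1⟩
    have hs1 : (0:ℝ) < 1 + s := by linarith
    set u : ℝ := (1 - s) / (1 + s) with hu
    have hu0 : 0 ≤ u := div_nonneg (by linarith) hs1.le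
    have hu1 : u ≤ 1 := by
      rw [hu, div_le_one hs1]; linarith
    have hsu : 1 + u = 2 / (1 + s) := by
      rw [hu]; field_simp; ring
    have h4 : 4 / (1 + s) ^ 2 = (1 + u) ^ 2 := by
      rw [hsu]; field_simp; ring
    -- exp u ≤ (1 + u)^2
    have hlog1u : u / (1 + u) ≤ Real.log (1 + u) := by
      have := Real.one_sub_inv_le_log_of_pos (show (0:ℝ) < 1 + u by linarith)
      have h1u : (0:ℝ) < 1 + u := by linarith
      have : 1 - (1 + u)⁻¹ = u / (1 + u) := by field_simp; ring
      linarith [Real.one_sub_inv_le_log_of_pos h1u, this ▸ Real.one_sub_inv_le_log_of_pos h1u]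
    have hkey : Real.exp u ≤ (1 + u) ^ 2 := by
      have h1u : (0:ℝ) < 1 + u := by linarith
      have h2 : u ≤ 2 * Real.log (1 + u) := by
        have h3 : u ≤ 2 * (u / (1 + u)) := by
          rw [mul_div_assoc', le_div_iff₀ h1u]
          nlinarith
        linarith [hlog1u]
      calc Real.exp u ≤ Real.exp (2 * Real.log (1 + u)) := Real.exp_le_exp.mpr h2
        _ = (1 + u) ^ 2 := by
            rw [two_mul, Real.exp_add, Real.exp_log h1u]; ring
    have ha_eq : a ^ u = Real.exp u * Real.exp (-L * u) := by
      rw [Real.rpow_def_of_pos ha0, ← Real.exp_add]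
      congr 1
      rw [hLeq]; ring
    rw [hg]
    simp only
    rw [← hu, ha_eq, h4]
    exact mul_le_mul_of_nonneg_right hkey (Real.exp_nonneg _)
  -- integrability
  have hint_a : IntervalIntegrable (fun s : ℝ => a ^ ((1 - s) / (1 + s))) volume 0 1 := by
    apply ContinuousOn.intervalIntegrable
    rwa [Set.uIcc_of_le (by norm_num : (0:ℝ) ≤ 1)]
  have hint_g : IntervalIntegrable g volume 0 1 := by
    apply ContinuousOn.intervalIntegrable
    rwa [Set.uIcc_of_le (by norm_num : (0:ℝ) ≤ 1)]
  -- derivative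
  have hderiv : ∀ s ∈ Set.uIcc (0:ℝ) 1, HasDerivAt F (g s) s := by
    intro s hs
    rw [Set.uIcc_of_le (by norm_num : (0:ℝ) ≤ 1)] at hs
    rcases hs with ⟨h0, h1⟩
    have hs1 : (0:ℝ) < 1 + s := by linarith
    have hu : HasDerivAt (fun s : ℝ => (1 - s) / (1 + s))
        (((-1) * (1 + s) - (1 - s) * 1) / (1 + s) ^ 2) s := by
      exact ((hasDerivAt_id s).const_sub 1).div ((hasDerivAt_id s).const_add 1) hs1.ne'
    have h2 : HasDerivAt (fun s : ℝ => -L * ((1 - s) / (1 + s)))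
        (-L * (((-1) * (1 + s) - (1 - s) * 1) / (1 + s) ^ 2)) s := hu.const_mul _
    have h3 := (h2.exp).const_mul (2 / L)
    refine h3.congr_deriv ?_
    rw [hg]
    simp only
    field_simp
    ring
  have hcalc : (∫ s in (0:ℝ)..1, g s) = F 1 - F 0 :=
    intervalIntegral.integral_eq_sub_of_hasDerivAt hderiv hint_g
  have hF1 : F 1 = 2 / L := by
    rw [hF]; norm_num
  have hF0 : F 0 = 2 / L * Real.exp (-L) := by
    rw [hF]; norm_num
  calc (∫ s in (0:ℝ)..1, a ^ ((1 - s) / (1 + s)))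
      ≤ ∫ s in (0:ℝ)..1, g s := by
        apply intervalIntegral.integral_mono_on (by norm_num) hint_a hint_g hpoint
    _ = F 1 - F 0 := hcalc
    _ ≤ 2 / L := by
        rw [hF1, hF0]
        have : 0 ≤ 2 / L * Real.exp (-L) :=
          mul_nonneg (by positivity) (Real.exp_nonneg _)
        linarith
end
end

section
/- For every integer k ≥ 0, ∑_{j=1}^∞ e^{-2^{2(k-j)}/2} · 2^{-j} ≤ √(2π) · 2^{-k}. -/
/-!
Write `x = 4^(k-j)`, so the `j`-th term is `e^{-x/2} 2^{-j}`. For `j > k` bound `e^{-x/2} ≤ 1`; these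
terms add up to `2^{-k}`. For `j ≤ k` use `x e^{-x/2} ≤ 2/e` (the tangent line `e^y ≥ e y` at `y = 1`),
which turns the term into `(2/e) 2^{j-2k}`; these add up to at most `(4/e) 2^{-k}`. Finally
`1 + 4/e ≈ 2.47 < 2.50 ≈ √(2π)`.
-/

open Finset Real

namespace Real

theorem exp_neg_half_le_div {x : ℝ} (hx : 0 < x) : exp (-x / 2) ≤ 2 * exp (-1) / x := by
  have tangent : x / 2 ≤ exp (-1) * exp (x / 2) := by
    rw [← exp_add]
    linarith [add_one_le_exp (-1 + x / 2)]
  have cancel : exp (-x / 2) * exp (x / 2) = 1 := by rw [← exp_add]; ring_nf; exact exp_zero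
  rw [le_div_iff₀ hx]
  calc exp (-x / 2) * x = 2 * exp (-x / 2) * (x / 2) := by ring
    _ ≤ 2 * exp (-x / 2) * (exp (-1) * exp (x / 2)) := by gcongr
    _ = 2 * exp (-1) := by linear_combination 2 * exp (-1) * cancel

theorem one_add_four_mul_exp_neg_one_le_sqrt_two_mul_pi : 1 + 4 * exp (-1) ≤ √(2 * π) := by
  rw [le_sqrt (by positivity) (by positivity)]
  nlinarith [exp_neg_one_lt_d9, exp_pos (-1), pi_gt_d2]

end Real

theorem exp_neg_two_zpow_mul_le_zpow (n m : ℤ) :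
    exp (-((2 : ℝ) ^ (2 * n)) / 2) * 2 ^ m ≤ 2 ^ m :=
  mul_le_of_le_one_left (by positivity) <| exp_le_one_iff.2 <| by
    have : (0 : ℝ) ≤ 2 ^ (2 * n) := by positivity
    linarith

theorem exp_neg_two_zpow_mul_le (n m : ℤ) :
    exp (-((2 : ℝ) ^ (2 * n)) / 2) * 2 ^ m ≤ 2 * exp (-1) * 2 ^ (m - 2 * n) := by
  rw [zpow_sub₀ two_ne_zero, mul_div, ← div_mul_eq_mul_div]
  exact mul_le_mul_of_nonneg_right (exp_neg_half_le_div (by positivity)) (by positivity)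

theorem sum_range_two_zpow_le (k : ℕ) :
    ∑ j ∈ range k, (2 : ℝ) ^ ((j : ℤ) + 1 - 2 * k) ≤ 2 * 2 ^ (-(k : ℤ)) := by
  have split (j : ℕ) : (2 : ℝ) ^ ((j : ℤ) + 1 - 2 * k) = 2 ^ (1 - 2 * (k : ℤ)) * 2 ^ j := by
    rw [← zpow_natCast, ← zpow_add₀ two_ne_zero]; ring_nf
  have geom : ∑ j ∈ range k, (2 : ℝ) ^ j = 2 ^ k - 1 := by
    have h := geom_sum_mul (2 : ℝ) k
    norm_num at h
    exact h
  calc ∑ j ∈ range k, (2 : ℝ) ^ ((j : ℤ) + 1 - 2 * k)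
      = 2 ^ (1 - 2 * (k : ℤ)) * (2 ^ k - 1) := by simp_rw [split, ← mul_sum, geom]
    _ ≤ 2 ^ (1 - 2 * (k : ℤ)) * 2 ^ k := by gcongr; linarith
    _ = 2 * 2 ^ (-(k : ℤ)) := by
      rw [← zpow_natCast, ← zpow_add₀ two_ne_zero, ← zpow_one_add₀ two_ne_zero]; ring_nf

theorem hasSum_two_zpow_neg_add_succ (k : ℕ) :
    HasSum (fun i : ℕ => (2 : ℝ) ^ (-(((i + k : ℕ) : ℤ) + 1))) (2 ^ (-(k : ℤ))) := by
  convert hasSum_geometric_two' ((2 : ℝ) ^ (-(k : ℤ))) using 1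
  ext i
  rw [div_div, ← zpow_natCast, ← zpow_one_add₀ two_ne_zero, div_eq_mul_inv, ← zpow_neg,
    ← zpow_add₀ two_ne_zero]
  push_cast; ring_nf

/-- For every integer `k ≥ 0`, `∑_{j=1}^∞ e^{-2^{2(k-j)}/2} 2^{-j} ≤ √(2π) 2^{-k}`. -/
theorem dyadic_sum_bound (k : ℕ) :
    (∑' j : ℕ, Real.exp (-((2 : ℝ) ^ (2 * ((k : ℤ) - ((j : ℤ) + 1)))) / 2) *
        (2 : ℝ) ^ (-((j : ℤ) + 1)))
      ≤ Real.sqrt (2 * Real.pi) * (2 : ℝ) ^ (-(k : ℤ)) := by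
  set f : ℕ → ℝ := fun j =>
    exp (-((2 : ℝ) ^ (2 * ((k : ℤ) - ((j : ℤ) + 1)))) / 2) * 2 ^ (-((j : ℤ) + 1))
  have tail := hasSum_two_zpow_neg_add_succ k
  have tail_le (i : ℕ) : f (i + k) ≤ 2 ^ (-(((i + k : ℕ) : ℤ) + 1)) :=
    exp_neg_two_zpow_mul_le_zpow _ _
  have tail_summable : Summable fun i => f (i + k) :=
    tail.summable.of_nonneg_of_le (fun _ => by positivity) tail_le
  have head_le : ∑ j ∈ range k, f j ≤ 2 * exp (-1) * (2 * 2 ^ (-(k : ℤ))) :=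
    calc ∑ j ∈ range k, f j ≤ ∑ j ∈ range k, 2 * exp (-1) * (2 : ℝ) ^ ((j : ℤ) + 1 - 2 * k) :=
          sum_le_sum fun j _ => (exp_neg_two_zpow_mul_le _ _).trans_eq (by ring_nf)
      _ ≤ 2 * exp (-1) * (2 * 2 ^ (-(k : ℤ))) := by
          rw [← mul_sum]; gcongr; exact sum_range_two_zpow_le k
  calc ∑' j, f j = ∑ j ∈ range k, f j + ∑' i, f (i + k) :=
        (((summable_nat_add_iff k).1 tail_summable).sum_add_tsum_nat_add k).symm
    _ ≤ 2 * exp (-1) * (2 * 2 ^ (-(k : ℤ))) + 2 ^ (-(k : ℤ)) :=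
        add_le_add head_le (hasSum_le tail_le tail_summable.hasSum tail)
    _ = (1 + 4 * exp (-1)) * 2 ^ (-(k : ℤ)) := by ring
    _ ≤ √(2 * π) * 2 ^ (-(k : ℤ)) := by
        gcongr; exact one_add_four_mul_exp_neg_one_le_sqrt_two_mul_pi
end
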